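/- arXiv:2510.25030 — 8 statements merged into one kernel-verified Lean document; each statement's English description precedes it below -/
import Mathlib

section
/- Let (p_{ij}) be an n×n Lorentzian matrix. Then for any indices i, j, k in {1,…,n}, the triangular inequality p_{ij}·p_{kk} ≤ 2·p_{ik}·p_{jk} holds. Moreover, the constant 2 is optimal: the supremum of (p_{12}·p_{33})/(p_{13}·p_{23}) over all 3×3 Lorentzian matrices with positive entries equals 2. -/
/-- A Lorentzian matrix: real symmetric with nonnegative entries and at most one
positive eigenvalue (counted with multiplicity). -/
def IsLorentzian {n : ℕ} (M : Matrix (Fin n) (Fin n) ℝ) : Prop :=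
  M.IsSymm ∧ (∀ i j, 0 ≤ M i j) ∧
    ∀ (hM : M.IsHermitian),
      (Finset.univ.filter fun i => 0 < hM.eigenvalues i).card ≤ 1

section Aux
open Matrix
variable {n : ℕ}

lemma star_mulVec_dot (U : Matrix (Fin n) (Fin n) ℝ) (x y : Fin n → ℝ) :
    x ⬝ᵥ (U *ᵥ y) = (star U *ᵥ x) ⬝ᵥ y := by
  rw [dotProduct_mulVec]
  congr 1
  ext i
  simp [Matrix.vecMul, Matrix.mulVec, dotProduct, Matrix.star_apply, mul_comm]

lemma sumform (A : Matrix (Fin n) (Fin n) ℝ) (hA : A.IsHermitian) (x z : Fin n → ℝ) :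
    x ⬝ᵥ A *ᵥ z = ∑ i, hA.eigenvalues i *
      (((star (hA.eigenvectorUnitary : Matrix (Fin n) (Fin n) ℝ)) *ᵥ x) i *
       ((star (hA.eigenvectorUnitary : Matrix (Fin n) (Fin n) ℝ)) *ᵥ z) i) := by
  conv_lhs => rw [hA.spectral_theorem, Unitary.conjStarAlgAut_apply]
  rw [← mulVec_mulVec, ← mulVec_mulVec, star_mulVec_dot]
  simp only [dotProduct, Matrix.mulVec_diagonal, RCLike.ofReal_real_eq_id,
    Function.comp_apply, id_eq]
  exact Finset.sum_congr rfl fun i _ => by ring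

theorem lcs (m a b p q r : ℝ) (h2 : 0 < m*(a*a) - p) (h3 : 0 < m*(b*b) - q)
    (hr : r^2 ≤ p*q) (hp : 0 ≤ p) (hq : 0 ≤ q) :
    (m*(a*a)-p)*(m*(b*b)-q) ≤ (m*(a*b)-r)^2 := by
  rcases eq_or_lt_of_le hq with h|h
  · have hr0 : r = 0 := by nlinarith [sq_nonneg r]
    have hY0 : (0:ℝ) ≤ m*(b*b) := by nlinarith
    subst hr0
    nlinarith [mul_nonneg hp hY0]
  · have hY : 0 < m*(b*b) := by linarith
    nlinarith [sq_nonneg (q*(m*(a*b)) - (m*(b*b))*r),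
      mul_nonneg (mul_nonneg hY.le (by linarith : (0:ℝ) ≤ m*(b*b) - q)) (by linarith : (0:ℝ) ≤ p*q - r^2),
      mul_pos h h3, mul_pos hY h]

theorem revCS (A : Matrix (Fin n) (Fin n) ℝ) (hA : A.IsHermitian)
    (hcount : (Finset.univ.filter fun i => 0 < hA.eigenvalues i).card ≤ 1)
    (v w : Fin n → ℝ) (hv : 0 < v ⬝ᵥ A *ᵥ v) :
    (v ⬝ᵥ A *ᵥ v) * (w ⬝ᵥ A *ᵥ w) ≤ (v ⬝ᵥ A *ᵥ w)^2 := by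
  classical
  set μ := hA.eigenvalues with hμ
  set g : (Fin n → ℝ) → Fin n → ℝ :=
    fun x => (star (hA.eigenvectorUnitary : Matrix (Fin n) (Fin n) ℝ)) *ᵥ x with hg
  by_cases hex : ∃ i₀, 0 < μ i₀
  · obtain ⟨i₀, hi₀⟩ := hex
    have hneg : ∀ i, i ≠ i₀ → μ i ≤ 0 := by
      intro i hi
      by_contra hpos
      push_neg at hpos
      have : 1 < (Finset.univ.filter fun i => 0 < μ i).card :=
        Finset.one_lt_card.mpr ⟨i, by simp [hpos], i₀, by simp [hi₀], hi⟩
      omega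
    set s := Finset.univ.erase i₀ with hs
    set a := g v i₀ with ha
    set b := g w i₀ with hb
    set p := ∑ i ∈ s, (-μ i) * (g v i)^2 with hp
    set q := ∑ i ∈ s, (-μ i) * (g w i)^2 with hq
    set r := ∑ i ∈ s, (-μ i) * (g v i * g w i) with hr
    have key : ∀ x z : Fin n → ℝ, x ⬝ᵥ A *ᵥ z =
        μ i₀ * (g x i₀ * g z i₀) - ∑ i ∈ s, (-μ i) * (g x i * g z i) := by
      intro x z
      rw [sumform A hA x z, ← Finset.add_sum_erase _ _ (Finset.mem_univ i₀)]
      rw [← hs, sub_eq_add_neg, ← Finset.sum_neg_distrib]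
      congr 1
      exact Finset.sum_congr rfl fun i _ => by ring
    have hQv : v ⬝ᵥ A *ᵥ v = μ i₀ * (a*a) - p := by
      rw [key v v, hp]; congr 1; exact Finset.sum_congr rfl fun i _ => by ring
    have hQw : w ⬝ᵥ A *ᵥ w = μ i₀ * (b*b) - q := by
      rw [key w w, hq]; congr 1; exact Finset.sum_congr rfl fun i _ => by ring
    have hB : v ⬝ᵥ A *ᵥ w = μ i₀ * (a*b) - r := by rw [key v w, hr]
    have hμnn : ∀ i ∈ s, 0 ≤ -μ i := by
      intro i hi
      have := hneg i (Finset.ne_of_mem_erase hi)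
      linarith
    have hpnn : 0 ≤ p := Finset.sum_nonneg fun i hi =>
      mul_nonneg (hμnn i hi) (sq_nonneg _)
    have hqnn : 0 ≤ q := Finset.sum_nonneg fun i hi =>
      mul_nonneg (hμnn i hi) (sq_nonneg _)
    have hCS : r^2 ≤ p*q := by
      have h1 : r = ∑ i ∈ s, (Real.sqrt (-μ i) * g v i) * (Real.sqrt (-μ i) * g w i) := by
        refine Finset.sum_congr rfl fun i hi => ?_
        rw [show (Real.sqrt (-μ i) * g v i) * (Real.sqrt (-μ i) * g w i)
            = (Real.sqrt (-μ i) * Real.sqrt (-μ i)) * (g v i * g w i) by ring,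
          Real.mul_self_sqrt (hμnn i hi)]
      have h2 : p = ∑ i ∈ s, (Real.sqrt (-μ i) * g v i)^2 := by
        refine Finset.sum_congr rfl fun i hi => ?_
        rw [mul_pow, Real.sq_sqrt (hμnn i hi)]
      have h3 : q = ∑ i ∈ s, (Real.sqrt (-μ i) * g w i)^2 := by
        refine Finset.sum_congr rfl fun i hi => ?_
        rw [mul_pow, Real.sq_sqrt (hμnn i hi)]
      rw [h1, h2, h3]
      exact Finset.sum_mul_sq_le_sq_mul_sq s _ _
    rw [hQv, hQw, hB]
    rw [hQv] at hv
    rcases le_or_gt (μ i₀ * (b*b) - q) 0 with h|h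
    · exact le_trans (mul_nonpos_of_nonneg_of_nonpos hv.le h) (sq_nonneg _)
    · exact lcs (μ i₀) a b p q r hv h hCS hpnn hqnn
  · push_neg at hex
    exfalso
    have : v ⬝ᵥ A *ᵥ v ≤ 0 := by
      rw [sumform A hA v v]
      refine Finset.sum_nonpos fun i _ => ?_
      have h1 : μ i ≤ 0 := hex i
      have h2 : 0 ≤ (g v i) * (g v i) := mul_self_nonneg _
      exact mul_nonpos_of_nonpos_of_nonneg h1 h2
    linarith

lemma bi (B : Fin n → EuclideanSpace ℝ (Fin n)) (hB : Orthonormal ℝ B) (i j : Fin n) :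
    (⇑(B i) : Fin n → ℝ) ⬝ᵥ ⇑(B j) = if i = j then 1 else 0 := by
  rw [← orthonormal_iff_ite.mp hB i j]
  simp [dotProduct, PiLp.inner_apply, RCLike.inner_apply, mul_comm]

theorem countLe (A : Matrix (Fin n) (Fin n) ℝ) (hA : A.IsHermitian) (u : Fin n → ℝ)
    (h : ∀ x : Fin n → ℝ, u ⬝ᵥ x = 0 → x ⬝ᵥ A *ᵥ x ≤ 0) :
    (Finset.univ.filter fun i => 0 < hA.eigenvalues i).card ≤ 1 := by
  classical
  by_contra hc
  push_neg at hc
  obtain ⟨i, hi, j, hj, hij⟩ := Finset.one_lt_card.mp hc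
  simp only [Finset.mem_filter] at hi hj
  set μ := hA.eigenvalues with hμ
  set B := hA.eigenvectorBasis with hB
  have horth := hA.eigenvectorBasis.orthonormal
  have hbi : ∀ k l : Fin n, (⇑(B k) : Fin n → ℝ) ⬝ᵥ ⇑(B l) = if k = l then 1 else 0 :=
    bi B horth
  have hAe : ∀ k : Fin n, A *ᵥ ⇑(B k) = μ k • ⇑(B k) := fun k =>
    hA.mulVec_eigenvectorBasis k
  -- quadratic form on α • B i + β • B j
  have hQ : ∀ α β : ℝ,
      (α • ⇑(B i) + β • ⇑(B j)) ⬝ᵥ A *ᵥ (α • ⇑(B i) + β • ⇑(B j))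
        = μ i * α^2 + μ j * β^2 := by
    intro α β
    rw [Matrix.mulVec_add, Matrix.mulVec_smul, Matrix.mulVec_smul, hAe, hAe]
    simp only [add_dotProduct, dotProduct_add, smul_dotProduct,
      dotProduct_smul, hbi, smul_eq_mul]
    simp only [if_pos rfl, if_true, if_neg hij, if_neg (Ne.symm hij)]
    ring
  have hlin : ∀ α β : ℝ,
      u ⬝ᵥ (α • ⇑(B i) + β • ⇑(B j)) = α * (u ⬝ᵥ ⇑(B i)) + β * (u ⬝ᵥ ⇑(B j)) := by
    intro α β
    simp [dotProduct_add, dotProduct_smul]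
  set t1 := u ⬝ᵥ ⇑(B i) with ht1
  set t2 := u ⬝ᵥ ⇑(B j) with ht2
  by_cases ht : t1 = 0 ∧ t2 = 0
  · have h0 := h ((1:ℝ) • ⇑(B i) + (0:ℝ) • ⇑(B j)) (by rw [hlin]; rw [ht.1]; ring)
    rw [hQ] at h0
    nlinarith [hi.2, hj.2]
  · have h0 := h (t2 • ⇑(B i) + (-t1) • ⇑(B j)) (by rw [hlin]; ring)
    rw [hQ] at h0
    rcases not_and_or.mp ht with h'|h'
    · have : 0 < μ j * (-t1)^2 := mul_pos hj.2 (by rw [neg_sq]; positivity)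
      nlinarith [mul_nonneg hi.2.le (sq_nonneg t2)]
    · have : 0 < μ i * t2^2 := mul_pos hi.2 (by positivity)
      nlinarith [mul_nonneg hj.2.le (sq_nonneg (-t1))]

lemma dp_single_single (M : Matrix (Fin n) (Fin n) ℝ) (i j : Fin n) (s t : ℝ) :
    (Pi.single i s) ⬝ᵥ M *ᵥ (Pi.single j t) = s * M i j * t := by
  simp [Matrix.mulVec_single, dotProduct, Pi.single_apply, Finset.sum_ite_eq']
  ring

theorem triIneq (M : Matrix (Fin n) (Fin n) ℝ) (hL : IsLorentzian M) (i j k : Fin n) :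
    M i j * M k k ≤ 2 * (M i k * M j k) := by
  classical
  obtain ⟨hsym, hnn, hcnt⟩ := hL
  have hHerm : M.IsHermitian := by
    show Mᴴ = M
    rw [Matrix.conjTranspose_eq_transpose_of_trivial]
    exact hsym
  have hc := hcnt hHerm
  have hefnn : 0 ≤ M i k * M j k := mul_nonneg (hnn i k) (hnn j k)
  rcases (hnn k k).eq_or_lt with hc0|hcpos
  · rw [← hc0, mul_zero]
    linarith
  · -- key inequality
    have key : ∀ t : ℝ, 0 < t → 2*t*(M i j * M k k) ≤ (M i k + t * M j k)^2 := by
      intro t ht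
      set v : Fin n → ℝ := Pi.single k 1 with hv
      set w : Fin n → ℝ := Pi.single i 1 + Pi.single j t with hw
      have hQv : v ⬝ᵥ M *ᵥ v = M k k := by
        rw [hv, dp_single_single]; ring
      have hB : v ⬝ᵥ M *ᵥ w = M i k + t * M j k := by
        rw [hv, hw, Matrix.mulVec_add, dotProduct_add,
          dp_single_single, dp_single_single, hsym.apply k i, hsym.apply k j]
        ring
      have hQw : w ⬝ᵥ M *ᵥ w = M i i + t * M i j + t * M j i + t^2 * M j j := by
        rw [hw, Matrix.mulVec_add, dotProduct_add, add_dotProduct,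
          add_dotProduct, dp_single_single, dp_single_single,
          dp_single_single, dp_single_single]
        ring
      have hCS := revCS M hHerm hc v w (by rw [hQv]; exact hcpos)
      rw [hQv, hB, hQw] at hCS
      have h1 : 0 ≤ M k k * M i i := mul_nonneg (hnn k k) (hnn i i)
      have h2 : 0 ≤ (t^2) * (M k k * M j j) :=
        mul_nonneg (sq_nonneg t) (mul_nonneg (hnn k k) (hnn j j))
      have hji : M j i = M i j := hsym.apply i j
      rw [hji] at hCS
      nlinarith [hCS]
    rcases (hnn i k).eq_or_lt with he|he
    · -- M i k = 0
      by_contra hcon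
      push_neg at hcon
      have hd : 0 < M i j * M k k := by linarith
      set t : ℝ := 2 * (M i j * M k k) / ((M j k)^2 + 1) with htdef
      have htpos : 0 < t := by positivity
      have hkey := key t htpos
      rw [← he] at hkey
      have h2 : t * (2 * (M i j * M k k)) ≤ t * (t * (M j k)^2) := by nlinarith [hkey]
      have h3 : 2 * (M i j * M k k) ≤ t * (M j k)^2 := (mul_le_mul_iff_right₀ htpos).mp h2
      have h4 : t * ((M j k)^2 + 1) = 2 * (M i j * M k k) := by
        rw [htdef]; field_simp
      nlinarith [h3, h4, htpos]
    · rcases (hnn j k).eq_or_lt with hf|hf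
      · -- M j k = 0
        by_contra hcon
        push_neg at hcon
        have hd : 0 < M i j * M k k := by nlinarith
        set t : ℝ := (M i k)^2 / (M i j * M k k) with htdef
        have htpos : 0 < t := by positivity
        have hkey := key t htpos
        rw [← hf] at hkey
        have h4 : t * (M i j * M k k) = (M i k)^2 := by rw [htdef]; exact div_mul_cancel₀ _ hd.ne'
        nlinarith [hkey, h4, mul_pos htpos hd]
      · -- both positive
        have hkey := key (M i k / M j k) (by positivity)
        have hfk : (M j k) ≠ 0 := ne_of_gt hf
        rw [div_mul_cancel₀ _ hfk] at hkey
        have h6 : 2 * (M i k / M j k) * (M i j * M k k)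
            = 2 * M i k * (M i j * M k k) / M j k := by ring
        rw [h6, div_le_iff₀ hf] at hkey
        nlinarith [hkey, he]

theorem part3 (c : ℝ) (hc : c < 2) : ∃ M : Matrix (Fin 3) (Fin 3) ℝ,
    IsLorentzian M ∧ (∀ i j, 0 < M i j) ∧
    c < (M 0 1 * M 2 2) / (M 0 2 * M 1 2) := by
  set ε : ℝ := min ((2 - c)/4) (1/2) with hε
  have hε0 : 0 < ε := by
    apply lt_min <;> linarith
  have hε2 : ε ≤ 1/2 := min_le_right _ _
  have hεc : ε ≤ (2 - c)/4 := min_le_left _ _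
  set s : ℝ := 2 - 2*ε with hs
  have hs1 : 1 ≤ s := by rw [hs]; linarith
  refine ⟨!![ε, 1, 1; 1, ε, 1; 1, 1, s], ⟨?_, ?_, ?_⟩, ?_, ?_⟩
  · -- IsSymm
    ext i j
    fin_cases i <;> fin_cases j <;>
      simp [Matrix.transpose_apply, Matrix.vecHead, Matrix.vecTail]
  · -- nonneg
    intro i j
    fin_cases i <;> fin_cases j <;>
      simp [Matrix.vecHead, Matrix.vecTail] <;> linarith
  · -- eigenvalue count
    intro hM
    apply countLe _ hM ![1, 1, 2]
    intro x hx
    simp [dotProduct, Matrix.mulVec, Fin.sum_univ_three,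
      Matrix.vecHead, Matrix.vecTail] at hx ⊢
    have hx' : x 0 + x 1 = -2 * x 2 := by linarith
    have h3 : (x 0 + x 1)^2 = 4 * x 2^2 := by rw [hx']; ring
    have hε3 : ε * (x 0 + x 1)^2 = ε * (4 * x 2^2) := by rw [h3]
    have h4 : x 2 * (x 0 + x 1) = -2 * x 2^2 := by rw [hx']; ring
    nlinarith [h3, hε3, h4, mul_nonneg (by linarith : (0:ℝ) ≤ 1 - ε) (sq_nonneg (x 0 - x 1))]
  · -- positive entries
    intro i j
    fin_cases i <;> fin_cases j <;>
      simp [Matrix.vecHead, Matrix.vecTail] <;> linarith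
  · -- ratio
    have : (!![ε, 1, 1; 1, ε, 1; 1, 1, s] : Matrix (Fin 3) (Fin 3) ℝ) 0 1 = 1 := by simp
    have h22 : (!![ε, 1, 1; 1, ε, 1; 1, 1, s] : Matrix (Fin 3) (Fin 3) ℝ) 2 2 = s := by simp
    have h02 : (!![ε, 1, 1; 1, ε, 1; 1, 1, s] : Matrix (Fin 3) (Fin 3) ℝ) 0 2 = 1 := by simp
    have h12 : (!![ε, 1, 1; 1, ε, 1; 1, 1, s] : Matrix (Fin 3) (Fin 3) ℝ) 1 2 = 1 := by simp
    rw [this, h22, h02, h12]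
    norm_num
    linarith

end Aux

theorem triangular_inequality_and_optimality :
    (∀ (n : ℕ) (M : Matrix (Fin n) (Fin n) ℝ), IsLorentzian M →
      ∀ i j k : Fin n, M i j * M k k ≤ 2 * (M i k * M j k)) ∧
    (∀ M : Matrix (Fin 3) (Fin 3) ℝ, IsLorentzian M → (∀ i j, 0 < M i j) →
      (M 0 1 * M 2 2) / (M 0 2 * M 1 2) ≤ 2) ∧
    (∀ c : ℝ, c < 2 → ∃ M : Matrix (Fin 3) (Fin 3) ℝ,
      IsLorentzian M ∧ (∀ i j, 0 < M i j) ∧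
      c < (M 0 1 * M 2 2) / (M 0 2 * M 1 2)) := by
  refine ⟨fun n M hL i j k => triIneq M hL i j k, fun M hL hpos => ?_, fun c hc => part3 c hc⟩
  have h := triIneq M hL 0 1 2
  have hden : 0 < M 0 2 * M 1 2 := mul_pos (hpos 0 2) (hpos 1 2)
  rw [div_le_iff₀ hden]
  linarith
end

section
/- Let n be a positive integer and let h = (h_1,…,h_n) be a vector of integers with h_1 + ⋯ + h_n = 1. Then the vector (h_i·h_j)_{1≤i<j≤n} is a reduced bounded ratio on positive Lorentzian matrices: there exists a constant c > 0 such that ∏_{1≤i<j≤n} p_{ij}^{h_i h_j} ≤ c for every normalized Lorentzian matrix (p_{ij}) with all entries positive. -/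
/-- The finset of ordered pairs (i, j) with i < j, indexing the off-diagonal
entries of a symmetric matrix. -/
def offDiagPairs (n : ℕ) : Finset (Fin n × Fin n) :=
  Finset.univ.filter fun q => q.1 < q.2

/-- The cut vector of a subset S of {1, ..., n}. -/
def cutVec {n : ℕ} (S : Finset (Fin n)) : Fin n → Fin n → ℝ :=
  fun i j => if (i ∈ S) ↔ (j ∈ S) then 0 else 1

open Matrix Finset

lemma quad_eigen_form (n : ℕ) (M : Matrix (Fin n) (Fin n) ℝ) (hM : M.IsHermitian) (z : Fin n → ℝ) :
    z ⬝ᵥ M *ᵥ z = ∑ i, hM.eigenvalues i * ((star (Matrix.IsHermitian.eigenvectorUnitary hM : Matrix (Fin n) (Fin n) ℝ) *ᵥ z) i)^2 := by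
  set U : Matrix (Fin n) (Fin n) ℝ := (Matrix.IsHermitian.eigenvectorUnitary hM : Matrix (Fin n) (Fin n) ℝ) with hU
  have hsu : star U = Uᵀ := by
    rw [Matrix.star_eq_conjTranspose, Matrix.conjTranspose]
    ext i j; simp
  conv_lhs => rw [hM.spectral_theorem, Unitary.conjStarAlgAut_apply]
  rw [← hU]
  rw [← Matrix.mulVec_mulVec, ← Matrix.mulVec_mulVec, Matrix.dotProduct_mulVec]
  have h2 : z ᵥ* U = star U *ᵥ z := by rw [hsu, Matrix.mulVec_transpose]
  rw [h2]
  simp [dotProduct, Matrix.mulVec_diagonal, pow_two]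
  exact Finset.sum_congr rfl fun i _ => by ring

lemma exists_dominating (n : ℕ) (M : Matrix (Fin n) (Fin n) ℝ) (hsym : M.IsSymm)
    (hev : ∀ (hM : M.IsHermitian), (Finset.univ.filter fun i => 0 < hM.eigenvalues i).card ≤ 1) :
    ∃ v : Fin n → ℝ, ∀ z : Fin n → ℝ, z ⬝ᵥ M *ᵥ z ≤ (v ⬝ᵥ z)^2 := by
  have hM : M.IsHermitian := by
    rw [Matrix.IsHermitian, Matrix.conjTranspose]
    rw [Matrix.IsSymm] at hsym
    conv_rhs => rw [← hsym]
    ext i j; simp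
  have hcard := hev hM
  set U : Matrix (Fin n) (Fin n) ℝ := (Matrix.IsHermitian.eigenvectorUnitary hM : Matrix (Fin n) (Fin n) ℝ) with hU
  interval_cases hc : (Finset.univ.filter fun i => 0 < hM.eigenvalues i).card
  · refine ⟨0, fun z => ?_⟩
    rw [quad_eigen_form n M hM z]
    have hall : ∀ i, hM.eigenvalues i ≤ 0 := by
      intro i
      by_contra hpos
      push_neg at hpos
      have hmem : i ∈ (Finset.univ.filter fun i => 0 < hM.eigenvalues i) := by simp [hpos]
      rw [Finset.card_eq_zero] at hc
      simp [hc] at hmem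
    have hs : ∑ i, hM.eigenvalues i * ((star U *ᵥ z) i)^2 ≤ 0 := by
      apply Finset.sum_nonpos
      intro i _
      exact mul_nonpos_of_nonpos_of_nonneg (hall i) (sq_nonneg _)
    have h0 : (0:ℝ) ≤ ((0 : Fin n → ℝ) ⬝ᵥ z)^2 := sq_nonneg _
    exact hs.trans h0
  · rw [Finset.card_eq_one] at hc
    obtain ⟨i0, hi0⟩ := hc
    have hpos : 0 < hM.eigenvalues i0 := by
      have : i0 ∈ (Finset.univ.filter fun i => 0 < hM.eigenvalues i) := by rw [hi0]; simp
      simpa using this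
    refine ⟨Real.sqrt (hM.eigenvalues i0) • (fun j => U j i0), fun z => ?_⟩
    rw [quad_eigen_form n M hM z]
    have hrest : ∀ i, i ≠ i0 → hM.eigenvalues i ≤ 0 := by
      intro i hne
      by_contra hposb
      push_neg at hposb
      have hmem : i ∈ (Finset.univ.filter fun j => 0 < hM.eigenvalues j) := by simp [hposb]
      rw [hi0, Finset.mem_singleton] at hmem
      exact hne hmem
    have hle : ∑ i, hM.eigenvalues i * ((star U *ᵥ z) i)^2 ≤ hM.eigenvalues i0 * ((star U *ᵥ z) i0)^2 := by
      rw [← Finset.add_sum_erase Finset.univ _ (Finset.mem_univ i0)]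
      have : ∑ i ∈ Finset.univ.erase i0, hM.eigenvalues i * ((star U *ᵥ z) i)^2 ≤ 0 := by
        apply Finset.sum_nonpos
        intro i hi
        exact mul_nonpos_of_nonpos_of_nonneg (hrest i (Finset.ne_of_mem_erase hi)) (sq_nonneg _)
      linarith
    refine hle.trans (le_of_eq ?_)
    have hdot : ((Real.sqrt (hM.eigenvalues i0) • (fun j => U j i0)) ⬝ᵥ z) = Real.sqrt (hM.eigenvalues i0) * ((star U *ᵥ z) i0) := by
      simp [dotProduct, Matrix.mulVec, Matrix.star_eq_conjTranspose, Matrix.conjTranspose_apply, Finset.mul_sum, mul_assoc]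
    rw [hdot, mul_pow, Real.sq_sqrt hpos.le]

section
variable {n : ℕ} (M : Matrix (Fin n) (Fin n) ℝ)

lemma bilin_symm (hsym : M.IsSymm) (x y : Fin n → ℝ) : x ⬝ᵥ M *ᵥ y = y ⬝ᵥ M *ᵥ x := by
  rw [Matrix.dotProduct_mulVec, ← Matrix.mulVec_transpose, hsym.eq, dotProduct_comm]

lemma revCS_s4 (hsym : M.IsSymm) (v : Fin n → ℝ) (hv : ∀ z : Fin n → ℝ, z ⬝ᵥ M *ᵥ z ≤ (v ⬝ᵥ z)^2)
    (x y : Fin n → ℝ) (hx : 0 < x ⬝ᵥ M *ᵥ x) :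
    (x ⬝ᵥ M *ᵥ x) * (y ⬝ᵥ M *ᵥ y) ≤ (x ⬝ᵥ M *ᵥ y)^2 := by
  set qx := x ⬝ᵥ M *ᵥ x
  set qy := y ⬝ᵥ M *ᵥ y with hqy
  set B := x ⬝ᵥ M *ᵥ y with hB
  rcases le_or_gt qy 0 with hy | hy
  · calc qx * qy ≤ 0 := mul_nonpos_of_nonneg_of_nonpos hx.le hy
    _ ≤ B^2 := sq_nonneg _
  · set a := v ⬝ᵥ x with ha
    set b := v ⬝ᵥ y with hb
    have ha2 : qx ≤ a^2 := hv x
    have hb2 : qy ≤ b^2 := hv y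
    have hz := hv ((b • x) - (a • y))
    have hzdot : v ⬝ᵥ ((b • x) - (a • y)) = 0 := by
      rw [dotProduct_sub, dotProduct_smul, dotProduct_smul, ← ha, ← hb]
      simp [mul_comm]
    rw [hzdot] at hz
    have hexp : ((b • x) - (a • y)) ⬝ᵥ M *ᵥ ((b • x) - (a • y))
        = b^2 * qx - 2*a*b*B + a^2 * qy := by
      have hyx : y ⬝ᵥ M *ᵥ x = B := by rw [hB]; exact (bilin_symm M hsym x y).symm
      simp only [Matrix.mulVec_sub, Matrix.mulVec_smul, dotProduct_sub,
        sub_dotProduct, smul_dotProduct, dotProduct_smul,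
        smul_eq_mul, hyx]
      simp only [qx, qy, B]
      ring
    rw [hexp] at hz
    norm_num at hz
    have hqxa : 0 < a^2 := lt_of_lt_of_le hx ha2
    have hqyb : 0 < b^2 := lt_of_lt_of_le hy hb2
    have hs : 0 < b^2*qx + a^2*qy := by nlinarith [mul_pos hqyb hx, mul_pos hqxa hy]
    have ht : b^2*qx + a^2*qy ≤ 2*a*b*B := by linarith
    have hsq : (b^2*qx + a^2*qy)^2 ≤ (2*a*b*B)^2 := by nlinarith
    have h4 : 4*(a*b)^2*(qx*qy) ≤ (b^2*qx+a^2*qy)^2 := by nlinarith [sq_nonneg (b^2*qx - a^2*qy)]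
    have hab : 0 < 4*(a*b)^2 := by nlinarith [mul_pos hqxa hqyb]
    have : 4*(a*b)^2*(qx*qy) ≤ 4*(a*b)^2*(B^2) := by nlinarith
    exact le_of_mul_le_mul_left this hab
end

section
variable {n : ℕ} (M : Matrix (Fin n) (Fin n) ℝ)

lemma dot_single (i j : Fin n) : (Pi.single i (1:ℝ)) ⬝ᵥ M *ᵥ (Pi.single j 1) = M i j := by
  simp [Matrix.mulVec_single, single_dotProduct]

lemma quad_expand (x1 x2 y1 y2 : ℝ) (i j k l : Fin n) :
    ((x1 • (Pi.single i 1 : Fin n → ℝ) + x2 • (Pi.single j 1 : Fin n → ℝ)) ⬝ᵥ M *ᵥ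
      (y1 • (Pi.single k 1 : Fin n → ℝ) + y2 • (Pi.single l 1 : Fin n → ℝ)))
    = x1*y1*M i k + x1*y2*M i l + x2*y1*M j k + x2*y2*M j l := by
  simp only [Matrix.mulVec_add, Matrix.mulVec_smul, dotProduct_add,
    add_dotProduct, dotProduct_smul, smul_dotProduct, smul_eq_mul,
    dot_single]
  ring


lemma four_point (hsym : M.IsSymm) (v : Fin n → ℝ)
    (hv : ∀ z : Fin n → ℝ, z ⬝ᵥ M *ᵥ z ≤ (v ⬝ᵥ z)^2)
    (hdiag : ∀ i, M i i = 1) (hpos : ∀ i j, 0 < M i j) (i j k l : Fin n) :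
    M i j * M k l ≤ (Real.sqrt (M i k * M j l) + Real.sqrt (M i l * M j k))^2 := by
  set sa := Real.sqrt (M i k) with hsa
  set sb := Real.sqrt (M i l) with hsb
  set sc := Real.sqrt (M j k) with hsc
  set sd := Real.sqrt (M j l) with hsd
  have hsa2 : sa^2 = M i k := Real.sq_sqrt (hpos i k).le
  have hsb2 : sb^2 = M i l := Real.sq_sqrt (hpos i l).le
  have hsc2 : sc^2 = M j k := Real.sq_sqrt (hpos j k).le
  have hsd2 : sd^2 = M j l := Real.sq_sqrt (hpos j l).le
  have hsa0 : 0 < sa := Real.sqrt_pos.2 (hpos i k)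
  have hsb0 : 0 < sb := Real.sqrt_pos.2 (hpos i l)
  have hsc0 : 0 < sc := Real.sqrt_pos.2 (hpos j k)
  have hsd0 : 0 < sd := Real.sqrt_pos.2 (hpos j l)
  set x : Fin n → ℝ := (sd*sc) • (Pi.single i 1 : Fin n → ℝ) + (sa*sb) • (Pi.single j 1 : Fin n → ℝ) with hx
  set y : Fin n → ℝ := (sd*sb) • (Pi.single k 1 : Fin n → ℝ) + (sa*sc) • (Pi.single l 1 : Fin n → ℝ) with hy
  have hqx : x ⬝ᵥ M *ᵥ x = (sd*sc)^2 + (sa*sb)^2 + 2*(sd*sc)*(sa*sb)*(M i j) := by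
    rw [hx, quad_expand]
    have hji : M j i = M i j := hsym.apply i j
    rw [hdiag i, hdiag j, hji]; ring
  have hqy : y ⬝ᵥ M *ᵥ y = (sd*sb)^2 + (sa*sc)^2 + 2*(sd*sb)*(sa*sc)*(M k l) := by
    rw [hy, quad_expand]
    have hlk : M l k = M k l := hsym.apply k l
    rw [hdiag k, hdiag l, hlk]; ring
  have hBf : x ⬝ᵥ M *ᵥ y = 2*sa*sb*sc*sd*(sa*sd + sb*sc) := by
    rw [hx, hy, quad_expand]
    rw [← hsa2, ← hsb2, ← hsc2, ← hsd2]; ring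
  have hqxpos : 0 < x ⬝ᵥ M *ᵥ x := by
    rw [hqx]
    have := mul_pos (mul_pos (mul_pos hsd0 hsc0) (mul_pos hsa0 hsb0)) (hpos i j)
    nlinarith [sq_nonneg (sd*sc), sq_nonneg (sa*sb)]
  have hcs := revCS_s4 M hsym v hv x y hqxpos
  have h1 : 2*(sd*sc)*(sa*sb)*(M i j) ≤ x ⬝ᵥ M *ᵥ x := by
    rw [hqx]; nlinarith [sq_nonneg (sd*sc - sa*sb)]
  have h2 : 2*(sd*sb)*(sa*sc)*(M k l) ≤ y ⬝ᵥ M *ᵥ y := by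
    rw [hqy]; nlinarith [sq_nonneg (sd*sb - sa*sc)]
  have hp1 : 0 < 2*(sd*sc)*(sa*sb)*(M i j) :=
    mul_pos (mul_pos (mul_pos two_pos (mul_pos hsd0 hsc0)) (mul_pos hsa0 hsb0)) (hpos i j)
  have hp2 : 0 < 2*(sd*sb)*(sa*sc)*(M k l) :=
    mul_pos (mul_pos (mul_pos two_pos (mul_pos hsd0 hsb0)) (mul_pos hsa0 hsc0)) (hpos k l)
  have hmul : (2*(sd*sc)*(sa*sb)*(M i j)) * (2*(sd*sb)*(sa*sc)*(M k l)) ≤ (x ⬝ᵥ M *ᵥ y)^2 :=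
    le_trans (mul_le_mul h1 h2 hp2.le hqxpos.le) hcs
  rw [hBf] at hmul
  have hS : Real.sqrt (M i k * M j l) = sa * sd := by
    rw [hsa, hsd, ← Real.sqrt_mul (hpos i k).le]
  have hT : Real.sqrt (M i l * M j k) = sb * sc := by
    rw [hsb, hsc, ← Real.sqrt_mul (hpos i l).le]
  rw [hS, hT]
  have hq : 0 < 4*(sa*sb*sc*sd)^2 := by positivity
  have e1 : (2*(sd*sc)*(sa*sb)*(M i j)) * (2*(sd*sb)*(sa*sc)*(M k l))
      = 4*(sa*sb*sc*sd)^2 * (M i j * M k l) := by ring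
  have e2 : (2*sa*sb*sc*sd*(sa*sd + sb*sc))^2 = 4*(sa*sb*sc*sd)^2 * (sa*sd + sb*sc)^2 := by ring
  rw [e1, e2] at hmul
  exact le_of_mul_le_mul_left hmul hq
end

section
variable {n : ℕ} (M : Matrix (Fin n) (Fin n) ℝ)

lemma four_point' (hpos : ∀ i j, 0 < M i j) (i j k l : Fin n)
    (h4 : M i j * M k l ≤ (Real.sqrt (M i k * M j l) + Real.sqrt (M i l * M j k))^2) :
    Real.log (M i j) + Real.log (M k l) ≤
      max (Real.log (M i k) + Real.log (M j l)) (Real.log (M i l) + Real.log (M j k))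
        + Real.log 4 := by
  set M1 := M i k * M j l with hM1
  set M2 := M i l * M j k with hM2
  have hM1p : 0 < M1 := mul_pos (hpos i k) (hpos j l)
  have hM2p : 0 < M2 := mul_pos (hpos i l) (hpos j k)
  have hmax : M i j * M k l ≤ 4 * max M1 M2 := by
    rcases le_total M1 M2 with hle | hle
    · have hs : Real.sqrt M1 + Real.sqrt M2 ≤ 2 * Real.sqrt M2 := by
        have := Real.sqrt_le_sqrt hle
        linarith
      have : (Real.sqrt M1 + Real.sqrt M2)^2 ≤ (2*Real.sqrt M2)^2 := by
        apply pow_le_pow_left₀ (by positivity) hs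
      have h2 : (2*Real.sqrt M2)^2 = 4 * M2 := by
        rw [mul_pow, Real.sq_sqrt hM2p.le]; ring
      rw [max_eq_right hle]
      linarith
    · have hs : Real.sqrt M1 + Real.sqrt M2 ≤ 2 * Real.sqrt M1 := by
        have := Real.sqrt_le_sqrt hle
        linarith
      have : (Real.sqrt M1 + Real.sqrt M2)^2 ≤ (2*Real.sqrt M1)^2 := by
        apply pow_le_pow_left₀ (by positivity) hs
      have h2 : (2*Real.sqrt M1)^2 = 4 * M1 := by
        rw [mul_pow, Real.sq_sqrt hM1p.le]; ring
      rw [max_eq_left hle]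
      linarith
  have hlog := Real.log_le_log (mul_pos (hpos i j) (hpos k l)) hmax
  rw [Real.log_mul (hpos i j).ne' (hpos k l).ne'] at hlog
  rw [Real.log_mul (by norm_num) (by positivity : (0:ℝ) < max M1 M2).ne'] at hlog
  have hmaxlog : Real.log (max M1 M2) = max (Real.log M1) (Real.log M2) := by
    rcases le_total M1 M2 with hle | hle
    · rw [max_eq_right hle, max_eq_right (Real.log_le_log hM1p hle)]
    · rw [max_eq_left hle, max_eq_left (Real.log_le_log hM2p hle)]
  rw [hmaxlog, hM1, hM2, Real.log_mul (hpos i k).ne' (hpos j l).ne',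
    Real.log_mul (hpos i l).ne' (hpos j k).ne'] at hlog
  linarith
end

lemma cross_term_bound (θ x y w : ℝ) (hθ : 0 ≤ θ) (hw0 : 0 ≤ w) (hwθ : w ≤ θ) :
    -(|x| * |y|) * θ ≤ x*y*w := by
  rcases le_or_gt 0 (x*y) with hxy | hxy
  · have h1 : 0 ≤ x*y*w := mul_nonneg hxy hw0
    have h2 : 0 ≤ (|x| * |y|) * θ := mul_nonneg (mul_nonneg (abs_nonneg x) (abs_nonneg y)) hθ
    linarith
  · have h1 : x*y*θ ≤ x*y*w := mul_le_mul_of_nonpos_left hwθ hxy.le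
    have h2 : |x| * |y| = -(x*y) := by
      rw [← abs_mul]
      exact abs_of_neg hxy
    rw [h2]
    linarith

lemma pow3_bound (p q : ℕ) (hp : 1 ≤ p) (hq : 1 ≤ q) :
    (3:ℝ)^p + 3^q + 2 ≤ 3^(p+q) := by
  have h1 : (3:ℝ)^1 ≤ 3^p := pow_le_pow_right₀ (by norm_num) hp
  have h2 : (3:ℝ)^1 ≤ 3^q := pow_le_pow_right₀ (by norm_num) hq
  rw [pow_add]
  nlinarith [h1, h2]

lemma double_sum_factor {n : ℕ} (A B : Finset (Fin n)) (f g : Fin n → ℝ) (t : ℝ) :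
    ∑ i ∈ A, ∑ j ∈ B, t * (f i * g j) = t * ((∑ i ∈ A, f i) * (∑ j ∈ B, g j)) := by
  rw [Finset.sum_mul_sum, Finset.mul_sum]
  exact Finset.sum_congr rfl fun i _ => by rw [Finset.mul_sum]

set_option maxHeartbeats 2000000 in
lemma comb_lemma (n : ℕ) (h : Fin n → ℤ) (δ : ℝ) (hδ : 0 ≤ δ) :
    ∀ (m : ℕ) (S : Finset (Fin n)) (u : Fin n → Fin n → ℝ),
    S.card ≤ m →
    (∀ i ∈ S, ∀ j ∈ S, u i j = u j i) →
    (∀ i ∈ S, ∀ j ∈ S, i ≠ j → 0 ≤ u i j) →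
    (∀ i ∈ S, -δ ≤ u i i) →
    (∀ i ∈ S, ∀ j ∈ S, u i j ≤ u i i + δ) →
    (∀ i ∈ S, ∀ j ∈ S, ∀ k ∈ S, min (u i k) (u k j) ≤ u i j + δ) →
    (∑ i ∈ S, (h i : ℝ) * u i i) - (∑ i ∈ S, ∑ j ∈ S, (h i : ℝ) * (h j : ℝ) * u i j)
      ≤ δ * (∑ i, (|h i| : ℝ))^2 * ((n+1) * 3 ^ S.card) := by
  intro m
  induction m with
  | zero =>
    intro S u hcard _ _ _ _ _
    have hS : S = ∅ := Finset.card_eq_zero.mp (Nat.le_zero.mp hcard)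
    subst hS
    simp only [Finset.sum_empty, sub_zero]
    positivity
  | succ m ih =>
    intro S u hcard hsym h0 hdlb hdub htri
    set L : ℝ := ∑ i, (|h i| : ℝ) with hL
    have hL0 : 0 ≤ L := Finset.sum_nonneg fun i _ => by positivity
    rcases Nat.lt_or_ge S.card (m+1) with hlt | hge
    · exact ih S u (Nat.lt_succ_iff.mp hlt) hsym h0 hdlb hdub htri
    have hcardS : S.card = m + 1 := le_antisymm hcard hge
    rcases Nat.lt_or_ge S.card 2 with hsmall | hbig
    · -- singleton case
      have h1 : S.card = 1 := by omega
      obtain ⟨i, rfl⟩ := Finset.card_eq_one.mp h1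
      simp only [Finset.sum_singleton]
      have hiS : i ∈ ({i} : Finset (Fin n)) := Finset.mem_singleton_self i
      have hdi := hdlb i hiS
      have hZ : (h i : ℝ) ≤ (h i : ℝ) * (h i : ℝ) := by
        have : h i ≤ h i * h i := by nlinarith [sq_nonneg (h i - 1), sq_nonneg (h i)]
        exact_mod_cast this
      have habs : (|h i| : ℝ) ≤ L := by
        rw [hL]
        exact Finset.single_le_sum (f := fun i => (|h i| : ℝ)) (fun j _ => by positivity)
          (Finset.mem_univ i)
      have hsq : (h i : ℝ) * (h i : ℝ) ≤ L^2 := by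
        have : (h i : ℝ) * (h i : ℝ) = (|h i| : ℝ) * (|h i| : ℝ) := by
          push_cast
          rw [← abs_mul, abs_mul_self]
        rw [this]
        have := mul_le_mul habs habs (by positivity) hL0
        nlinarith
      have habs2 : (|h i| : ℝ) ≤ (h i : ℝ)^2 := by
        have : |h i| ≤ h i * h i := by
          rcases eq_or_ne (h i) 0 with hz | hz
          · simp [hz]
          · have h1le : 1 ≤ |h i| := Int.one_le_abs hz
            have := le_mul_of_one_le_left (abs_nonneg (h i)) h1le
            rwa [abs_mul_abs_self] at this
        have : (|h i| : ℝ) ≤ ((h i * h i : ℤ) : ℝ) := by exact_mod_cast this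
        push_cast at this ⊢
        nlinarith [this]
      have e1 : (h i:ℝ) * u i i - (h i:ℝ) * (h i:ℝ) * u i i
          = ((h i:ℝ) - (h i:ℝ)^2) * u i i := by ring
      have e2 : ((h i:ℝ) - (h i:ℝ)^2) ≤ 0 := by nlinarith [hZ]
      have e3 : ((h i:ℝ) - (h i:ℝ)^2) * u i i ≤ ((h i:ℝ) - (h i:ℝ)^2) * (-δ) :=
        mul_le_mul_of_nonpos_left hdi e2
      have fB : (h i:ℝ)^2 - (h i:ℝ) ≤ 2*L^2 := by
        have hx : -(h i : ℝ) ≤ (|h i| : ℝ) := by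
          push_cast; exact neg_le_abs _
        nlinarith [hsq, habs2, hx]
      have hcards : ({i} : Finset (Fin n)).card = 1 := Finset.card_singleton i
      rw [e1, hcards]
      have fC : δ*(2*L^2) ≤ δ*L^2*((n+1)*3^(1:ℕ)) := by
        have hn0 : (0:ℝ) ≤ n := Nat.cast_nonneg n
        nlinarith [mul_nonneg hδ (mul_nonneg hL0 hL0)]
      have : ((h i:ℝ) - (h i:ℝ)^2) * (-δ) ≤ δ*(2*L^2) := by nlinarith [fB, hδ]
      calc ((h i:ℝ) - (h i:ℝ)^2) * u i i ≤ ((h i:ℝ) - (h i:ℝ)^2) * (-δ) := e3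
        _ ≤ δ*(2*L^2) := this
        _ ≤ δ*L^2*((n+1)*3^(1:ℕ)) := fC
    · -- main case: S.card ≥ 2
      obtain ⟨a, haS, b, hbS, hab⟩ := Finset.one_lt_card.mp hbig
      set offp := (S ×ˢ S).filter (fun q => q.1 ≠ q.2) with hoffp
      have hne : offp.Nonempty := ⟨(a, b), by simp [hoffp, Finset.mem_product, haS, hbS, hab]⟩
      set c := offp.inf' hne (fun q => u q.1 q.2) with hc
      obtain ⟨q0, hq0mem, hq0⟩ := Finset.exists_mem_eq_inf' hne (fun q => u q.1 q.2)
      set i0 := q0.1 with hi0def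
      set j0 := q0.2 with hj0def
      have hq0' : i0 ∈ S ∧ j0 ∈ S ∧ i0 ≠ j0 := by
        have := hq0mem
        rw [hoffp, Finset.mem_filter, Finset.mem_product] at this
        exact ⟨this.1.1, this.1.2, this.2⟩
      obtain ⟨hi0S, hj0S, hne0⟩ := hq0'
      have hcval : c = u i0 j0 := hq0
      have hcle : ∀ i ∈ S, ∀ j ∈ S, i ≠ j → c ≤ u i j := by
        intro i hi j hj hij
        have hmem : (i, j) ∈ offp := by
          rw [hoffp, Finset.mem_filter, Finset.mem_product]
          exact ⟨⟨hi, hj⟩, hij⟩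
        exact Finset.inf'_le (fun q => u q.1 q.2) hmem
      have hc0 : 0 ≤ c := hcval ▸ h0 i0 hi0S j0 hj0S hne0
      -- diag lower bound for u - c
      have hcdiag : ∀ i ∈ S, c ≤ u i i + δ := by
        intro i hi
        by_cases hia : i = a
        · subst hia
          exact le_trans (hcle i hi b hbS hab) (hdub i hi b hbS)
        · exact le_trans (hcle i hi a haS hia) (hdub i hi a haS)
      set θ := (n+1) * δ with hθdef
      have hθ0 : 0 ≤ θ := by positivity
      -- iterated neighborhoods
      set F : Finset (Fin n) → Finset (Fin n) :=
        fun T => S.filter (fun j => j ∈ T ∨ ∃ i ∈ T, c + θ < u i j) with hF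
      set Tf : ℕ → Finset (Fin n) := fun t => Nat.rec {i0} (fun _ T => F T) t with hTf
      have hTf0 : Tf 0 = {i0} := rfl
      have hTfs : ∀ t, Tf (t+1) = F (Tf t) := fun t => rfl
      have hTsubS : ∀ t, Tf t ⊆ S := by
        intro t
        induction t with
        | zero => rw [hTf0]; exact Finset.singleton_subset_iff.mpr hi0S
        | succ t _ => rw [hTfs]; exact Finset.filter_subset _ _
      have hTmono : ∀ t, Tf t ⊆ Tf (t+1) := by
        intro t j hj
        rw [hTfs, hF, Finset.mem_filter]
        exact ⟨hTsubS t hj, Or.inl hj⟩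
      have hstab : ∀ t, Tf (t+1) = Tf t ∨ t + 2 ≤ (Tf (t+1)).card := by
        intro t
        induction t with
        | zero =>
          by_cases he : Tf 1 = Tf 0
          · exact Or.inl he
          · right
            have hss : Tf 0 ⊂ Tf 1 := Finset.ssubset_iff_subset_ne.mpr ⟨hTmono 0, Ne.symm he⟩
            have := Finset.card_lt_card hss
            rw [hTf0] at this
            simp at this ⊢; omega
        | succ t iht =>
          rcases iht with he | hcardt
          · exact Or.inl (congrArg F he)
          · by_cases he : Tf (t+2) = Tf (t+1)
            · exact Or.inl he
            · right
              have hss : Tf (t+1) ⊂ Tf (t+2) := Finset.ssubset_iff_subset_ne.mpr ⟨hTmono (t+1), Ne.symm he⟩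
              have := Finset.card_lt_card hss
              have h12 : (Tf (t+1+1)).card = (Tf (t+2)).card := rfl
              omega
      set T := Tf n with hT
      have hTfix : Tf (n+1) = Tf n := by
        rcases hstab n with he | hc2
        · exact he
        · exfalso
          have : (Tf (n+1)).card ≤ n := le_trans (Finset.card_le_card (hTsubS (n+1)))
            (le_trans (Finset.card_le_card (Finset.subset_univ S)) (by simp))
          omega
      have hclosed : ∀ i ∈ T, ∀ j ∈ S, c + θ < u i j → j ∈ T := by
        intro i hi j hj hlt
        have : j ∈ F T := by
          rw [hF, Finset.mem_filter]
          exact ⟨hj, Or.inr ⟨i, hi, hlt⟩⟩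
        rw [hT, ← hTfix]
        rw [hTfs] at *
        exact this
      have hchain : ∀ t, ∀ j ∈ Tf t, j = i0 ∨ c + θ - t*δ < u i0 j := by
        intro t
        induction t with
        | zero =>
          intro j hj
          rw [hTf0, Finset.mem_singleton] at hj
          exact Or.inl hj
        | succ t iht =>
          intro j hj
          rw [hTfs, hF, Finset.mem_filter] at hj
          obtain ⟨hjS, hor⟩ := hj
          rcases hor with hjT | ⟨i, hiT, hulti⟩
          · rcases iht j hjT with rfl | hb
            · exact Or.inl rfl
            · right
              have : c + θ - (t+1:ℕ)*δ ≤ c + θ - t*δ := by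
                push_cast
                nlinarith [hδ]
              linarith
          · rcases iht i hiT with rfl | hbi
            · right
              have : c + θ - (t+1:ℕ)*δ ≤ c + θ := by
                push_cast
                nlinarith [hδ]
              linarith
            · right
              have hiS := hTsubS t hiT
              have htr := htri i0 hi0S j hjS i hiS
              have h1 : c + θ - t*δ < u i0 i := hbi
              have h2 : c + θ - t*δ < u i j := by
                have : (0:ℝ) ≤ t*δ := by positivity
                linarith
              have hmin : c + θ - t*δ < min (u i0 i) (u i j) := lt_min h1 h2
              have hfin : c + θ - t*δ < u i0 j + δ := lt_of_lt_of_le hmin htr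
              push_cast
              linarith
      have hi0T : i0 ∈ T := by
        rw [hT]
        have : ∀ t, i0 ∈ Tf t := by
          intro t
          induction t with
          | zero => rw [hTf0]; exact Finset.mem_singleton_self i0
          | succ t iht => exact hTmono t iht
        exact this n
      have hj0T : j0 ∉ T := by
        intro hmem
        rw [hT] at hmem
        rcases hchain n j0 hmem with he | hb
        · exact hne0 he.symm
        · rw [← hcval] at hb
          rw [hθdef] at hb
          push_cast at hb
          nlinarith [hδ, hb]
      -- assembly
      set Sc := S \ T with hScdef
      have hTS : T ⊆ S := hTsubS n
      have hScS : Sc ⊆ S := Finset.sdiff_subset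
      have hj0Sc : j0 ∈ Sc := Finset.mem_sdiff.mpr ⟨hj0S, hj0T⟩
      have hi0Sc : i0 ∉ Sc := fun hmem => (Finset.mem_sdiff.mp hmem).2 hi0T
      have hTcard : T.card < S.card :=
        Finset.card_lt_card ⟨hTS, fun hsub => hj0T (hsub hj0S)⟩
      have hSccard : Sc.card < S.card :=
        Finset.card_lt_card ⟨hScS, fun hsub => hi0Sc (hsub hi0S)⟩
      have hcardsum : T.card + Sc.card = S.card := by
        have h1 := Finset.card_sdiff_of_subset hTS
        rw [← hScdef] at h1
        have h2 := Finset.card_le_card hTS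
        omega
      have hT1 : 1 ≤ T.card := Finset.card_pos.mpr ⟨i0, hi0T⟩
      have hSc1 : 1 ≤ Sc.card := Finset.card_pos.mpr ⟨j0, hj0Sc⟩
      set u' : Fin n → Fin n → ℝ := fun i j => u i j - c with hu'
      -- hypotheses for u' on a subset W of S
      have hyps : ∀ W : Finset (Fin n), W ⊆ S →
          (∀ i ∈ W, ∀ j ∈ W, u' i j = u' j i) ∧
          (∀ i ∈ W, ∀ j ∈ W, i ≠ j → 0 ≤ u' i j) ∧
          (∀ i ∈ W, -δ ≤ u' i i) ∧
          (∀ i ∈ W, ∀ j ∈ W, u' i j ≤ u' i i + δ) ∧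
          (∀ i ∈ W, ∀ j ∈ W, ∀ k ∈ W, min (u' i k) (u' k j) ≤ u' i j + δ) := by
        intro W hWS
        refine ⟨?_, ?_, ?_, ?_, ?_⟩
        · intro i hi j hj
          simp only [hu']
          rw [hsym i (hWS hi) j (hWS hj)]
        · intro i hi j hj hij
          simp only [hu']
          have := hcle i (hWS hi) j (hWS hj) hij
          linarith
        · intro i hi
          simp only [hu']
          have := hcdiag i (hWS hi)
          linarith
        · intro i hi j hj
          simp only [hu']
          have := hdub i (hWS hi) j (hWS hj)
          linarith
        · intro i hi j hj k hk
          simp only [hu']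
          have := htri i (hWS hi) j (hWS hj) k (hWS hk)
          have hmin : min (u i k - c) (u k j - c) = min (u i k) (u k j) - c := by
            rcases le_total (u i k) (u k j) with hle | hle
            · rw [min_eq_left hle, min_eq_left (by linarith)]
            · rw [min_eq_right hle, min_eq_right (by linarith)]
          rw [hmin]
          linarith
      obtain ⟨sT, nT, dT, uT, tT⟩ := hyps T hTS
      obtain ⟨sSc, nSc, dSc, uSc, tSc⟩ := hyps Sc hScS
      have BT := ih T u' (by omega) sT nT dT uT tT
      have BSc := ih Sc u' (by omega) sSc nSc dSc uSc tSc
      -- integer sum facts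
      set sZ : ℤ := ∑ i ∈ S, h i with hsZ
      have hsR : ∑ i ∈ S, (h i : ℝ) = (sZ : ℝ) := by
        rw [hsZ]; push_cast; rfl
      have hsZle : (sZ : ℝ) ≤ (sZ : ℝ) * (sZ : ℝ) := by
        have : sZ ≤ sZ * sZ := by nlinarith [sq_nonneg (sZ - 1), sq_nonneg sZ]
        exact_mod_cast this
      -- decomposition identities
      have I1 : ∑ i ∈ S, (h i : ℝ) * u i i
          = (∑ i ∈ S, (h i : ℝ) * u' i i) + c * (sZ : ℝ) := by
        rw [← hsR, Finset.mul_sum, ← Finset.sum_add_distrib]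
        refine Finset.sum_congr rfl fun i _ => ?_
        simp only [hu']
        ring
      have I2 : ∑ i ∈ S, ∑ j ∈ S, (h i : ℝ) * (h j : ℝ) * u i j
          = (∑ i ∈ S, ∑ j ∈ S, (h i : ℝ) * (h j : ℝ) * u' i j) + c * ((sZ:ℝ) * (sZ:ℝ)) := by
        have e := double_sum_factor S S (fun i => (h i : ℝ)) (fun j => (h j : ℝ)) c
        rw [← hsR, ← e, ← Finset.sum_add_distrib]
        refine Finset.sum_congr rfl fun i _ => ?_
        rw [← Finset.sum_add_distrib]
        refine Finset.sum_congr rfl fun j _ => ?_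
        simp only [hu']
        ring
      -- splitting sums over S into Sc and T
      have split1 : ∀ f : Fin n → ℝ, ∑ i ∈ S, f i = ∑ i ∈ Sc, f i + ∑ i ∈ T, f i :=
        fun f => (Finset.sum_sdiff hTS).symm
      have splitD : ∑ i ∈ S, ∑ j ∈ S, (h i : ℝ) * (h j : ℝ) * u' i j
          = (∑ i ∈ Sc, ∑ j ∈ Sc, (h i : ℝ) * (h j : ℝ) * u' i j)
            + (∑ i ∈ Sc, ∑ j ∈ T, (h i : ℝ) * (h j : ℝ) * u' i j)
            + ((∑ i ∈ T, ∑ j ∈ Sc, (h i : ℝ) * (h j : ℝ) * u' i j)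
            + (∑ i ∈ T, ∑ j ∈ T, (h i : ℝ) * (h j : ℝ) * u' i j)) := by
        rw [split1 (fun i => ∑ j ∈ S, (h i : ℝ) * (h j : ℝ) * u' i j)]
        have eSc : ∑ i ∈ Sc, ∑ j ∈ S, (h i : ℝ) * (h j : ℝ) * u' i j
            = (∑ i ∈ Sc, ∑ j ∈ Sc, (h i : ℝ) * (h j : ℝ) * u' i j)
              + (∑ i ∈ Sc, ∑ j ∈ T, (h i : ℝ) * (h j : ℝ) * u' i j) := by
          rw [← Finset.sum_add_distrib]
          exact Finset.sum_congr rfl fun i _ =>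
            split1 (fun j => (h i : ℝ) * (h j : ℝ) * u' i j)
        have eT : ∑ i ∈ T, ∑ j ∈ S, (h i : ℝ) * (h j : ℝ) * u' i j
            = (∑ i ∈ T, ∑ j ∈ Sc, (h i : ℝ) * (h j : ℝ) * u' i j)
              + (∑ i ∈ T, ∑ j ∈ T, (h i : ℝ) * (h j : ℝ) * u' i j) := by
          rw [← Finset.sum_add_distrib]
          exact Finset.sum_congr rfl fun i _ =>
            split1 (fun j => (h i : ℝ) * (h j : ℝ) * u' i j)
        rw [eSc, eT]
      -- cross bounds
      have hu'ub : ∀ i ∈ T, ∀ j ∈ Sc, u' i j ≤ θ := by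
        intro i hi j hj
        by_contra hgt
        push_neg at hgt
        have : j ∈ T := hclosed i hi j (hScS hj) (by simp only [hu'] at hgt; linarith)
        exact (Finset.mem_sdiff.mp hj).2 this
      have hu'lb : ∀ i ∈ T, ∀ j ∈ Sc, 0 ≤ u' i j := by
        intro i hi j hj
        have hij : i ≠ j := fun he => (Finset.mem_sdiff.mp hj).2 (he ▸ hi)
        simp only [hu']
        have := hcle i (hTS hi) j (hScS hj) hij
        linarith
      have habsL : ∀ W : Finset (Fin n), ∑ i ∈ W, (|h i| : ℝ) ≤ L := by
        intro W
        rw [hL]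
        exact Finset.sum_le_sum_of_subset_of_nonneg (Finset.subset_univ W)
          (fun i _ _ => by positivity)
      have habsnn : ∀ W : Finset (Fin n), 0 ≤ ∑ i ∈ W, (|h i| : ℝ) :=
        fun W => Finset.sum_nonneg fun i _ => by positivity
      have crossTSc : -(θ * L^2) ≤ ∑ i ∈ T, ∑ j ∈ Sc, (h i : ℝ) * (h j : ℝ) * u' i j := by
        have step : ∑ i ∈ T, ∑ j ∈ Sc, (-(|(h i : ℝ)| * |(h j : ℝ)|) * θ)
            ≤ ∑ i ∈ T, ∑ j ∈ Sc, (h i : ℝ) * (h j : ℝ) * u' i j := by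
          refine Finset.sum_le_sum fun i hi => Finset.sum_le_sum fun j hj => ?_
          exact cross_term_bound θ _ _ _ hθ0 (hu'lb i hi j hj) (hu'ub i hi j hj)
        have eq1 : ∑ i ∈ T, ∑ j ∈ Sc, (-(|(h i : ℝ)| * |(h j : ℝ)|) * θ)
            = (-θ) * ((∑ i ∈ T, |(h i : ℝ)|) * (∑ j ∈ Sc, |(h j : ℝ)|)) := by
          have e0 : ∑ i ∈ T, ∑ j ∈ Sc, (-(|(h i : ℝ)| * |(h j : ℝ)|) * θ)
              = ∑ i ∈ T, ∑ j ∈ Sc, (-θ) * (|(h i : ℝ)| * |(h j : ℝ)|) :=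
            Finset.sum_congr rfl fun i _ => Finset.sum_congr rfl fun j _ => by ring
          rw [e0]
          exact double_sum_factor T Sc (fun i => |(h i : ℝ)|) (fun j => |(h j : ℝ)|) (-θ)
        have habscast : ∀ W : Finset (Fin n), ∑ i ∈ W, |(h i : ℝ)| = ∑ i ∈ W, (|h i| : ℝ) := by
          intro W
          exact Finset.sum_congr rfl fun i _ => by push_cast; ring
        have hcA := habscast T
        have hcB := habscast Sc
        have hA : ∑ i ∈ T, |(h i : ℝ)| ≤ L := by rw [hcA]; exact habsL T
        have hB : ∑ j ∈ Sc, |(h j : ℝ)| ≤ L := by rw [hcB]; exact habsL Sc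
        have hA0 : 0 ≤ ∑ i ∈ T, |(h i : ℝ)| := Finset.sum_nonneg fun i _ => abs_nonneg _
        have hB0 : 0 ≤ ∑ j ∈ Sc, |(h j : ℝ)| := Finset.sum_nonneg fun j _ => abs_nonneg _
        have hprod : (∑ i ∈ T, |(h i : ℝ)|) * (∑ j ∈ Sc, |(h j : ℝ)|) ≤ L^2 := by nlinarith
        have hfin : -(θ * L^2) ≤ (-θ) * ((∑ i ∈ T, |(h i : ℝ)|) * (∑ j ∈ Sc, |(h j : ℝ)|)) := by
          nlinarith [mul_le_mul_of_nonneg_left hprod hθ0]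
        rw [eq1] at step
        linarith [step, hfin]
      have crossScT : -(θ * L^2) ≤ ∑ i ∈ Sc, ∑ j ∈ T, (h i : ℝ) * (h j : ℝ) * u' i j := by
        have hub2 : ∀ i ∈ Sc, ∀ j ∈ T, u' i j ≤ θ := by
          intro i hi j hj
          have : u' j i ≤ θ := hu'ub j hj i hi
          have hsymm : u' i j = u' j i := by
            simp only [hu']
            rw [hsym i (hScS hi) j (hTS hj)]
          linarith [hsymm ▸ this]
        have hlb2 : ∀ i ∈ Sc, ∀ j ∈ T, 0 ≤ u' i j := by
          intro i hi j hj
          have : 0 ≤ u' j i := hu'lb j hj i hi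
          have hsymm : u' i j = u' j i := by
            simp only [hu']
            rw [hsym i (hScS hi) j (hTS hj)]
          linarith [hsymm ▸ this]
        have step : ∑ i ∈ Sc, ∑ j ∈ T, (-(|(h i : ℝ)| * |(h j : ℝ)|) * θ)
            ≤ ∑ i ∈ Sc, ∑ j ∈ T, (h i : ℝ) * (h j : ℝ) * u' i j := by
          refine Finset.sum_le_sum fun i hi => Finset.sum_le_sum fun j hj => ?_
          exact cross_term_bound θ _ _ _ hθ0 (hlb2 i hi j hj) (hub2 i hi j hj)
        have eq1 : ∑ i ∈ Sc, ∑ j ∈ T, (-(|(h i : ℝ)| * |(h j : ℝ)|) * θ)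
            = (-θ) * ((∑ i ∈ Sc, |(h i : ℝ)|) * (∑ j ∈ T, |(h j : ℝ)|)) := by
          have e0 : ∑ i ∈ Sc, ∑ j ∈ T, (-(|(h i : ℝ)| * |(h j : ℝ)|) * θ)
              = ∑ i ∈ Sc, ∑ j ∈ T, (-θ) * (|(h i : ℝ)| * |(h j : ℝ)|) :=
            Finset.sum_congr rfl fun i _ => Finset.sum_congr rfl fun j _ => by ring
          rw [e0]
          exact double_sum_factor Sc T (fun i => |(h i : ℝ)|) (fun j => |(h j : ℝ)|) (-θ)
        have habscast : ∀ W : Finset (Fin n), ∑ i ∈ W, |(h i : ℝ)| = ∑ i ∈ W, (|h i| : ℝ) := by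
          intro W
          exact Finset.sum_congr rfl fun i _ => by push_cast; ring
        have hcA := habscast Sc
        have hcB := habscast T
        have hA : ∑ i ∈ Sc, |(h i : ℝ)| ≤ L := by rw [hcA]; exact habsL Sc
        have hB : ∑ j ∈ T, |(h j : ℝ)| ≤ L := by rw [hcB]; exact habsL T
        have hA0 : 0 ≤ ∑ i ∈ Sc, |(h i : ℝ)| := Finset.sum_nonneg fun i _ => abs_nonneg _
        have hB0 : 0 ≤ ∑ j ∈ T, |(h j : ℝ)| := Finset.sum_nonneg fun j _ => abs_nonneg _
        have hprod : (∑ i ∈ Sc, |(h i : ℝ)|) * (∑ j ∈ T, |(h j : ℝ)|) ≤ L^2 := by nlinarith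
        have hfin : -(θ * L^2) ≤ (-θ) * ((∑ i ∈ Sc, |(h i : ℝ)|) * (∑ j ∈ T, |(h j : ℝ)|)) := by
          nlinarith [mul_le_mul_of_nonneg_left hprod hθ0]
        rw [eq1] at step
        linarith [step, hfin]
      -- put it all together
      have hdiagsplit : ∑ i ∈ S, (h i : ℝ) * u' i i
          = ∑ i ∈ Sc, (h i : ℝ) * u' i i + ∑ i ∈ T, (h i : ℝ) * u' i i :=
        split1 _
      have hcfact : c * ((sZ:ℝ) - (sZ:ℝ) * (sZ:ℝ)) ≤ 0 := by nlinarith [hc0, hsZle]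
      have hpow : (3:ℝ)^(Sc.card) + 3^(T.card) + 2 ≤ 3^(S.card) := by
        rw [← hcardsum, Nat.add_comm]
        exact pow3_bound Sc.card T.card hSc1 hT1
      have hfinmul : δ * L^2 * ((n+1) * ((3:ℝ)^(Sc.card) + 3^(T.card) + 2))
          ≤ δ * L^2 * ((n+1) * 3^(S.card)) := by
        have hn1 : (0:ℝ) ≤ (n+1) := by positivity
        have hdl : (0:ℝ) ≤ δ * L^2 := by positivity
        have := mul_le_mul_of_nonneg_left hpow hn1
        exact mul_le_mul_of_nonneg_left this hdl
      have hθval : θ * L^2 = δ * L^2 * ((n:ℝ)+1) := by rw [hθdef]; ring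
      rw [I1, I2, hdiagsplit, splitD]
      have totT : (∑ i ∈ T, (h i : ℝ) * u' i i)
          - ∑ i ∈ T, ∑ j ∈ T, (h i : ℝ) * (h j : ℝ) * u' i j
          ≤ δ * L^2 * ((n+1) * 3^(T.card)) := BT
      have totSc : (∑ i ∈ Sc, (h i : ℝ) * u' i i)
          - ∑ i ∈ Sc, ∑ j ∈ Sc, (h i : ℝ) * (h j : ℝ) * u' i j
          ≤ δ * L^2 * ((n+1) * 3^(Sc.card)) := BSc
      nlinarith [totT, totSc, crossTSc, crossScT, hcfact, hfinmul, hθval]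

lemma double_sum_eq_two_offdiag (n : ℕ) (F : Fin n → Fin n → ℝ)
    (hsym : ∀ i j, F i j = F j i) (hdiag : ∀ i, F i i = 0) :
    ∑ i, ∑ j, F i j = 2 * ∑ q ∈ offDiagPairs n, F q.1 q.2 := by
  have e0 : ∑ i, ∑ j, F i j = ∑ q ∈ (Finset.univ ×ˢ Finset.univ : Finset (Fin n × Fin n)), F q.1 q.2 :=
    (Finset.sum_product' (s := Finset.univ) (t := Finset.univ) (f := fun i j => F i j)).symm
  rw [e0, Finset.univ_product_univ]
  have e1 := Finset.sum_filter_add_sum_filter_not (Finset.univ : Finset (Fin n × Fin n))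
    (fun q => q.1 < q.2) (fun q => F q.1 q.2)
  have e2 := Finset.sum_filter_add_sum_filter_not
    ((Finset.univ : Finset (Fin n × Fin n)).filter (fun q => ¬ q.1 < q.2))
    (fun q => q.2 < q.1) (fun q => F q.1 q.2)
  have ediag : ∑ q ∈ (((Finset.univ : Finset (Fin n × Fin n)).filter
      (fun q => ¬ q.1 < q.2)).filter (fun q => ¬ q.2 < q.1)), F q.1 q.2 = 0 := by
    apply Finset.sum_eq_zero
    intro q hq
    simp only [Finset.mem_filter] at hq
    have : q.1 = q.2 := le_antisymm (not_lt.mp hq.2) (not_lt.mp hq.1.2)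
    rw [this]
    exact hdiag q.2
  have eswap : ∑ q ∈ (((Finset.univ : Finset (Fin n × Fin n)).filter
      (fun q => ¬ q.1 < q.2)).filter (fun q => q.2 < q.1)), F q.1 q.2
      = ∑ q ∈ offDiagPairs n, F q.1 q.2 := by
    apply Finset.sum_nbij' (i := Prod.swap) (j := Prod.swap)
    · intro q hq
      simp only [Finset.mem_filter] at hq
      simp only [offDiagPairs, Finset.mem_filter, Finset.mem_univ, true_and, Prod.fst_swap,
        Prod.snd_swap]
      exact hq.2
    · intro q hq
      simp only [offDiagPairs, Finset.mem_filter, Finset.mem_univ, true_and] at hq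
      simp only [Finset.mem_filter, Finset.mem_univ, true_and, Prod.fst_swap, Prod.snd_swap]
      exact ⟨not_lt.mpr hq.le, hq⟩
    · intro q _; exact Prod.swap_swap q
    · intro q _; exact Prod.swap_swap q
    · intro q _
      simp only [Prod.fst_swap, Prod.snd_swap]
      exact hsym q.1 q.2
  rw [eswap] at e2
  unfold offDiagPairs at *
  linarith [e1, e2, ediag]

set_option maxHeartbeats 1000000 in
theorem hypermetric_bounded_ratio (n : ℕ) (hn : 0 < n) (h : Fin n → ℤ)
    (hsum : ∑ i, h i = 1) :
    ∃ c : ℝ, 0 < c ∧ ∀ M : Matrix (Fin n) (Fin n) ℝ,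
      IsLorentzian M → (∀ i, M i i = 1) → (∀ i j, 0 < M i j) →
      ∏ q ∈ offDiagPairs n, M q.1 q.2 ^ ((h q.1 * h q.2 : ℤ) : ℝ) ≤ c := by
  classical
  set L : ℝ := ∑ i, (|h i| : ℝ) with hL
  set δ : ℝ := Real.log 2 with hδdef
  have hδ0 : 0 ≤ δ := Real.log_nonneg one_le_two
  refine ⟨Real.exp (δ * L^2 * ((n+1) * 3^n)), Real.exp_pos _, ?_⟩
  intro M hLor hdiag hpos
  obtain ⟨hsym, hnn, hev⟩ := hLor
  obtain ⟨v, hv⟩ := exists_dominating n M hsym hev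
  set d : Fin n → Fin n → ℝ := fun i j => Real.log (M i j) with hd
  have hMsym : ∀ i j, M i j = M j i := fun i j => hsym.apply j i
  have hdsym : ∀ i j, d i j = d j i := fun i j => by
    simp only [hd]
    rw [hMsym i j]
  have hd0 : ∀ i, d i i = 0 := fun i => by
    simp only [hd]
    rw [hdiag i, Real.log_one]
  have hFP : ∀ a b c e : Fin n,
      d a b + d c e ≤ max (d a c + d b e) (d a e + d b c) + 2*δ := by
    intro a b c e
    have h1 := four_point M hsym v hv hdiag hpos a b c e
    have h2 := four_point' M hpos a b c e h1
    have hlog4 : Real.log 4 = 2*δ := by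
      rw [hδdef, show (4:ℝ) = 2*2 by norm_num, Real.log_mul two_ne_zero two_ne_zero]
      ring
    rw [hlog4] at h2
    exact h2
  set w : Fin n := ⟨0, hn⟩ with hw
  set f : Fin n → ℝ := fun i => d i w with hf
  have hf0 : ∀ i, 0 ≤ f i := by
    intro i
    have hq : (Pi.single i 1 : Fin n → ℝ) ⬝ᵥ M *ᵥ (Pi.single i 1 : Fin n → ℝ) = 1 := by
      rw [dot_single]
      exact hdiag i
    have hcs := revCS_s4 M hsym v hv (Pi.single i 1) (Pi.single w 1) (by rw [hq]; norm_num)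
    rw [hq, dot_single, dot_single, hdiag w, one_mul] at hcs
    have h1le : 1 ≤ M i w := by nlinarith [hpos i w]
    exact Real.log_nonneg h1le
  set u : Fin n → Fin n → ℝ := fun i j => (f i + f j - d i j)/2 + δ with hu
  have hu_diag : ∀ i, u i i = f i + δ := by
    intro i
    simp only [hu]
    rw [hd0 i]
    ring
  have hu_sym : ∀ i ∈ Finset.univ, ∀ j ∈ (Finset.univ : Finset (Fin n)), u i j = u j i := by
    intro i _ j _
    simp only [hu]
    rw [hdsym i j]
    ring
  have hu_nn : ∀ i ∈ Finset.univ, ∀ j ∈ (Finset.univ : Finset (Fin n)), i ≠ j → 0 ≤ u i j := by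
    intro i _ j _ _
    have hfp := hFP i j w w
    rw [max_self, hd0 w] at hfp
    simp only [hu, hf]
    linarith
  have hu_dlb : ∀ i ∈ (Finset.univ : Finset (Fin n)), -δ ≤ u i i := by
    intro i _
    rw [hu_diag i]
    linarith [hf0 i, hδ0]
  have hu_dub : ∀ i ∈ Finset.univ, ∀ j ∈ (Finset.univ : Finset (Fin n)), u i j ≤ u i i + δ := by
    intro i _ j _
    have hfp := hFP j w i i
    rw [max_self, hd0 i] at hfp
    rw [hu_diag i]
    simp only [hu, hf]
    have e1 : d w i = d i w := hdsym w i
    have e2 : d j i = d i j := hdsym j i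
    rw [e1, e2] at hfp
    linarith
  have hu_tri : ∀ i ∈ Finset.univ, ∀ j ∈ Finset.univ, ∀ k ∈ (Finset.univ : Finset (Fin n)),
      min (u i k) (u k j) ≤ u i j + δ := by
    intro i _ j _ k _
    have hfp := hFP i j k w
    rcases max_cases (d i k + d j w) (d i w + d j k) with ⟨hmax, _⟩ | ⟨hmax, _⟩
    · refine le_trans (min_le_left _ _) ?_
      rw [hmax] at hfp
      simp only [hu, hf]
      linarith
    · refine le_trans (min_le_right _ _) ?_
      rw [hmax] at hfp
      simp only [hu, hf]
      have e1 : d k j = d j k := hdsym k j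
      rw [e1]
      linarith
  have CL := comb_lemma n h δ hδ0 n Finset.univ u (by simp) hu_sym hu_nn hu_dlb hu_dub hu_tri
  rw [show (Finset.univ : Finset (Fin n)).card = n by simp] at CL
  rw [← hL] at CL
  have hsumR : ∑ i, (h i : ℝ) = 1 := by
    have : ((∑ i, h i : ℤ) : ℝ) = ((1 : ℤ) : ℝ) := by rw [hsum]
    push_cast at this
    exact this
  set G : Fin n → Fin n → ℝ := fun i j => (h i:ℝ)*(h j:ℝ)*d i j with hG
  have hGsym : ∀ i j, G i j = G j i := fun i j => by
    simp only [hG]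
    rw [hdsym i j]
    ring
  have hGdiag : ∀ i, G i i = 0 := fun i => by
    simp only [hG]
    rw [hd0 i]
    ring
  have hdouble := double_sum_eq_two_offdiag n G hGsym hGdiag
  have E1 : ∑ i, (h i:ℝ) * u i i = (∑ i, (h i:ℝ) * f i) + δ := by
    have e : ∀ i, (h i:ℝ) * u i i = (h i:ℝ)*f i + δ*(h i:ℝ) := fun i => by
      rw [hu_diag i]; ring
    rw [Finset.sum_congr rfl (fun i _ => e i), Finset.sum_add_distrib, ← Finset.mul_sum,
      hsumR, mul_one]
  have s1 : ∑ i, ∑ j, (1/2:ℝ)*(((h i:ℝ)*f i)*((h j:ℝ))) = 1/2*(∑ i, (h i:ℝ)*f i) := by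
    rw [double_sum_factor Finset.univ Finset.univ (fun i => (h i:ℝ)*f i) (fun j => (h j:ℝ))
      (1/2), hsumR, mul_one]
  have s2 : ∑ i, ∑ j, (1/2:ℝ)*((h i:ℝ)*((h j:ℝ)*f j)) = 1/2*(∑ j, (h j:ℝ)*f j) := by
    rw [double_sum_factor Finset.univ Finset.univ (fun i => (h i:ℝ)) (fun j => (h j:ℝ)*f j)
      (1/2), hsumR, one_mul]
  have s3 : ∑ i, ∑ j, δ*((h i:ℝ)*((h j:ℝ))) = δ := by
    rw [double_sum_factor Finset.univ Finset.univ (fun i => (h i:ℝ)) (fun j => (h j:ℝ)) δ,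
      hsumR, mul_one, mul_one]
  have s4 : ∑ i, ∑ j, (-(1/2):ℝ)*G i j = -(1/2)*(∑ i, ∑ j, G i j) :=
    calc ∑ i, ∑ j, (-(1/2):ℝ)*G i j = ∑ i, (-(1/2):ℝ)*(∑ j, G i j) :=
          Finset.sum_congr rfl fun i _ => (Finset.mul_sum _ _ _).symm
      _ = -(1/2)*(∑ i, ∑ j, G i j) := (Finset.mul_sum _ _ _).symm
  have E2 : ∑ i, ∑ j, (h i:ℝ)*(h j:ℝ)*u i j
      = (∑ i, (h i:ℝ) * f i) + δ - (∑ q ∈ offDiagPairs n, G q.1 q.2) := by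
    have splitsum : ∑ i, ∑ j, (h i:ℝ)*(h j:ℝ)*u i j
        = (∑ i, ∑ j, (1/2:ℝ)*(((h i:ℝ)*f i)*((h j:ℝ))))
          + (∑ i, ∑ j, (1/2:ℝ)*((h i:ℝ)*((h j:ℝ)*f j)))
          + (∑ i, ∑ j, (-(1/2):ℝ)*G i j)
          + (∑ i, ∑ j, δ*((h i:ℝ)*((h j:ℝ)))) := by
      rw [← Finset.sum_add_distrib, ← Finset.sum_add_distrib, ← Finset.sum_add_distrib]
      refine Finset.sum_congr rfl fun i _ => ?_
      rw [← Finset.sum_add_distrib, ← Finset.sum_add_distrib, ← Finset.sum_add_distrib]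
      refine Finset.sum_congr rfl fun j _ => ?_
      simp only [hu, hG]
      ring
    rw [splitsum, s1, s2, s3, s4, hdouble]
    ring
  have key : ∑ q ∈ offDiagPairs n, G q.1 q.2 ≤ δ * L^2 * ((n+1)*3^n) := by
    rw [E1, E2] at CL
    linarith
  have prodeq : ∏ q ∈ offDiagPairs n, M q.1 q.2 ^ ((h q.1 * h q.2 : ℤ) : ℝ)
      = Real.exp (∑ q ∈ offDiagPairs n, ((h q.1 * h q.2 : ℤ) : ℝ) * d q.1 q.2) := by
    rw [Real.exp_sum]
    refine Finset.prod_congr rfl fun q _ => ?_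
    rw [Real.rpow_def_of_pos (hpos q.1 q.2), mul_comm]
  rw [prodeq]
  apply Real.exp_le_exp.mpr
  have sumeq : ∑ q ∈ offDiagPairs n, ((h q.1 * h q.2 : ℤ) : ℝ) * d q.1 q.2
      = ∑ q ∈ offDiagPairs n, G q.1 q.2 := by
    refine Finset.sum_congr rfl fun q _ => ?_
    simp only [hG]
    push_cast
    ring
  rw [sumeq]
  exact key
end

section
/- Let a, b, c be nonnegative real numbers with a + b + c = 1 and a² + b² + c² − 2ab − 2ac − 2bc ≤ 0. Then for every normalized 3×3 Lorentzian matrix (p_{ij}) with all entries positive, one has p_{12}^{c−a−b}·p_{13}^{b−a−c}·p_{23}^{a−b−c} ≤ 1, and this bound is attained (at the all-ones matrix); hence the optimal bounding constant for the bounded ratio a·α^{23|1} + b·α^{13|2} + c·α^{12|3} equals 1. -/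
open Matrix

section Aux

lemma sum_lemma_aux {n : Type*} [Fintype n] [DecidableEq n] (μ v w : n → ℝ)
    (hcard : (Finset.univ.filter fun i => 0 < μ i).card ≤ 1)
    (hB : ∑ i, μ i * (v i * w i) = 0)
    (hv : 0 < ∑ i, μ i * (v i * v i)) :
    ∑ i, μ i * (w i * w i) ≤ 0 := by
  obtain ⟨k, -, hk⟩ : ∃ k ∈ Finset.univ, 0 < μ k * (v k * v k) := by
    by_contra h; push_neg at h
    exact absurd (Finset.sum_nonpos fun i hi => h i hi) (by linarith)
  have hμk : 0 < μ k := by nlinarith [sq_nonneg (v k), sq_abs (v k)]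
  have hvk : 0 < v k * v k := by nlinarith
  have hneg : ∀ j, j ≠ k → μ j ≤ 0 := by
    intro j hj
    by_contra hμj; push_neg at hμj
    have hsub : ({j, k} : Finset n) ⊆ Finset.univ.filter fun i => 0 < μ i := by
      intro t ht
      simp only [Finset.mem_insert, Finset.mem_singleton] at ht
      rcases ht with rfl | rfl <;> simp [hμj, hμk]
    have h2 := Finset.card_le_card hsub
    rw [Finset.card_pair hj] at h2
    omega
  have key : ∑ i, μ i * ((w k * v i - v k * w i) * (w k * v i - v k * w i)) ≤ 0 := by
    apply Finset.sum_nonpos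
    intro i _
    rcases eq_or_ne i k with rfl | h
    · have : w i * v i - v i * w i = 0 := by ring
      rw [this]; simp
    · have h1 := hneg i h
      nlinarith [mul_self_nonneg (w k * v i - v k * w i)]
  have expand : ∑ i, μ i * ((w k * v i - v k * w i) * (w k * v i - v k * w i))
      = w k * w k * (∑ i, μ i * (v i * v i)) - 2 * (w k * v k) * (∑ i, μ i * (v i * w i))
        + v k * v k * (∑ i, μ i * (w i * w i)) := by
    rw [Finset.mul_sum, Finset.mul_sum, Finset.mul_sum, ← Finset.sum_sub_distrib,
      ← Finset.sum_add_distrib]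
    exact Finset.sum_congr rfl fun i _ => by ring
  rw [expand, hB] at key
  nlinarith [mul_self_nonneg (w k)]

lemma quad_repr_aux {n : Type*} [Fintype n] [DecidableEq n] {M : Matrix n n ℝ}
    (hH : M.IsHermitian) (u u' : n → ℝ) :
    u' ⬝ᵥ (M *ᵥ u) = ∑ i, hH.eigenvalues i *
      (((star (hH.eigenvectorUnitary : Matrix n n ℝ)) *ᵥ u') i *
       ((star (hH.eigenvectorUnitary : Matrix n n ℝ)) *ᵥ u) i) := by
  set U := (hH.eigenvectorUnitary : Matrix n n ℝ) with hU
  have hstar : star U = Uᵀ := by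
    ext i j
    simp [Matrix.star_eq_conjTranspose, Matrix.conjTranspose_apply]
  conv_lhs => rw [hH.spectral_theorem, Unitary.conjStarAlgAut_apply]
  rw [RCLike.ofReal_real_eq_id]
  rw [← Matrix.mulVec_mulVec, ← Matrix.mulVec_mulVec, dotProduct_mulVec]
  rw [show u' ᵥ* U = (star U) *ᵥ u' by rw [hstar, Matrix.mulVec_transpose]]
  simp only [dotProduct, Matrix.mulVec_diagonal, Function.comp_apply, id_eq]
  exact Finset.sum_congr rfl fun i _ => by ring

lemma quad_nonpos_aux {n : Type*} [Fintype n] [DecidableEq n] {M : Matrix n n ℝ}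
    (hH : M.IsHermitian)
    (hcard : (Finset.univ.filter fun i => 0 < hH.eigenvalues i).card ≤ 1)
    (v w : n → ℝ) (hB : v ⬝ᵥ (M *ᵥ w) = 0) (hv : 0 < v ⬝ᵥ (M *ᵥ v)) :
    w ⬝ᵥ (M *ᵥ w) ≤ 0 := by
  rw [quad_repr_aux hH w w]
  refine sum_lemma_aux _ ((star (hH.eigenvectorUnitary : Matrix n n ℝ)) *ᵥ v) _ hcard ?_ ?_
  · rw [← quad_repr_aux hH w v]; exact hB
  · rw [← quad_repr_aux hH v v]; exact hv

lemma trace_eq_sum_eigs_aux {n : Type*} [Fintype n] [DecidableEq n] {M : Matrix n n ℝ}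
    (hH : M.IsHermitian) : M.trace = ∑ i, hH.eigenvalues i := by
  conv_lhs => rw [hH.spectral_theorem, Unitary.conjStarAlgAut_apply]
  rw [Matrix.trace_mul_cycle]
  rw [show (star (hH.eigenvectorUnitary : Matrix n n ℝ)) * (hH.eigenvectorUnitary : Matrix n n ℝ)
      = 1 from Unitary.coe_star_mul_self hH.eigenvectorUnitary]
  rw [one_mul, RCLike.ofReal_real_eq_id]
  simp [Matrix.trace_diagonal]

lemma unique_pos_aux {n : Type*} [Fintype n] [DecidableEq n] {μ : n → ℝ}
    (hcard : (Finset.univ.filter fun i => 0 < μ i).card ≤ 1) {k : n} (hk : 0 < μ k) :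
    ∀ j, j ≠ k → μ j ≤ 0 := by
  intro j hj
  by_contra hμj; push_neg at hμj
  have hsub : ({j, k} : Finset n) ⊆ Finset.univ.filter fun i => 0 < μ i := by
    intro t ht
    simp only [Finset.mem_insert, Finset.mem_singleton] at ht
    rcases ht with rfl | rfl <;> simp [hμj, hk]
  have h2 := Finset.card_le_card hsub
  rw [Finset.card_pair hj] at h2
  omega

lemma det_nonneg_aux {M : Matrix (Fin 3) (Fin 3) ℝ} (hH : M.IsHermitian)
    (hcard : (Finset.univ.filter fun i => 0 < hH.eigenvalues i).card ≤ 1)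
    (htr : M.trace = 3) : 0 ≤ M.det := by
  have hsum : ∑ i, hH.eigenvalues i = 3 := by rw [← trace_eq_sum_eigs_aux hH, htr]
  obtain ⟨k, hk⟩ : ∃ k, 0 < hH.eigenvalues k := by
    by_contra h; push_neg at h
    have h2 : ∑ i, hH.eigenvalues i ≤ 0 := Finset.sum_nonpos fun i _ => h i
    rw [hsum] at h2; norm_num at h2
  have hneg := unique_pos_aux hcard hk
  rw [hH.det_eq_prod_eigenvalues]
  rw [Fin.prod_univ_three]
  simp only [RCLike.ofReal_real_eq_id, id_eq]
  fin_cases k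
  · have hk' : 0 < hH.eigenvalues 0 := hk
    have h1 := hneg 1 (by decide); have h2 := hneg 2 (by decide)
    nlinarith [mul_nonneg_iff.mpr (Or.inr ⟨h1, h2⟩), hk']
  · have hk' : 0 < hH.eigenvalues 1 := hk
    have h1 := hneg 0 (by decide); have h2 := hneg 2 (by decide)
    nlinarith [mul_nonneg_iff.mpr (Or.inr ⟨h1, h2⟩), hk']
  · have hk' : 0 < hH.eigenvalues 2 := hk
    have h1 := hneg 0 (by decide); have h2 := hneg 1 (by decide)
    nlinarith [mul_nonneg_iff.mpr (Or.inr ⟨h1, h2⟩), hk']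

lemma le_of_sq_le_sq_aux {A B : ℝ} (hB : 0 ≤ B) (h : A^2 ≤ B^2) : A ≤ B := by
  calc A ≤ |A| := le_abs_self A
  _ = Real.sqrt (A^2) := (Real.sqrt_sq_eq_abs A).symm
  _ ≤ Real.sqrt (B^2) := Real.sqrt_le_sqrt h
  _ = B := by rw [Real.sqrt_sq_eq_abs, abs_of_nonneg hB]

lemma amgm_aux (p q r s : ℝ) : 2*p*q*(r*s) ≤ p^2*r^2 + q^2*s^2 := by
  nlinarith [sq_nonneg (p*r - q*s)]

lemma main_ineq_aux (a b c x y z : ℝ) (ha : 0 ≤ a) (hb : 0 ≤ b)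
    (habc : a + b + c = 1)
    (hdisc : a ^ 2 + b ^ 2 + c ^ 2 - 2*a*b - 2*a*c - 2*b*c ≤ 0)
    (hx : 1 ≤ x) (hy : 1 ≤ y) (hz : 1 ≤ z)
    (hdet : x^2 + y^2 + z^2 ≤ 1 + 2*x*y*z)
    (hc2 : 1/2 ≤ c) :
    x ^ (c-a-b) * y ^ (b-a-c) * z ^ (a-b-c) ≤ 1 := by
  have hx0 : (0:ℝ) < x := by linarith
  have hy0 : (0:ℝ) < y := by linarith
  have hz0 : (0:ℝ) < z := by linarith
  set s := Real.sqrt (y^2 - 1) with hs_def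
  set t := Real.sqrt (z^2 - 1) with ht_def
  have hs0 : 0 ≤ s := Real.sqrt_nonneg _
  have ht0 : 0 ≤ t := Real.sqrt_nonneg _
  have hs : s^2 = y^2 - 1 := Real.sq_sqrt (by nlinarith)
  have ht : t^2 = z^2 - 1 := Real.sq_sqrt (by nlinarith)
  have hsqle : (x - y*z)^2 ≤ (s*t)^2 := by
    rw [mul_pow, hs, ht]; nlinarith [hdet]
  have hxle : x ≤ y*z + s*t := by
    have := le_of_sq_le_sq_aux (mul_nonneg hs0 ht0) hsqle
    linarith
  set sa := Real.sqrt a with hsa_def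
  set sb := Real.sqrt b with hsb_def
  have hsa : sa^2 = a := Real.sq_sqrt ha
  have hsb : sb^2 = b := Real.sq_sqrt hb
  have hsa0 : 0 ≤ sa := Real.sqrt_nonneg _
  have hsb0 : 0 ≤ sb := Real.sqrt_nonneg _
  have hcab0 : 0 ≤ c - a - b := by linarith
  have hsq : (c-a-b)^2 ≤ (2*sa*sb)^2 := by
    have h4ab : (2*sa*sb)^2 = 4*(a*b) := by rw [mul_pow, mul_pow, hsa, hsb]; ring
    rw [h4ab]; nlinarith [hdisc]
  have hcab : c - a - b ≤ 2*sa*sb :=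
    le_of_sq_le_sq_aux (by positivity) hsq
  set u := s*t/(y*z) with hu_def
  have hu0 : 0 ≤ u := by positivity
  have hyz0 : (0:ℝ) < y*z := by positivity
  have hxle' : x ≤ y*z*(1+u) := by
    rw [hu_def, mul_add, mul_one, mul_div_cancel₀ _ (ne_of_gt hyz0)]; exact hxle
  have hlog1 : Real.log x ≤ Real.log y + Real.log z + u := by
    have h1 : Real.log x ≤ Real.log (y*z*(1+u)) := Real.log_le_log hx0 hxle'
    have h2 : Real.log (y*z*(1+u)) = Real.log y + Real.log z + Real.log (1+u) := by
      rw [Real.log_mul (by positivity) (by positivity),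
        Real.log_mul (by positivity) (by positivity)]
    have h3 : Real.log (1+u) ≤ u := by
      have := Real.log_le_sub_one_of_pos (show (0:ℝ) < 1+u by linarith)
      linarith
    linarith
  have hY : 1 - (y^2)⁻¹ ≤ 2 * Real.log y := by
    have h1 := Real.log_le_sub_one_of_pos (show (0:ℝ) < (y^2)⁻¹ by positivity)
    rw [Real.log_inv] at h1
    have h2 : Real.log (y^2) = 2 * Real.log y := by
      rw [Real.log_pow]; push_cast; ring
    linarith [h1, h2.symm.le]
  have hZ : 1 - (z^2)⁻¹ ≤ 2 * Real.log z := by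
    have h1 := Real.log_le_sub_one_of_pos (show (0:ℝ) < (z^2)⁻¹ by positivity)
    rw [Real.log_inv] at h1
    have h2 : Real.log (z^2) = 2 * Real.log z := by
      rw [Real.log_pow]; push_cast; ring
    linarith [h1, h2.symm.le]
  set σ := s/y with hσ_def
  set τ := t/z with hτ_def
  have hσ0 : 0 ≤ σ := by positivity
  have hτ0 : 0 ≤ τ := by positivity
  have hσ2 : σ^2 ≤ 2 * Real.log y := by
    have h : σ^2 = 1 - (y^2)⁻¹ := by
      rw [hσ_def, div_pow, hs]; field_simp
    linarith [h.le.trans hY]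
  have hτ2 : τ^2 ≤ 2 * Real.log z := by
    have h : τ^2 = 1 - (z^2)⁻¹ := by
      rw [hτ_def, div_pow, ht]; field_simp
    linarith [h.le.trans hZ]
  have huστ : u = σ * τ := by
    rw [hu_def, hσ_def, hτ_def]; field_simp
  have hmain : (c-a-b)*u ≤ 2*a*Real.log y + 2*b*Real.log z := by
    have h1 : (c-a-b)*u ≤ 2*sa*sb*(σ*τ) := by
      rw [huστ]
      exact mul_le_mul_of_nonneg_right hcab (mul_nonneg hσ0 hτ0)
    have h2 : 2*sa*sb*(σ*τ) ≤ a*σ^2 + b*τ^2 := by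
      have h := amgm_aux sa sb σ τ
      rw [hsa, hsb] at h
      exact h
    have h3 : a*σ^2 ≤ a*(2*Real.log y) := mul_le_mul_of_nonneg_left hσ2 ha
    have h4 : b*τ^2 ≤ b*(2*Real.log z) := mul_le_mul_of_nonneg_left hτ2 hb
    linarith
  rw [Real.rpow_def_of_pos hx0, Real.rpow_def_of_pos hy0, Real.rpow_def_of_pos hz0,
    ← Real.exp_add, ← Real.exp_add, Real.exp_le_one_iff]
  have h1 : (c-a-b) * Real.log x ≤ (c-a-b) * (Real.log y + Real.log z + u) :=
    mul_le_mul_of_nonneg_left hlog1 hcab0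
  linarith [h1, hmain]

noncomputable def Jmat : Matrix (Fin 3) (Fin 3) ℝ := Matrix.of fun _ _ => (1:ℝ)

lemma Jmat_card (hM : Jmat.IsHermitian) :
    (Finset.univ.filter fun i => 0 < hM.eigenvalues i).card ≤ 1 := by
  rw [Finset.card_le_one]
  intro i hi j hj
  by_contra hij
  simp only [Finset.mem_filter, Finset.mem_univ, true_and] at hi hj
  set B := hM.eigenvectorBasis with hB
  have hconst : ∀ (k : Fin 3), 0 < hM.eigenvalues k → ∀ s : Fin 3,
      hM.eigenvalues k * (B k) s = ∑ t, (B k) t := by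
    intro k hk s
    have h := congrFun (hM.mulVec_eigenvectorBasis k) s
    have hmv : (Jmat *ᵥ ⇑(B k)) s = ∑ t, (B k) t := by
      simp [Jmat, Matrix.mulVec, dotProduct]
    rw [hmv] at h
    simp only [Pi.smul_apply, smul_eq_mul] at h
    exact h.symm
  have hci : ∀ s, (B i) s = (B i) 0 := by
    intro s
    have h1 := hconst i hi s
    have h2 := hconst i hi 0
    exact mul_left_cancel₀ (ne_of_gt hi) (h1.trans h2.symm)
  have hcj : ∀ s, (B j) s = (B j) 0 := by
    intro s
    have h1 := hconst j hj s
    have h2 := hconst j hj 0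
    exact mul_left_cancel₀ (ne_of_gt hj) (h1.trans h2.symm)
  have horth : (inner ℝ (B i) (B j) : ℝ) = 0 := B.orthonormal.2 hij
  have hni : (inner ℝ (B i) (B i) : ℝ) = 1 := by
    rw [real_inner_self_eq_norm_sq, B.orthonormal.1 i]; norm_num
  have hnj : (inner ℝ (B j) (B j) : ℝ) = 1 := by
    rw [real_inner_self_eq_norm_sq, B.orthonormal.1 j]; norm_num
  rw [PiLp.inner_apply] at horth hni hnj
  simp only [RCLike.inner_apply, conj_trivial, Fin.sum_univ_three] at horth hni hnj
  simp only [hci 1, hci 2, hcj 1, hcj 2] at horth hni hnj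
  nlinarith [horth, hni, hnj]

end Aux

theorem optimal_constant_inside_circle (a b c : ℝ) (ha : 0 ≤ a) (hb : 0 ≤ b) (hc : 0 ≤ c)
    (habc : a + b + c = 1)
    (hdisc : a ^ 2 + b ^ 2 + c ^ 2 - 2*a*b - 2*a*c - 2*b*c ≤ 0) :
    (∀ M : Matrix (Fin 3) (Fin 3) ℝ,
        IsLorentzian M → (∀ i, M i i = 1) → (∀ i j, 0 < M i j) →
        M 0 1 ^ (c - a - b) * M 0 2 ^ (b - a - c) * M 1 2 ^ (a - b - c) ≤ 1) ∧
    (∃ M : Matrix (Fin 3) (Fin 3) ℝ,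
        IsLorentzian M ∧ (∀ i, M i i = 1) ∧ (∀ i j, 0 < M i j) ∧
        M 0 1 ^ (c - a - b) * M 0 2 ^ (b - a - c) * M 1 2 ^ (a - b - c) = 1) := by
  constructor
  · intro M hL hdiag hpos
    obtain ⟨hsymm, -, hcard0⟩ := hL
    have hH : M.IsHermitian := by
      rw [Matrix.IsHermitian]
      ext i j
      rw [Matrix.conjTranspose_apply, star_trivial]
      exact hsymm.apply i j
    have hcard := hcard0 hH
    have e10 : M 1 0 = M 0 1 := hsymm.apply 0 1
    have e20 : M 2 0 = M 0 2 := hsymm.apply 0 2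
    have e21 : M 2 1 = M 1 2 := hsymm.apply 1 2
    have d0 := hdiag 0; have d1 := hdiag 1; have d2 := hdiag 2
    have p01 := hpos 0 1; have p02 := hpos 0 2; have p12 := hpos 1 2
    -- off-diagonal entries are at least 1
    have hx1 : 1 ≤ M 0 1 := by
      have hB : (![1,1,0] : Fin 3 → ℝ) ⬝ᵥ (M *ᵥ ![1,-1,0]) = 0 := by
        simp [dotProduct, Matrix.mulVec, Fin.sum_univ_three, e10, d0, d1]
      have hv : 0 < (![1,1,0] : Fin 3 → ℝ) ⬝ᵥ (M *ᵥ ![1,1,0]) := by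
        simp [dotProduct, Matrix.mulVec, Fin.sum_univ_three, e10, d0, d1]
        linarith
      have hw := quad_nonpos_aux hH hcard _ _ hB hv
      have hwval : (![1,-1,0] : Fin 3 → ℝ) ⬝ᵥ (M *ᵥ ![1,-1,0]) = 2 - 2 * M 0 1 := by
        simp [dotProduct, Matrix.mulVec, Fin.sum_univ_three, e10, d0, d1]
        ring
      rw [hwval] at hw
      linarith
    have hy1 : 1 ≤ M 0 2 := by
      have hB : (![1,0,1] : Fin 3 → ℝ) ⬝ᵥ (M *ᵥ ![1,0,-1]) = 0 := by
        simp [dotProduct, Matrix.mulVec, Fin.sum_univ_three, e20, d0, d2]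
      have hv : 0 < (![1,0,1] : Fin 3 → ℝ) ⬝ᵥ (M *ᵥ ![1,0,1]) := by
        simp [dotProduct, Matrix.mulVec, Fin.sum_univ_three, e20, d0, d2]
        linarith
      have hw := quad_nonpos_aux hH hcard _ _ hB hv
      have hwval : (![1,0,-1] : Fin 3 → ℝ) ⬝ᵥ (M *ᵥ ![1,0,-1]) = 2 - 2 * M 0 2 := by
        simp [dotProduct, Matrix.mulVec, Fin.sum_univ_three, e20, d0, d2]
        ring
      rw [hwval] at hw
      linarith
    have hz1 : 1 ≤ M 1 2 := by
      have hB : (![0,1,1] : Fin 3 → ℝ) ⬝ᵥ (M *ᵥ ![0,1,-1]) = 0 := by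
        simp [dotProduct, Matrix.mulVec, Fin.sum_univ_three, e21, d1, d2]
      have hv : 0 < (![0,1,1] : Fin 3 → ℝ) ⬝ᵥ (M *ᵥ ![0,1,1]) := by
        simp [dotProduct, Matrix.mulVec, Fin.sum_univ_three, e21, d1, d2]
        linarith
      have hw := quad_nonpos_aux hH hcard _ _ hB hv
      have hwval : (![0,1,-1] : Fin 3 → ℝ) ⬝ᵥ (M *ᵥ ![0,1,-1]) = 2 - 2 * M 1 2 := by
        simp [dotProduct, Matrix.mulVec, Fin.sum_univ_three, e21, d1, d2]
        ring
      rw [hwval] at hw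
      linarith
    -- determinant is nonnegative
    have htr : M.trace = 3 := by
      rw [Matrix.trace_fin_three, d0, d1, d2]; norm_num
    have hdet0 : 0 ≤ M.det := det_nonneg_aux hH hcard htr
    have hdetM : M.det = 1 + 2*(M 0 1 * M 0 2 * M 1 2) - M 0 1^2 - M 0 2^2 - M 1 2^2 := by
      rw [Matrix.det_fin_three, e10, e20, e21, d0, d1, d2]; ring
    have hdet2 : M 0 1^2 + M 0 2^2 + M 1 2^2 ≤ 1 + 2*(M 0 1)*(M 0 2)*(M 1 2) := by
      rw [hdetM] at hdet0; linarith
    rcases le_or_gt (1/2 : ℝ) c with hc2 | hc2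
    · exact main_ineq_aux a b c _ _ _ ha hb habc hdisc hx1 hy1 hz1 (by linarith) hc2
    rcases le_or_gt (1/2 : ℝ) b with hb2 | hb2
    · have h := main_ineq_aux a c b (M 0 2) (M 0 1) (M 1 2) ha hc (by linarith)
        (by linarith [hdisc]) hy1 hx1 hz1 (by nlinarith [hdet2]) hb2
      rw [show (a - b - c : ℝ) = a - c - b by ring,
        mul_comm (M 0 1 ^ (c-a-b)) (M 0 2 ^ (b-a-c))]
      exact h
    rcases le_or_gt (1/2 : ℝ) a with ha2 | ha2
    · have h := main_ineq_aux b c a (M 1 2) (M 0 1) (M 0 2) hb hc (by linarith)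
        (by linarith [hdisc]) hz1 hx1 hy1 (by nlinarith [hdet2]) ha2
      rw [show (c - a - b : ℝ) = c - b - a by ring,
        show (b - a - c : ℝ) = b - c - a by ring]
      rw [mul_rotate] at h
      exact h
    · -- all exponents nonpositive
      have h1 : M 0 1 ^ (c-a-b) ≤ 1 :=
        Real.rpow_le_one_of_one_le_of_nonpos hx1 (by linarith)
      have h2 : M 0 2 ^ (b-a-c) ≤ 1 :=
        Real.rpow_le_one_of_one_le_of_nonpos hy1 (by linarith)
      have h3 : M 1 2 ^ (a-b-c) ≤ 1 :=
        Real.rpow_le_one_of_one_le_of_nonpos hz1 (by linarith)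
      have p2 : 0 ≤ M 0 2 ^ (b-a-c) := Real.rpow_nonneg (by linarith) _
      have p3 : 0 ≤ M 1 2 ^ (a-b-c) := Real.rpow_nonneg (by linarith) _
      calc M 0 1 ^ (c-a-b) * M 0 2 ^ (b-a-c) * M 1 2 ^ (a-b-c)
          ≤ 1 * 1 * 1 := by
            apply mul_le_mul (mul_le_mul h1 h2 p2 (by linarith)) h3 p3 (by norm_num)
        _ = 1 := by norm_num
  · refine ⟨Jmat, ⟨?_, ?_, Jmat_card⟩, ?_, ?_, ?_⟩
    · ext i j; rfl
    · intro i j; norm_num [Jmat]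
    · intro i; rfl
    · intro i j; norm_num [Jmat]
    · show (1:ℝ) ^ (c - a - b) * (1:ℝ) ^ (b - a - c) * (1:ℝ) ^ (a - b - c) = 1
      simp [Real.one_rpow]
end

section
/- Let a, b, c be nonnegative real numbers with a + b + c = 1, a ≥ b, a ≥ c, and a² + b² + c² − 2ab − 2ac − 2bc ≥ 0. Then the supremum of p_{12}^{c−a−b}·p_{13}^{b−a−c}·p_{23}^{a−b−c} over all normalized 3×3 Lorentzian matrices (p_{ij}) with positive entries equals 2 · a^a · b^b · c^c · (2a−1)^{2a−1} · (1−2b)^{2b−1} · (1−2c)^{2c−1} (with the convention 0^0 = 1). -/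
namespace LorentzAux
open Matrix Finset Real Filter

lemma dot_eig {M : Matrix (Fin 3) (Fin 3) ℝ} (hherm : M.IsHermitian) (i j : Fin 3) :
    (⇑(hherm.eigenvectorBasis i) : Fin 3 → ℝ) ⬝ᵥ ⇑(hherm.eigenvectorBasis j)
      = if i = j then 1 else 0 := by
  have h := orthonormal_iff_ite.mp hherm.eigenvectorBasis.orthonormal i j
  rw [PiLp.inner_apply] at h
  simpa [dotProduct, RCLike.inner_apply, mul_comm] using h


lemma exists_null_combo {M : Matrix (Fin 3) (Fin 3) ℝ} (hherm : M.IsHermitian)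
    {s t : Fin 3} (hst : s ≠ t) (w : Fin 3 → ℝ) :
    ∃ x : Fin 3 → ℝ, w ⬝ᵥ x = 0 ∧ 0 < x ⬝ᵥ x ∧
      min (hherm.eigenvalues s) (hherm.eigenvalues t) * (x ⬝ᵥ x) ≤ x ⬝ᵥ (M *ᵥ x) ∧
      x ⬝ᵥ (M *ᵥ x) ≤ max (hherm.eigenvalues s) (hherm.eigenvalues t) * (x ⬝ᵥ x) := by
  classical
  set vs : Fin 3 → ℝ := ⇑(hherm.eigenvectorBasis s) with hvs
  set vt : Fin 3 → ℝ := ⇑(hherm.eigenvectorBasis t) with hvt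
  have hss : vs ⬝ᵥ vs = 1 := by simpa using dot_eig hherm s s
  have htt : vt ⬝ᵥ vt = 1 := by simpa using dot_eig hherm t t
  have hstd : vs ⬝ᵥ vt = 0 := by simpa [hst] using dot_eig hherm s t
  have htsd : vt ⬝ᵥ vs = 0 := by simpa [hst.symm] using dot_eig hherm t s
  have hMs : M *ᵥ vs = hherm.eigenvalues s • vs := hherm.mulVec_eigenvectorBasis s
  have hMt : M *ᵥ vt = hherm.eigenvalues t • vt := hherm.mulVec_eigenvectorBasis t
  set ls := hherm.eigenvalues s
  set lt := hherm.eigenvalues t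
  obtain ⟨α, β, hw, hne⟩ : ∃ α β : ℝ, α * (w ⬝ᵥ vs) + β * (w ⬝ᵥ vt) = 0 ∧ 0 < α^2 + β^2 := by
    by_cases h : w ⬝ᵥ vs = 0
    · exact ⟨1, 0, by simp [h], by norm_num⟩
    · refine ⟨w ⬝ᵥ vt, -(w ⬝ᵥ vs), by ring, ?_⟩
      have : (w ⬝ᵥ vs)^2 > 0 := by positivity
      nlinarith [sq_nonneg (w ⬝ᵥ vt)]
  refine ⟨α • vs + β • vt, ?_, ?_, ?_, ?_⟩
  · rw [dotProduct_add, dotProduct_smul, dotProduct_smul, smul_eq_mul, smul_eq_mul, hw]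
  · have : (α • vs + β • vt) ⬝ᵥ (α • vs + β • vt) = α^2 + β^2 := by
      simp [dotProduct_add, add_dotProduct, hss, htt, hstd, htsd]; ring
    rw [this]; exact hne
  · have hq : (α • vs + β • vt) ⬝ᵥ (M *ᵥ (α • vs + β • vt)) = ls * α^2 + lt * β^2 := by
      rw [mulVec_add, mulVec_smul, mulVec_smul, hMs, hMt]
      simp [dotProduct_add, add_dotProduct, smul_smul, hss, htt, hstd, htsd]
      ring
    have hxx : (α • vs + β • vt) ⬝ᵥ (α • vs + β • vt) = α^2 + β^2 := by
      simp [dotProduct_add, add_dotProduct, hss, htt, hstd, htsd]; ring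
    rw [hq, hxx]
    have h1 : min ls lt ≤ ls := min_le_left _ _
    have h2 : min ls lt ≤ lt := min_le_right _ _
    nlinarith [sq_nonneg α, sq_nonneg β]
  · have hq : (α • vs + β • vt) ⬝ᵥ (M *ᵥ (α • vs + β • vt)) = ls * α^2 + lt * β^2 := by
      rw [mulVec_add, mulVec_smul, mulVec_smul, hMs, hMt]
      simp [dotProduct_add, add_dotProduct, smul_smul, hss, htt, hstd, htsd]
      ring
    have hxx : (α • vs + β • vt) ⬝ᵥ (α • vs + β • vt) = α^2 + β^2 := by
      simp [dotProduct_add, add_dotProduct, hss, htt, hstd, htsd]; ring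
    rw [hq, hxx]
    have h1 : ls ≤ max ls lt := le_max_left _ _
    have h2 : lt ≤ max ls lt := le_max_right _ _
    nlinarith [sq_nonneg α, sq_nonneg β]

lemma trace_eq_sum_eig {M : Matrix (Fin 3) (Fin 3) ℝ} (hherm : M.IsHermitian) :
    M.trace = ∑ i, hherm.eigenvalues i := by
  have h := hherm.spectral_theorem
  calc M.trace = ((hherm.eigenvectorUnitary : Matrix (Fin 3) (Fin 3) ℝ) *
        diagonal (RCLike.ofReal ∘ hherm.eigenvalues) *
        (star (hherm.eigenvectorUnitary : Matrix (Fin 3) (Fin 3) ℝ))).trace := by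
          exact congrArg Matrix.trace (h.trans (Unitary.conjStarAlgAut_apply _ _))
    _ = ((star (hherm.eigenvectorUnitary : Matrix (Fin 3) (Fin 3) ℝ)) *
        ((hherm.eigenvectorUnitary : Matrix (Fin 3) (Fin 3) ℝ)) *
        diagonal (RCLike.ofReal ∘ hherm.eigenvalues)).trace := by
        rw [trace_mul_cycle]
    _ = (diagonal (RCLike.ofReal ∘ hherm.eigenvalues)).trace := by
        rw [Unitary.coe_star_mul_self, one_mul]
    _ = ∑ i, hherm.eigenvalues i := by simp [trace_diagonal]

/-- matrix built from positive vector g -/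
noncomputable def Mof (g : Fin 3 → ℝ) : Matrix (Fin 3) (Fin 3) ℝ :=
  Matrix.of fun i j => (g i / g j + g j / g i) / 2

lemma Mof_lorentzian (g : Fin 3 → ℝ) (hg : ∀ i, 0 < g i) : IsLorentzian (Mof g) := by
  have hne : ∀ i, g i ≠ 0 := fun i => (hg i).ne'
  refine ⟨?_, ?_, ?_⟩
  · ext i j
    simp only [Matrix.transpose_apply, Mof, Matrix.of_apply]
    ring
  · intro i j
    have hi := hg i; have hj := hg j
    simp only [Mof, Matrix.of_apply]
    positivity
  · intro hM
    by_contra hcard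
    push_neg at hcard
    obtain ⟨s, hs, t, ht, hst⟩ := Finset.one_lt_card.mp hcard
    have hls : 0 < hM.eigenvalues s := (Finset.mem_filter.mp hs).2
    have hlt : 0 < hM.eigenvalues t := (Finset.mem_filter.mp ht).2
    set w : Fin 3 → ℝ := fun i => (g i + (g i)⁻¹) / 2 with hw
    set z : Fin 3 → ℝ := fun i => (g i - (g i)⁻¹) / 2 with hz
    have hMdef : ∀ i j, Mof g i j = w i * w j - z i * z j := by
      intro i j
      simp only [Mof, Matrix.of_apply, hw, hz]
      field_simp
      ring
    obtain ⟨x, hwx, hxx, hmin, hmax⟩ := exists_null_combo hM hst w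
    have h1 : 0 < x ⬝ᵥ (Mof g *ᵥ x) := by
      refine lt_of_lt_of_le ?_ hmin
      exact mul_pos (lt_min hls hlt) hxx
    have h2 : x ⬝ᵥ (Mof g *ᵥ x) = (w ⬝ᵥ x)^2 - (z ⬝ᵥ x)^2 := by
      simp only [dotProduct, Matrix.mulVec, Fin.sum_univ_three, hMdef]
      ring
    rw [h2, hwx] at h1
    nlinarith [sq_nonneg (z ⬝ᵥ x)]

lemma Mof_diag (g : Fin 3 → ℝ) (hg : ∀ i, 0 < g i) : ∀ i, Mof g i i = 1 := by
  intro i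
  simp only [Mof, Matrix.of_apply, div_self (hg i).ne']
  norm_num

lemma Mof_pos (g : Fin 3 → ℝ) (hg : ∀ i, 0 < g i) : ∀ i j, 0 < Mof g i j := by
  intro i j
  have hi := hg i; have hj := hg j
  simp only [Mof, Matrix.of_apply]
  positivity

lemma lorentzian_constraints {M : Matrix (Fin 3) (Fin 3) ℝ} (hL : IsLorentzian M)
    (hdiag : ∀ i, M i i = 1) (hpos : ∀ i j, 0 < M i j) :
    1 ≤ M 0 1 ∧ 1 ≤ M 0 2 ∧ 1 ≤ M 1 2 ∧
      (M 0 1)^2 + (M 0 2)^2 + (M 1 2)^2 ≤ 1 + 2 * (M 0 1) * (M 0 2) * (M 1 2) := by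
  obtain ⟨hsym, hnn, hcard⟩ := hL
  have hherm : M.IsHermitian := by
    rw [Matrix.IsHermitian, Matrix.conjTranspose_eq_transpose_of_trivial]; exact hsym
  have hcard' := hcard hherm
  obtain ⟨s, hs, t, ht, hst⟩ : ∃ s ∈ Finset.univ.filter (fun i => ¬ 0 < hherm.eigenvalues i),
      ∃ t ∈ Finset.univ.filter (fun i => ¬ 0 < hherm.eigenvalues i), s ≠ t := by
    apply Finset.one_lt_card.mp
    have := Finset.card_filter_add_card_filter_not
      (s := (Finset.univ : Finset (Fin 3))) (p := fun i => 0 < hherm.eigenvalues i)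
    simp only [Finset.card_univ, Fintype.card_fin] at this
    omega
  have hls : hherm.eigenvalues s ≤ 0 := le_of_not_gt (Finset.mem_filter.mp hs).2
  have hlt : hherm.eigenvalues t ≤ 0 := le_of_not_gt (Finset.mem_filter.mp ht).2
  have hsymm' : ∀ i j, M i j = M j i := by
    intro i j; conv_lhs => rw [← hsym]
    rfl
  have key : ∀ k i j : Fin 3, k ≠ i → k ≠ j → i ≠ j → 1 ≤ M i j := by
    intro k i j hki hkj hij
    by_contra hlt1
    push_neg at hlt1
    obtain ⟨x, hwx, hxx, hmin, hmax⟩ := exists_null_combo hherm hst (Pi.single k 1)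
    have hxk : x k = 0 := by simpa using hwx
    have hquad : x ⬝ᵥ (M *ᵥ x) ≤ 0 := by
      refine hmax.trans ?_
      exact mul_nonpos_of_nonpos_of_nonneg (max_le hls hlt) hxx.le
    have huniv : ({k, i, j} : Finset (Fin 3)) = Finset.univ := by
      apply Finset.eq_univ_of_card
      rw [Finset.card_insert_of_notMem (by simp [hki, hkj]),
        Finset.card_insert_of_notMem (by simp [hij]), Finset.card_singleton]
      simp
    have hsum : ∀ f : Fin 3 → ℝ, (∑ m, f m) = f k + f i + f j := by
      intro f
      rw [← huniv, Finset.sum_insert (by simp [hki, hkj]),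
        Finset.sum_insert (by simp [hij]), Finset.sum_singleton]
      ring
    have hexp : x ⬝ᵥ (M *ᵥ x) = x i^2 + x j^2 + (M i j + M j i) * (x i * x j) := by
      simp only [dotProduct, Matrix.mulVec, hsum, hxk, hdiag]
      ring
    have hexp2 : x ⬝ᵥ x = x i^2 + x j^2 := by
      simp only [dotProduct, hsum, hxk]
      ring
    rw [hexp] at hquad
    rw [hexp2] at hxx
    have hji : M j i = M i j := hsymm' j i
    rw [hji] at hquad
    nlinarith [sq_nonneg (x i + x j), sq_nonneg (x i - x j), hnn i j,
      mul_nonneg (hnn i j) (sq_nonneg (x i + x j))]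
  refine ⟨key 2 0 1 (by decide) (by decide) (by decide),
    key 1 0 2 (by decide) (by decide) (by decide),
    key 0 1 2 (by decide) (by decide) (by decide), ?_⟩
  -- det ≥ 0
  have hdet : 0 ≤ M.det := by
    have hprod : M.det = ∏ i, hherm.eigenvalues i := by
      have := hherm.det_eq_prod_eigenvalues
      simpa using this
    have htr : (3:ℝ) = ∑ i, hherm.eigenvalues i := by
      have := trace_eq_sum_eig hherm
      rw [← this]
      simp [Matrix.trace, Matrix.diag, Fin.sum_univ_three, hdiag]
    rw [hprod]
    set e := hherm.eigenvalues
    fin_cases s <;> fin_cases t <;> simp_all [Fin.prod_univ_three, Fin.sum_univ_three] <;>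
      nlinarith [hs, ht, htr, mul_nonneg (neg_nonneg.2 hs) (neg_nonneg.2 ht)]
  have hdet2 : M.det = 1 + 2 * (M 0 1) * (M 0 2) * (M 1 2)
      - (M 0 1)^2 - (M 0 2)^2 - (M 1 2)^2 := by
    rw [Matrix.det_fin_three]
    rw [hdiag 0, hdiag 1, hdiag 2, hsymm' 1 0, hsymm' 2 0, hsymm' 2 1]
    ring
  linarith [hdet, hdet2.symm.le]

lemma log_eq_imp {x y : ℝ} (hx : 0 < x) (hy : 0 < y) (h : Real.log x = Real.log y) : x = y := by
  rw [← Real.exp_log hx, ← Real.exp_log hy, h]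

lemma core0 {a b T1 T2 : ℝ} (hb : 0 ≤ b) (hba : b ≤ a) (hab1 : a + b = 1)
    (hT1 : 0 ≤ T1) (hT1' : T1 ≤ 1) (hT2 : 0 ≤ T2) (hT2' : T2 ≤ 1) :
    (1 + T1*T2) ^ (2*a-1) * (1 - T1^2) ^ b ≤ 2 * a ^ a * b ^ b := by
  have ha2 : (1:ℝ)/2 ≤ a := by linarith
  have hg : 0 ≤ 2*a - 1 := by linarith
  have hX1 : (0:ℝ) ≤ 1 + T1*T2 := by positivity
  have hX2 : (0:ℝ) ≤ 1 - T1^2 := by nlinarith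
  rcases eq_or_lt_of_le hg with hg0 | hgpos
  · have ha : a = 1/2 := by linarith
    have hbv : b = 1/2 := by linarith
    rw [← hg0, Real.rpow_zero, one_mul, ha, hbv]
    have h12 : ((1:ℝ)/2) ^ ((1:ℝ)/2) * ((1:ℝ)/2) ^ ((1:ℝ)/2) = ((1:ℝ)/2) ^ ((1:ℝ)/2 + 1/2) :=
      (Real.rpow_add (by norm_num) _ _).symm
    rw [mul_assoc, h12]
    norm_num
    exact Real.rpow_le_one hX2 (by nlinarith) (by norm_num)
  · rcases eq_or_lt_of_le hb with hb0 | hbpos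
    · have hb' : b = 0 := hb0.symm
      subst hb'
      have ha : a = 1 := by linarith
      subst ha
      rw [Real.rpow_zero, mul_one, Real.rpow_zero, mul_one, Real.one_rpow, mul_one]
      rw [show ((2:ℝ)-1) = 1 by norm_num, Real.rpow_one]
      nlinarith
    · have hapos : 0 < a := by linarith
      have hsum : (2*a-1)/a + b/a = 1 := by field_simp; linarith
      have hamgm := Real.geom_mean_le_arith_mean2_weighted
        (by positivity : (0:ℝ) ≤ (2*a-1)/a) (by positivity : (0:ℝ) ≤ b/a)
        (by positivity : (0:ℝ) ≤ (1+T1*T2)/(2*a)) (by positivity : (0:ℝ) ≤ (1-T1^2)/(4*a*b)) hsum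
      have key : 2*(2*a-1)*(1+T1*T2) + (1 - T1^2) ≤ 4*a^2 := by
        nlinarith [sq_nonneg (T1 - (2*a-1)*T2), mul_nonneg (sq_nonneg (2*a-1))
          (by nlinarith : (0:ℝ) ≤ 1 - T2^2)]
      have harith : (2*a-1)/a * ((1+T1*T2)/(2*a)) + b/a * ((1-T1^2)/(4*a*b)) ≤ 1 := by
        have heq : (2*a-1)/a * ((1+T1*T2)/(2*a)) + b/a * ((1-T1^2)/(4*a*b))
            = (2*(2*a-1)*(1+T1*T2) + (1 - T1^2)) / (4*a^2) := by
          field_simp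
          ring
        rw [heq, div_le_one (by positivity)]
        nlinarith [key]
      have hP : ((1+T1*T2)/(2*a)) ^ ((2*a-1)/a) * ((1-T1^2)/(4*a*b)) ^ (b/a) ≤ 1 :=
        hamgm.trans harith
      have hPa : (((1+T1*T2)/(2*a)) ^ ((2*a-1)/a) * ((1-T1^2)/(4*a*b)) ^ (b/a)) ^ a ≤ 1 :=
        Real.rpow_le_one (by positivity) hP hapos.le
      have hexpand : (1 + T1*T2) ^ (2*a-1) * (1 - T1^2) ^ b
          = (((1+T1*T2)/(2*a)) ^ ((2*a-1)/a) * ((1-T1^2)/(4*a*b)) ^ (b/a)) ^ a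
            * ((2*a) ^ (2*a-1) * (4*a*b) ^ b) := by
        rw [Real.mul_rpow (by positivity) (by positivity),
          ← Real.rpow_mul (by positivity), ← Real.rpow_mul (by positivity),
          div_mul_cancel₀ _ hapos.ne', div_mul_cancel₀ _ hapos.ne',
          Real.div_rpow hX1 (by positivity), Real.div_rpow hX2 (by positivity)]
        have h1 : ((2*a) ^ (2*a-1)) ≠ 0 := (Real.rpow_pos_of_pos (by positivity) _).ne'
        have h2 : ((4*a*b) ^ b) ≠ 0 := (Real.rpow_pos_of_pos (by positivity) _).ne'
        field_simp
      have hfinal : (2*a) ^ (2*a-1) * (4*a*b) ^ b = 2 * a ^ a * b ^ b := by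
        apply log_eq_imp (by positivity) (by positivity)
        have l4 : Real.log 4 = 2 * Real.log 2 := by
          rw [show (4:ℝ) = 2^2 by norm_num, Real.log_pow]; norm_num
        rw [Real.log_mul (Real.rpow_pos_of_pos (by positivity) _).ne'
            (Real.rpow_pos_of_pos (by positivity) _).ne',
          Real.log_rpow (by positivity), Real.log_rpow (by positivity),
          Real.log_mul (by norm_num : (2:ℝ) ≠ 0) hapos.ne',
          Real.log_mul (by positivity : (4*a:ℝ) ≠ 0) hbpos.ne',
          Real.log_mul (by norm_num : (4:ℝ) ≠ 0) hapos.ne', l4,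
          Real.log_mul (by positivity : (2 * a^a :ℝ) ≠ 0) (Real.rpow_pos_of_pos hbpos _).ne',
          Real.log_mul (by norm_num : (2:ℝ) ≠ 0) (Real.rpow_pos_of_pos hapos _).ne',
          Real.log_rpow hapos, Real.log_rpow hbpos]
        linear_combination (2*Real.log 2 + Real.log a) * hab1
      calc (1 + T1*T2) ^ (2*a-1) * (1 - T1^2) ^ b
          = (((1+T1*T2)/(2*a)) ^ ((2*a-1)/a) * ((1-T1^2)/(4*a*b)) ^ (b/a)) ^ a
            * ((2*a) ^ (2*a-1) * (4*a*b) ^ b) := hexpand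
        _ ≤ 1 * ((2*a) ^ (2*a-1) * (4*a*b) ^ b) :=
            mul_le_mul_of_nonneg_right hPa (by positivity)
        _ = 2 * a ^ a * b ^ b := by rw [one_mul, hfinal]

section
variable {a b c : ℝ}

lemma gamma_nonneg (ha : 0 ≤ a) (hb : 0 ≤ b) (hc : 0 ≤ c) (habc : a + b + c = 1)
    (hab : b ≤ a) (hac : c ≤ a)
    (hdisc : 0 ≤ a ^ 2 + b ^ 2 + c ^ 2 - 2*a*b - 2*a*c - 2*b*c) : 0 ≤ 2*a - 1 := by
  have h1 : 0 ≤ (a - b + c) * (a + b - c) := by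
    apply mul_nonneg <;> linarith
  have h3 : (1:ℝ)/3 ≤ a := by linarith
  nlinarith [hdisc, h1, h3]

lemma B_pos (hc : 0 < c) (hab : b ≤ a) (habc : a + b + c = 1) : 0 < 1 - 2*b := by linarith

set_option maxHeartbeats 1000000 in
lemma core_pos (ha : 0 ≤ a) (hb : 0 < b) (hc : 0 < c) (habc : a + b + c = 1)
    (hab : b ≤ a) (hac : c ≤ a)
    (hdisc : 0 ≤ a ^ 2 + b ^ 2 + c ^ 2 - 2*a*b - 2*a*c - 2*b*c)
    {T1 T2 : ℝ} (hT1 : 0 ≤ T1) (hT1' : T1 ≤ 1) (hT2 : 0 ≤ T2) (hT2' : T2 ≤ 1) :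
    (1 + T1*T2) ^ (2*a-1) * (1 - T1^2) ^ b * (1 - T2^2) ^ c
      ≤ 2 * a ^ a * b ^ b * c ^ c * (2*a - 1) ^ (2*a - 1) *
        (1 - 2*b) ^ (2*b - 1) * (1 - 2*c) ^ (2*c - 1) := by
  have hg : 0 ≤ 2*a - 1 := gamma_nonneg ha hb.le hc.le habc hab hac hdisc
  have hgpos : 0 < 2*a - 1 := by
    rcases eq_or_lt_of_le hg with h | h
    · exfalso; nlinarith [hdisc, mul_pos hb hc]
    · exact h
  have hBpos : 0 < 1 - 2*b := by linarith
  have hCpos : 0 < 1 - 2*c := by linarith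
  have hapos : 0 < a := by linarith
  have hX1 : (0:ℝ) ≤ 1 + T1*T2 := by positivity
  have hX2 : (0:ℝ) ≤ 1 - T1^2 := by nlinarith
  have hX3 : (0:ℝ) ≤ 1 - T2^2 := by nlinarith
  set l1 : ℝ := 2*a*(2*a-1)/((1-2*b)*(1-2*c)) with hl1
  set l2 : ℝ := 4*a*b/(1-2*c)^2 with hl2
  set l3 : ℝ := 4*a*c/(1-2*b)^2 with hl3
  have hl1p : 0 < l1 := by rw [hl1]; positivity
  have hl2p : 0 < l2 := by rw [hl2]; positivity
  have hl3p : 0 < l3 := by rw [hl3]; positivity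
  have hsum : (2*a-1)/a + b/a + c/a = 1 := by field_simp; linarith
  have hamgm := Real.geom_mean_le_arith_mean3_weighted
    (by positivity : (0:ℝ) ≤ (2*a-1)/a) (by positivity : (0:ℝ) ≤ b/a)
    (by positivity : (0:ℝ) ≤ c/a)
    (by positivity : (0:ℝ) ≤ (1+T1*T2)/l1) (by positivity : (0:ℝ) ≤ (1-T1^2)/l2)
    (by positivity : (0:ℝ) ≤ (1-T2^2)/l3) hsum
  have key : 2*((1-2*b)*(1-2*c))*(1+T1*T2) + (1-2*c)^2*(1 - T1^2) + (1-2*b)^2*(1-T2^2)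
      ≤ 4*a^2 := by
    nlinarith [sq_nonneg ((1-2*c)*T1 - (1-2*b)*T2)]
  have harith : (2*a-1)/a * ((1+T1*T2)/l1) + b/a * ((1-T1^2)/l2) + c/a * ((1-T2^2)/l3) ≤ 1 := by
    have heq : (2*a-1)/a * ((1+T1*T2)/l1) + b/a * ((1-T1^2)/l2) + c/a * ((1-T2^2)/l3)
        = (2*((1-2*b)*(1-2*c))*(1+T1*T2) + (1-2*c)^2*(1 - T1^2) + (1-2*b)^2*(1-T2^2))
          / (4*a^2) := by
      rw [hl1, hl2, hl3]
      field_simp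
      ring
    rw [heq, div_le_one (by positivity)]
    linarith [key]
  have hP : ((1+T1*T2)/l1) ^ ((2*a-1)/a) * ((1-T1^2)/l2) ^ (b/a) * ((1-T2^2)/l3) ^ (c/a) ≤ 1 :=
    hamgm.trans harith
  have hPa : (((1+T1*T2)/l1) ^ ((2*a-1)/a) * ((1-T1^2)/l2) ^ (b/a) * ((1-T2^2)/l3) ^ (c/a)) ^ a
      ≤ 1 := Real.rpow_le_one (by positivity) hP hapos.le
  have hexpand : (1 + T1*T2) ^ (2*a-1) * (1 - T1^2) ^ b * (1 - T2^2) ^ c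
      = (((1+T1*T2)/l1) ^ ((2*a-1)/a) * ((1-T1^2)/l2) ^ (b/a) * ((1-T2^2)/l3) ^ (c/a)) ^ a
        * (l1 ^ (2*a-1) * l2 ^ b * l3 ^ c) := by
    rw [Real.mul_rpow (by positivity) (by positivity),
      Real.mul_rpow (by positivity) (by positivity),
      ← Real.rpow_mul (by positivity), ← Real.rpow_mul (by positivity),
      ← Real.rpow_mul (by positivity),
      div_mul_cancel₀ _ hapos.ne', div_mul_cancel₀ _ hapos.ne', div_mul_cancel₀ _ hapos.ne',
      Real.div_rpow hX1 hl1p.le, Real.div_rpow hX2 hl2p.le, Real.div_rpow hX3 hl3p.le]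
    have h1 : (l1 ^ (2*a-1)) ≠ 0 := (Real.rpow_pos_of_pos hl1p _).ne'
    have h2 : (l2 ^ b) ≠ 0 := (Real.rpow_pos_of_pos hl2p _).ne'
    have h3 : (l3 ^ c) ≠ 0 := (Real.rpow_pos_of_pos hl3p _).ne'
    field_simp
  have hfinal : l1 ^ (2*a-1) * l2 ^ b * l3 ^ c
      = 2 * a ^ a * b ^ b * c ^ c * (2*a - 1) ^ (2*a - 1) *
        (1 - 2*b) ^ (2*b - 1) * (1 - 2*c) ^ (2*c - 1) := by
    apply log_eq_imp (by positivity) (by positivity)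
    have l4 : Real.log 4 = 2 * Real.log 2 := by
      rw [show (4:ℝ) = 2^2 by norm_num, Real.log_pow]; norm_num
    have e1 : Real.log (l1 ^ (2*a-1)) = (2*a-1) * (Real.log 2 + Real.log a + Real.log (2*a-1)
        - Real.log (1-2*b) - Real.log (1-2*c)) := by
      rw [hl1, Real.log_rpow hl1p, Real.log_div (by positivity) (by positivity),
        Real.log_mul (by positivity) hgpos.ne', Real.log_mul (by norm_num) hapos.ne',
        Real.log_mul hBpos.ne' hCpos.ne']
      ring
    have e2 : Real.log (l2 ^ b) = b * (2*Real.log 2 + Real.log a + Real.log b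
        - 2*Real.log (1-2*c)) := by
      rw [hl2, Real.log_rpow hl2p, Real.log_div (by positivity) (by positivity),
        Real.log_mul (by positivity) hb.ne', Real.log_mul (by norm_num) hapos.ne',
        Real.log_pow, l4]
      push_cast
      ring
    have e3 : Real.log (l3 ^ c) = c * (2*Real.log 2 + Real.log a + Real.log c
        - 2*Real.log (1-2*b)) := by
      rw [hl3, Real.log_rpow hl3p, Real.log_div (by positivity) (by positivity),
        Real.log_mul (by positivity) hc.ne', Real.log_mul (by norm_num) hapos.ne',
        Real.log_pow, l4]
      push_cast
      ring
    rw [Real.log_mul (by positivity) (Real.rpow_pos_of_pos hl3p _).ne',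
      Real.log_mul (Real.rpow_pos_of_pos hl1p _).ne' (Real.rpow_pos_of_pos hl2p _).ne',
      e1, e2, e3,
      Real.log_mul (by positivity) (Real.rpow_pos_of_pos hCpos _).ne',
      Real.log_mul (by positivity) (Real.rpow_pos_of_pos hBpos _).ne',
      Real.log_mul (by positivity) (Real.rpow_pos_of_pos hgpos _).ne',
      Real.log_mul (by positivity) (Real.rpow_pos_of_pos hc _).ne',
      Real.log_mul (by positivity) (Real.rpow_pos_of_pos hb _).ne',
      Real.log_mul (by norm_num) (Real.rpow_pos_of_pos hapos _).ne',
      Real.log_rpow hapos, Real.log_rpow hb, Real.log_rpow hc, Real.log_rpow hgpos,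
      Real.log_rpow hBpos, Real.log_rpow hCpos]
    linear_combination (2*Real.log 2 + Real.log a - 2*Real.log (1-2*b)
      - 2*Real.log (1-2*c)) * habc
  calc (1 + T1*T2) ^ (2*a-1) * (1 - T1^2) ^ b * (1 - T2^2) ^ c
      = (((1+T1*T2)/l1) ^ ((2*a-1)/a) * ((1-T1^2)/l2) ^ (b/a) * ((1-T2^2)/l3) ^ (c/a)) ^ a
        * (l1 ^ (2*a-1) * l2 ^ b * l3 ^ c) := hexpand
    _ ≤ 1 * (l1 ^ (2*a-1) * l2 ^ b * l3 ^ c) :=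
        mul_le_mul_of_nonneg_right hPa (by positivity)
    _ = _ := by rw [one_mul, hfinal]

lemma S_c0 (hb : 0 ≤ b) (habc : a + b + c = 1) (hab : b ≤ a) (hc0 : c = 0) :
    2 * a ^ a * b ^ b * c ^ c * (2*a - 1) ^ (2*a - 1) *
      (1 - 2*b) ^ (2*b - 1) * (1 - 2*c) ^ (2*c - 1) = 2 * a ^ a * b ^ b := by
  subst hc0
  have hab1 : a + b = 1 := by linarith
  have hBg : 1 - 2*b = 2*a - 1 := by linarith
  rw [show ((0:ℝ)^(0:ℝ)) = 1 from Real.rpow_zero 0]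
  rw [show (1 - 2*(0:ℝ)) = 1 by norm_num, Real.one_rpow, hBg]
  rcases eq_or_lt_of_le (by linarith : (0:ℝ) ≤ 2*a - 1) with hg0 | hgpos
  · rw [← hg0, Real.rpow_zero, show (2*b-1 : ℝ) = 0 by linarith, Real.rpow_zero]
    ring
  · rw [mul_assoc (2 * a ^ a * b ^ b * 1), ← Real.rpow_add hgpos,
      show (2*a-1) + (2*b-1) = 0 by linarith, Real.rpow_zero]
    ring
lemma S_b0 (hc : 0 ≤ c) (habc : a + b + c = 1) (hac : c ≤ a) (hb0 : b = 0) :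
    2 * a ^ a * b ^ b * c ^ c * (2*a - 1) ^ (2*a - 1) *
      (1 - 2*b) ^ (2*b - 1) * (1 - 2*c) ^ (2*c - 1) = 2 * a ^ a * c ^ c := by
  subst hb0
  have hCg : 1 - 2*c = 2*a - 1 := by linarith
  rw [show ((0:ℝ)^(0:ℝ)) = 1 from Real.rpow_zero 0]
  rw [show (1 - 2*(0:ℝ)) = 1 by norm_num, Real.one_rpow, hCg]
  rcases eq_or_lt_of_le (by linarith : (0:ℝ) ≤ 2*a - 1) with hg0 | hgpos
  · rw [← hg0, Real.rpow_zero, show (2*c-1 : ℝ) = 0 by linarith, Real.rpow_zero]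
    ring
  · rw [show 2 * a ^ a * 1 * c ^ c * (2*a-1) ^ (2*a-1) * 1 * (2*a-1) ^ (2*c-1)
        = 2 * a ^ a * c ^ c * ((2*a-1) ^ (2*a-1) * (2*a-1) ^ (2*c-1)) by ring,
      ← Real.rpow_add hgpos, show (2*a-1) + (2*c-1) = 0 by linarith, Real.rpow_zero]
    ring
lemma core (ha : 0 ≤ a) (hb : 0 ≤ b) (hc : 0 ≤ c) (habc : a + b + c = 1)
    (hab : b ≤ a) (hac : c ≤ a)
    (hdisc : 0 ≤ a ^ 2 + b ^ 2 + c ^ 2 - 2*a*b - 2*a*c - 2*b*c)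
    {T1 T2 : ℝ} (hT1 : 0 ≤ T1) (hT1' : T1 ≤ 1) (hT2 : 0 ≤ T2) (hT2' : T2 ≤ 1) :
    (1 + T1*T2) ^ (2*a-1) * (1 - T1^2) ^ b * (1 - T2^2) ^ c
      ≤ 2 * a ^ a * b ^ b * c ^ c * (2*a - 1) ^ (2*a - 1) *
        (1 - 2*b) ^ (2*b - 1) * (1 - 2*c) ^ (2*c - 1) := by
  rcases eq_or_lt_of_le hc with hc0 | hcpos
  · rw [S_c0 hb habc hab hc0.symm, ← hc0, Real.rpow_zero, mul_one]
    exact core0 hb hab (by linarith) hT1 hT1' hT2 hT2'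
  rcases eq_or_lt_of_le hb with hb0 | hbpos
  · rw [S_b0 hc habc hac hb0.symm, ← hb0, Real.rpow_zero, mul_one]
    have := core0 (a := a) (b := c) (T1 := T2) (T2 := T1) hc hac (by linarith)
      hT2 hT2' hT1 hT1'
    rw [mul_comm T2 T1] at this
    exact this
  exact core_pos ha hbpos hcpos habc hab hac hdisc hT1 hT1' hT2 hT2'
end

lemma upper {a b c : ℝ} (ha : 0 ≤ a) (hb : 0 ≤ b) (hc : 0 ≤ c) (habc : a + b + c = 1)
    (hab : b ≤ a) (hac : c ≤ a)
    (hdisc : 0 ≤ a ^ 2 + b ^ 2 + c ^ 2 - 2*a*b - 2*a*c - 2*b*c)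
    {p q r : ℝ} (hp : 1 ≤ p) (hq : 1 ≤ q) (hr : 1 ≤ r)
    (hcon : p^2 + q^2 + r^2 ≤ 1 + 2*p*q*r) :
    p ^ (2*c-1) * q ^ (2*b-1) * r ^ (2*a-1)
      ≤ 2 * a ^ a * b ^ b * c ^ c * (2*a - 1) ^ (2*a - 1) *
        (1 - 2*b) ^ (2*b - 1) * (1 - 2*c) ^ (2*c - 1) := by
  have hg : 0 ≤ 2*a - 1 := gamma_nonneg ha hb hc habc hab hac hdisc
  have hp0 : 0 < p := lt_of_lt_of_le one_pos hp
  have hq0 : 0 < q := lt_of_lt_of_le one_pos hq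
  have hp21 : (0:ℝ) ≤ p^2 - 1 := by nlinarith
  have hq21 : (0:ℝ) ≤ q^2 - 1 := by nlinarith
  set T1 : ℝ := Real.sqrt (p^2 - 1) / p with hT1def
  set T2 : ℝ := Real.sqrt (q^2 - 1) / q with hT2def
  have hT1 : 0 ≤ T1 := by positivity
  have hT2 : 0 ≤ T2 := by positivity
  have hsp : Real.sqrt (p^2-1) ≤ p := by
    calc Real.sqrt (p^2-1) ≤ Real.sqrt (p^2) := Real.sqrt_le_sqrt (by linarith)
      _ = p := Real.sqrt_sq hp0.le
  have hsq : Real.sqrt (q^2-1) ≤ q := by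
    calc Real.sqrt (q^2-1) ≤ Real.sqrt (q^2) := Real.sqrt_le_sqrt (by linarith)
      _ = q := Real.sqrt_sq hq0.le
  have hT1' : T1 ≤ 1 := by rw [hT1def, div_le_one hp0]; exact hsp
  have hT2' : T2 ≤ 1 := by rw [hT2def, div_le_one hq0]; exact hsq
  have hT1sq : 1 - T1^2 = 1/p^2 := by
    rw [hT1def, div_pow, Real.sq_sqrt hp21]
    field_simp
    ring
  have hT2sq : 1 - T2^2 = 1/q^2 := by
    rw [hT2def, div_pow, Real.sq_sqrt hq21]
    field_simp
    ring
  have hrle : r ≤ p*q*(1 + T1*T2) := by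
    have hd : (r - p*q)^2 ≤ (p^2-1)*(q^2-1) := by nlinarith
    have h1 : r - p*q ≤ Real.sqrt ((p^2-1)*(q^2-1)) := by
      calc r - p*q ≤ |r - p*q| := le_abs_self _
        _ = Real.sqrt ((r-p*q)^2) := (Real.sqrt_sq_eq_abs _).symm
        _ ≤ Real.sqrt ((p^2-1)*(q^2-1)) := Real.sqrt_le_sqrt hd
    have h2 : Real.sqrt ((p^2-1)*(q^2-1)) = (p*T1)*(q*T2) := by
      rw [Real.sqrt_mul hp21, hT1def, hT2def]
      field_simp
    nlinarith [h1, h2]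
  have hr0 : (0:ℝ) ≤ r := by linarith
  have hstep : p ^ (2*c-1) * q ^ (2*b-1) * r ^ (2*a-1)
      ≤ p ^ (2*c-1) * q ^ (2*b-1) * (p*q*(1 + T1*T2)) ^ (2*a-1) := by
    apply mul_le_mul_of_nonneg_left (Real.rpow_le_rpow hr0 hrle hg) (by positivity)
  have ha1' : p ^ (-(2*b)) = (1 - T1^2) ^ b := by
    rw [hT1sq, one_div, Real.inv_rpow (by positivity), ← Real.rpow_natCast p 2,
      ← Real.rpow_mul hp0.le, ← Real.rpow_neg hp0.le]
    norm_num
  have ha2' : q ^ (-(2*c)) = (1 - T2^2) ^ c := by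
    rw [hT2sq, one_div, Real.inv_rpow (by positivity), ← Real.rpow_natCast q 2,
      ← Real.rpow_mul hq0.le, ← Real.rpow_neg hq0.le]
    norm_num
  have hexp : p ^ (2*c-1) * q ^ (2*b-1) * (p*q*(1 + T1*T2)) ^ (2*a-1)
      = (1 + T1*T2) ^ (2*a-1) * (1 - T1^2) ^ b * (1 - T2^2) ^ c := by
    have hX1 : (0:ℝ) ≤ 1 + T1*T2 := by positivity
    calc p ^ (2*c-1) * q ^ (2*b-1) * (p*q*(1 + T1*T2)) ^ (2*a-1)
        = (p ^ (2*c-1) * p ^ (2*a-1)) * (q ^ (2*b-1) * q ^ (2*a-1))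
          * (1 + T1*T2) ^ (2*a-1) := by
          rw [Real.mul_rpow (by positivity) hX1, Real.mul_rpow hp0.le hq0.le]
          ring
      _ = p ^ (-(2*b)) * q ^ (-(2*c)) * (1 + T1*T2) ^ (2*a-1) := by
          rw [← Real.rpow_add hp0, ← Real.rpow_add hq0,
            show 2*c-1+(2*a-1) = -(2*b) by linarith,
            show 2*b-1+(2*a-1) = -(2*c) by linarith]
      _ = (1 + T1*T2) ^ (2*a-1) * (1 - T1^2) ^ b * (1 - T2^2) ^ c := by
          rw [ha1', ha2']; ring
  calc p ^ (2*c-1) * q ^ (2*b-1) * r ^ (2*a-1)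
      ≤ p ^ (2*c-1) * q ^ (2*b-1) * (p*q*(1 + T1*T2)) ^ (2*a-1) := hstep
    _ = (1 + T1*T2) ^ (2*a-1) * (1 - T1^2) ^ b * (1 - T2^2) ^ c := hexp
    _ ≤ _ := core ha hb hc habc hab hac hdisc hT1 hT1' hT2 hT2'

lemma exists_opt {a b c : ℝ} (ha : 0 ≤ a) (hb : 0 < b) (hc : 0 < c) (habc : a + b + c = 1)
    (hab : b ≤ a) (hac : c ≤ a)
    (hdisc : 0 ≤ a ^ 2 + b ^ 2 + c ^ 2 - 2*a*b - 2*a*c - 2*b*c) :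
    ∃ M : Matrix (Fin 3) (Fin 3) ℝ, IsLorentzian M ∧ (∀ i, M i i = 1) ∧ (∀ i j, 0 < M i j) ∧
      M 0 1 ^ (2*c-1) * M 0 2 ^ (2*b-1) * M 1 2 ^ (2*a-1)
        = 2 * a ^ a * b ^ b * c ^ c * (2*a - 1) ^ (2*a - 1) *
          (1 - 2*b) ^ (2*b - 1) * (1 - 2*c) ^ (2*c - 1) := by
  have hBpos : 0 < 1 - 2*b := by linarith
  have hCpos : 0 < 1 - 2*c := by linarith
  have hg4bc : (2*a-1)^2 - (a ^ 2 + b ^ 2 + c ^ 2 - 2*a*b - 2*a*c - 2*b*c) = 4*b*c := by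
    linear_combination (3*a - b - c - 1) * habc
  have hgpos : 0 < 2*a - 1 := by nlinarith [mul_pos hb hc]
  have hapos : 0 < a := by linarith
  set d : ℝ := Real.sqrt (a ^ 2 + b ^ 2 + c ^ 2 - 2*a*b - 2*a*c - 2*b*c) with hddef
  have hd0 : 0 ≤ d := Real.sqrt_nonneg _
  have hd2 : d^2 = a ^ 2 + b ^ 2 + c ^ 2 - 2*a*b - 2*a*c - 2*b*c := Real.sq_sqrt hdisc
  have hC2 : (1-2*c)^2 - d^2 = 4*a*b := by
    rw [hd2]; linear_combination (3*c - a - b - 1) * habc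
  have hB2 : (1-2*b)^2 - d^2 = 4*a*c := by
    rw [hd2]; linear_combination (3*b - a - c - 1) * habc
  have hG2 : (2*a-1)^2 - d^2 = 4*b*c := by rw [hd2]; exact hg4bc
  set sab : ℝ := Real.sqrt (a*b) with hsabdef
  set sac : ℝ := Real.sqrt (a*c) with hsacdef
  set sbc : ℝ := Real.sqrt (b*c) with hsbcdef
  have hsab : 0 < sab := Real.sqrt_pos.mpr (by positivity)
  have hsac : 0 < sac := Real.sqrt_pos.mpr (by positivity)
  have hsbc : 0 < sbc := Real.sqrt_pos.mpr (by positivity)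
  have hsab2 : sab^2 = a*b := Real.sq_sqrt (by positivity)
  have hsac2 : sac^2 = a*c := Real.sq_sqrt (by positivity)
  have hsbc2 : sbc^2 = b*c := Real.sq_sqrt (by positivity)
  set g1 : ℝ := (1-2*c+d)/(2*sab) with hg1def
  set g2 : ℝ := 2*sac/(1-2*b+d) with hg2def
  have hg1 : 0 < g1 := by rw [hg1def]; positivity
  have hg2 : 0 < g2 := by rw [hg2def]; positivity
  set g : Fin 3 → ℝ := ![1, g1, g2] with hgdef
  have hgpos' : ∀ i, 0 < g i := by
    intro i
    fin_cases i
    exacts [one_pos, hg1, hg2]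
  refine ⟨Mof g, Mof_lorentzian g hgpos', Mof_diag g hgpos', Mof_pos g hgpos', ?_⟩
  have hCB : (1-2*c+d)*(1-2*b+d) = 2*a*(2*a-1+d) := by
    linear_combination hd2 + (-2*d - 3*a - 1 + b + c) * habc
  have hprod : sab * sac = a * sbc := by
    rw [hsabdef, hsacdef, hsbcdef, ← Real.sqrt_mul (by positivity),
      show (a*b)*(a*c) = a^2*(b*c) by ring, Real.sqrt_mul (by positivity), Real.sqrt_sq ha]
  have hinv1 : g1⁻¹ = (1-2*c-d)/(2*sab) := by
    rw [hg1def, inv_div, div_eq_div_iff (by positivity) (by positivity)]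
    linear_combination 4*hsab2 - hC2
  have hg2eq : g2 = (1-2*b-d)/(2*sac) := by
    rw [hg2def, div_eq_div_iff (by positivity) (by positivity)]
    linear_combination 4*hsac2 - hB2
  have hinv2 : g2⁻¹ = (1-2*b+d)/(2*sac) := by
    rw [hg2def, inv_div]
  have h12a : g1/g2 = (2*a-1+d)/(2*sbc) := by
    rw [div_eq_iff hg2.ne', hg1def, hg2def, div_mul_div_comm,
      div_eq_div_iff (by positivity) (by positivity)]
    linear_combination (2*sbc)*hCB + (-4*(2*a-1+d))*hprod
  have h12b : g2/g1 = (2*a-1-d)/(2*sbc) := by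
    have hh : g2/g1 = (g1/g2)⁻¹ := by rw [inv_div]
    rw [hh, h12a, inv_div, div_eq_div_iff (by positivity) (by positivity)]
    linear_combination 4*hsbc2 - hG2
  have h01 : Mof g 0 1 = (1-2*c)/(2*sab) := by
    show (g 0 / g 1 + g 1 / g 0) / 2 = _
    show ((1:ℝ) / g1 + g1 / 1) / 2 = _
    rw [one_div, div_one, hinv1, hg1def, ← add_div, div_div,
      div_eq_div_iff (by positivity) (by positivity)]
    ring
  have h02 : Mof g 0 2 = (1-2*b)/(2*sac) := by
    show (g 0 / g 2 + g 2 / g 0) / 2 = _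
    show ((1:ℝ) / g2 + g2 / 1) / 2 = _
    rw [one_div, div_one, hinv2, hg2eq, ← add_div, div_div,
      div_eq_div_iff (by positivity) (by positivity)]
    ring
  have h12 : Mof g 1 2 = (2*a-1)/(2*sbc) := by
    show (g 1 / g 2 + g 2 / g 1) / 2 = _
    show (g1 / g2 + g2 / g1) / 2 = _
    rw [h12a, h12b, ← add_div, div_div,
      div_eq_div_iff (by positivity) (by positivity)]
    ring
  rw [h01, h02, h12]
  apply log_eq_imp (by positivity) (by positivity)
  have lab : Real.log sab = (Real.log a + Real.log b)/2 := by
    rw [hsabdef, Real.log_sqrt (by positivity), Real.log_mul hapos.ne' hb.ne']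
  have lac : Real.log sac = (Real.log a + Real.log c)/2 := by
    rw [hsacdef, Real.log_sqrt (by positivity), Real.log_mul hapos.ne' hc.ne']
  have lbc : Real.log sbc = (Real.log b + Real.log c)/2 := by
    rw [hsbcdef, Real.log_sqrt (by positivity), Real.log_mul hb.ne' hc.ne']
  rw [Real.log_mul (by positivity) (Real.rpow_pos_of_pos (by positivity) _).ne',
    Real.log_mul (Real.rpow_pos_of_pos (by positivity) _).ne'
      (Real.rpow_pos_of_pos (by positivity) _).ne',
    Real.log_rpow (by positivity), Real.log_rpow (by positivity),
    Real.log_rpow (by positivity),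
    Real.log_div hCpos.ne' (by positivity), Real.log_div hBpos.ne' (by positivity),
    Real.log_div hgpos.ne' (by positivity),
    Real.log_mul (by norm_num : (2:ℝ) ≠ 0) hsab.ne',
    Real.log_mul (by norm_num : (2:ℝ) ≠ 0) hsac.ne',
    Real.log_mul (by norm_num : (2:ℝ) ≠ 0) hsbc.ne',
    lab, lac, lbc,
    Real.log_mul (by positivity) (Real.rpow_pos_of_pos hCpos _).ne',
    Real.log_mul (by positivity) (Real.rpow_pos_of_pos hBpos _).ne',
    Real.log_mul (by positivity) (Real.rpow_pos_of_pos hgpos _).ne',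
    Real.log_mul (by positivity) (Real.rpow_pos_of_pos hc _).ne',
    Real.log_mul (by positivity) (Real.rpow_pos_of_pos hb _).ne',
    Real.log_mul (by norm_num : (2:ℝ) ≠ 0) (Real.rpow_pos_of_pos hapos _).ne',
    Real.log_rpow hapos, Real.log_rpow hb, Real.log_rpow hc, Real.log_rpow hgpos,
    Real.log_rpow hBpos, Real.log_rpow hCpos]
  linear_combination (-(2*Real.log 2 + Real.log a + Real.log b + Real.log c)) * habc

lemma least_c0 {a b ub : ℝ} (hb : 0 < b) (hba : b ≤ a) (hab1 : a + b = 1)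
    (hub : ∀ t : ℝ, 0 < t →
      Mof ![1, Real.sqrt a / Real.sqrt b, t] 0 1 ^ (-1:ℝ) *
      Mof ![1, Real.sqrt a / Real.sqrt b, t] 0 2 ^ (2*b-1) *
      Mof ![1, Real.sqrt a / Real.sqrt b, t] 1 2 ^ (2*a-1) ≤ ub) :
    2 * a ^ a * b ^ b ≤ ub := by
  have hapos : 0 < a := by linarith
  set sa := Real.sqrt a with hsadef
  set sb := Real.sqrt b with hsbdef
  have hsa : 0 < sa := Real.sqrt_pos.mpr hapos
  have hsb : 0 < sb := Real.sqrt_pos.mpr hb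
  have hsa2 : sa^2 = a := Real.sq_sqrt hapos.le
  have hsb2 : sb^2 = b := Real.sq_sqrt hb.le
  set A := sa / sb with hAdef
  have hA : 0 < A := by positivity
  set P := ((1:ℝ)/A + A)/2 with hPdef
  have hP : 0 < P := by positivity
  have hent : ∀ t : ℝ, 0 < t →
      Mof ![1, A, t] 0 1 = P ∧
      Mof ![1, A, t] 0 2 = (1+t^2)/(2*t) ∧
      Mof ![1, A, t] 1 2 = (A^2+t^2)/(2*t*A) := by
    intro t ht
    refine ⟨?_, ?_, ?_⟩
    · show ((1:ℝ)/A + A/(1:ℝ))/2 = P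
      rw [div_one]
    · show ((1:ℝ)/t + t/(1:ℝ))/2 = _
      field_simp
    · show (A/t + t/A)/2 = _
      field_simp
  have hval : ∀ t : ℝ, 0 < t →
      Mof ![1, A, t] 0 1 ^ (-1:ℝ) * Mof ![1, A, t] 0 2 ^ (2*b-1) *
        Mof ![1, A, t] 1 2 ^ (2*a-1)
      = P ^ (-1:ℝ) * ((1+t^2) ^ (2*b-1) * (A^2+t^2) ^ (2*a-1) * A ^ (-(2*a-1))) := by
    intro t ht
    obtain ⟨e1, e2, e3⟩ := hent t ht
    rw [e1, e2, e3]
    have s1 : ((1+t^2)/(2*t)) ^ (2*b-1) = (1+t^2)^(2*b-1) * ((2*t) ^ (2*b-1))⁻¹ := by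
      rw [Real.div_rpow (by positivity) (by positivity), div_eq_mul_inv]
    have s2 : ((A^2+t^2)/(2*t*A)) ^ (2*a-1)
        = (A^2+t^2)^(2*a-1) * ((2*t)^(2*a-1))⁻¹ * (A^(2*a-1))⁻¹ := by
      rw [show (2*t*A) = (2*t)*A by ring, Real.div_rpow (by positivity) (by positivity),
        Real.mul_rpow (by positivity) (by positivity), div_eq_mul_inv, mul_inv]
      ring
    have s3 : ((2*t)^(2*b-1))⁻¹ * ((2*t)^(2*a-1))⁻¹ = 1 := by
      rw [← mul_inv, ← Real.rpow_add (by positivity),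
        show (2*b-1)+(2*a-1) = 0 by linarith, Real.rpow_zero, inv_one]
    rw [s1, s2]
    calc P ^ (-1:ℝ) * ((1+t^2)^(2*b-1) * ((2*t) ^ (2*b-1))⁻¹) *
          ((A^2+t^2)^(2*a-1) * ((2*t)^(2*a-1))⁻¹ * (A^(2*a-1))⁻¹)
        = P ^ (-1:ℝ) * ((1+t^2)^(2*b-1) * (A^2+t^2)^(2*a-1) * (A^(2*a-1))⁻¹) *
          (((2*t)^(2*b-1))⁻¹ * ((2*t)^(2*a-1))⁻¹) := by ring
      _ = P ^ (-1:ℝ) * ((1+t^2) ^ (2*b-1) * (A^2+t^2) ^ (2*a-1) * A ^ (-(2*a-1))) := by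
          rw [s3, mul_one, ← Real.rpow_neg hA.le]
  have hG0 : P ^ (-1:ℝ) * ((1+(0:ℝ)^2) ^ (2*b-1) * (A^2+(0:ℝ)^2) ^ (2*a-1) * A ^ (-(2*a-1)))
      = 2 * a ^ a * b ^ b := by
    have hPval : P = 1/(2*sa*sb) := by
      rw [hPdef, hAdef, one_div, inv_div, div_add_div _ _ hsa.ne' hsb.ne', div_div]
      rw [div_eq_div_iff (by positivity) (by positivity)]
      linear_combination (2*sa*sb)*hsa2 + (2*sa*sb)*hsb2 + (sa*sb*2)*hab1
    rw [show ((0:ℝ)^2) = 0 by norm_num, add_zero, add_zero, Real.one_rpow, one_mul]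
    apply log_eq_imp (by positivity) (by positivity)
    rw [Real.log_mul (by positivity) (by positivity),
      Real.log_mul (by positivity) (by positivity),
      Real.log_rpow hP, Real.log_rpow (by positivity), Real.log_rpow hA,
      hPval, Real.log_div (by norm_num) (by positivity),
      Real.log_mul (by positivity) hsb.ne', Real.log_mul (by norm_num) hsa.ne',
      Real.log_mul (by positivity) (Real.rpow_pos_of_pos hb _).ne',
      Real.log_mul (by norm_num) (Real.rpow_pos_of_pos hapos _).ne',
      Real.log_rpow hapos, Real.log_rpow hb, Real.log_pow, hAdef,
      Real.log_div hsa.ne' hsb.ne',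
      show Real.log sa = Real.log a / 2 by rw [hsadef, Real.log_sqrt hapos.le],
      show Real.log sb = Real.log b / 2 by rw [hsbdef, Real.log_sqrt hb.le],
      Real.log_one]
    push_cast
    linear_combination (-Real.log b) * hab1
  have hT : Tendsto (fun t : ℝ => P ^ (-1:ℝ) *
      ((1+t^2) ^ (2*b-1) * (A^2+t^2) ^ (2*a-1) * A ^ (-(2*a-1))))
      (nhdsWithin (0:ℝ) (Set.Ioi 0))
      (nhds (P ^ (-1:ℝ) * ((1+(0:ℝ)^2) ^ (2*b-1) * (A^2+(0:ℝ)^2) ^ (2*a-1) * A ^ (-(2*a-1))))) := by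
    apply Tendsto.mono_left _ nhdsWithin_le_nhds
    apply Tendsto.mul tendsto_const_nhds
    apply Tendsto.mul
    apply Tendsto.mul
    · exact (ContinuousAt.rpow_const (by fun_prop) (Or.inl (by norm_num))).tendsto
    · exact (ContinuousAt.rpow_const (by fun_prop) (Or.inl (by positivity))).tendsto
    · exact tendsto_const_nhds
  rw [← hG0]
  apply le_of_tendsto hT
  filter_upwards [self_mem_nhdsWithin] with t ht
  rw [← hval t ht]
  exact hub t ht

lemma least_b0 {a c ub : ℝ} (hc : 0 < c) (hca : c ≤ a) (hac1 : a + c = 1)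
    (hub : ∀ t : ℝ, 0 < t →
      Mof ![1, 1/t, Real.sqrt c / Real.sqrt a] 0 1 ^ (2*c-1) *
      Mof ![1, 1/t, Real.sqrt c / Real.sqrt a] 0 2 ^ (-1:ℝ) *
      Mof ![1, 1/t, Real.sqrt c / Real.sqrt a] 1 2 ^ (2*a-1) ≤ ub) :
    2 * a ^ a * c ^ c ≤ ub := by
  have hapos : 0 < a := by linarith
  set sa := Real.sqrt a with hsadef
  set sc := Real.sqrt c with hscdef
  have hsa : 0 < sa := Real.sqrt_pos.mpr hapos
  have hsc : 0 < sc := Real.sqrt_pos.mpr hc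
  have hsa2 : sa^2 = a := Real.sq_sqrt hapos.le
  have hsc2 : sc^2 = c := Real.sq_sqrt hc.le
  set A := sa / sc with hAdef
  have hA : 0 < A := by positivity
  set P := ((1:ℝ)/A + A)/2 with hPdef
  have hP : 0 < P := by positivity
  have hent : ∀ t : ℝ, 0 < t →
      Mof ![1, 1/t, sc/sa] 0 1 = (1+t^2)/(2*t) ∧
      Mof ![1, 1/t, sc/sa] 0 2 = P ∧
      Mof ![1, 1/t, sc/sa] 1 2 = (A^2+t^2)/(2*t*A) := by
    intro t ht
    refine ⟨?_, ?_, ?_⟩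
    · show ((1:ℝ)/(1/t) + (1/t)/(1:ℝ))/2 = _
      field_simp
      ring
    · show ((1:ℝ)/(sc/sa) + (sc/sa)/(1:ℝ))/2 = P
      rw [hPdef, hAdef, div_one, one_div, one_div, inv_div, inv_div]
      ring
    · show ((1/t)/(sc/sa) + (sc/sa)/(1/t))/2 = _
      rw [hAdef]
      field_simp
  have hval : ∀ t : ℝ, 0 < t →
      Mof ![1, 1/t, sc/sa] 0 1 ^ (2*c-1) * Mof ![1, 1/t, sc/sa] 0 2 ^ (-1:ℝ) *
        Mof ![1, 1/t, sc/sa] 1 2 ^ (2*a-1)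
      = P ^ (-1:ℝ) * ((1+t^2) ^ (2*c-1) * (A^2+t^2) ^ (2*a-1) * A ^ (-(2*a-1))) := by
    intro t ht
    obtain ⟨e1, e2, e3⟩ := hent t ht
    rw [e1, e2, e3]
    have s1 : ((1+t^2)/(2*t)) ^ (2*c-1) = (1+t^2)^(2*c-1) * ((2*t) ^ (2*c-1))⁻¹ := by
      rw [Real.div_rpow (by positivity) (by positivity), div_eq_mul_inv]
    have s2 : ((A^2+t^2)/(2*t*A)) ^ (2*a-1)
        = (A^2+t^2)^(2*a-1) * ((2*t)^(2*a-1))⁻¹ * (A^(2*a-1))⁻¹ := by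
      rw [show (2*t*A) = (2*t)*A by ring, Real.div_rpow (by positivity) (by positivity),
        Real.mul_rpow (by positivity) (by positivity), div_eq_mul_inv, mul_inv]
      ring
    have s3 : ((2*t)^(2*c-1))⁻¹ * ((2*t)^(2*a-1))⁻¹ = 1 := by
      rw [← mul_inv, ← Real.rpow_add (by positivity),
        show (2*c-1)+(2*a-1) = 0 by linarith, Real.rpow_zero, inv_one]
    rw [s1, s2]
    calc (1+t^2)^(2*c-1) * ((2*t) ^ (2*c-1))⁻¹ * P ^ (-1:ℝ) *
          ((A^2+t^2)^(2*a-1) * ((2*t)^(2*a-1))⁻¹ * (A^(2*a-1))⁻¹)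
        = P ^ (-1:ℝ) * ((1+t^2)^(2*c-1) * (A^2+t^2)^(2*a-1) * (A^(2*a-1))⁻¹) *
          (((2*t)^(2*c-1))⁻¹ * ((2*t)^(2*a-1))⁻¹) := by ring
      _ = P ^ (-1:ℝ) * ((1+t^2) ^ (2*c-1) * (A^2+t^2) ^ (2*a-1) * A ^ (-(2*a-1))) := by
          rw [s3, mul_one, ← Real.rpow_neg hA.le]
  have hG0 : P ^ (-1:ℝ) * ((1+(0:ℝ)^2) ^ (2*c-1) * (A^2+(0:ℝ)^2) ^ (2*a-1) * A ^ (-(2*a-1)))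
      = 2 * a ^ a * c ^ c := by
    have hPval : P = 1/(2*sa*sc) := by
      rw [hPdef, hAdef, one_div, inv_div, div_add_div _ _ hsa.ne' hsc.ne', div_div]
      rw [div_eq_div_iff (by positivity) (by positivity)]
      linear_combination (2*sa*sc)*hsa2 + (2*sa*sc)*hsc2 + (sa*sc*2)*hac1
    rw [show ((0:ℝ)^2) = 0 by norm_num, add_zero, add_zero, Real.one_rpow, one_mul]
    apply log_eq_imp (by positivity) (by positivity)
    rw [Real.log_mul (by positivity) (by positivity),
      Real.log_mul (by positivity) (by positivity),
      Real.log_rpow hP, Real.log_rpow (by positivity), Real.log_rpow hA,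
      hPval, Real.log_div (by norm_num) (by positivity),
      Real.log_mul (by positivity) hsc.ne', Real.log_mul (by norm_num) hsa.ne',
      Real.log_mul (by positivity) (Real.rpow_pos_of_pos hc _).ne',
      Real.log_mul (by norm_num) (Real.rpow_pos_of_pos hapos _).ne',
      Real.log_rpow hapos, Real.log_rpow hc, Real.log_pow, hAdef,
      Real.log_div hsa.ne' hsc.ne',
      show Real.log sa = Real.log a / 2 by rw [hsadef, Real.log_sqrt hapos.le],
      show Real.log sc = Real.log c / 2 by rw [hscdef, Real.log_sqrt hc.le],
      Real.log_one]
    push_cast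
    linear_combination (-Real.log c) * hac1
  have hT : Tendsto (fun t : ℝ => P ^ (-1:ℝ) *
      ((1+t^2) ^ (2*c-1) * (A^2+t^2) ^ (2*a-1) * A ^ (-(2*a-1))))
      (nhdsWithin (0:ℝ) (Set.Ioi 0))
      (nhds (P ^ (-1:ℝ) * ((1+(0:ℝ)^2) ^ (2*c-1) * (A^2+(0:ℝ)^2) ^ (2*a-1) * A ^ (-(2*a-1))))) := by
    apply Tendsto.mono_left _ nhdsWithin_le_nhds
    apply Tendsto.mul tendsto_const_nhds
    apply Tendsto.mul
    apply Tendsto.mul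
    · exact (ContinuousAt.rpow_const (by fun_prop) (Or.inl (by norm_num))).tendsto
    · exact (ContinuousAt.rpow_const (by fun_prop) (Or.inl (by positivity))).tendsto
    · exact tendsto_const_nhds
  rw [← hG0]
  apply le_of_tendsto hT
  filter_upwards [self_mem_nhdsWithin] with t ht
  rw [← hval t ht]
  exact hub t ht

lemma least_00 {ub : ℝ}
    (hub : ∀ t : ℝ, 0 < t →
      Mof ![1, t, 1/t] 0 1 ^ (-1:ℝ) * Mof ![1, t, 1/t] 0 2 ^ (-1:ℝ) *
      Mof ![1, t, 1/t] 1 2 ^ (1:ℝ) ≤ ub) :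
    2 ≤ ub := by
  have hval : ∀ t : ℝ, 0 < t →
      Mof ![1, t, 1/t] 0 1 ^ (-1:ℝ) * Mof ![1, t, 1/t] 0 2 ^ (-1:ℝ) *
        Mof ![1, t, 1/t] 1 2 ^ (1:ℝ)
      = 2*(t^4+1)/((1+t^2)^2) := by
    intro t ht
    have e1 : Mof ![1, t, 1/t] 0 1 = (1+t^2)/(2*t) := by
      show ((1:ℝ)/t + t/(1:ℝ))/2 = _
      field_simp
    have e2 : Mof ![1, t, 1/t] 0 2 = (1+t^2)/(2*t) := by
      show ((1:ℝ)/(1/t) + (1/t)/(1:ℝ))/2 = _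
      field_simp; ring
    have e3 : Mof ![1, t, 1/t] 1 2 = (t^4+1)/(2*t^2) := by
      show (t/(1/t) + (1/t)/t)/2 = _
      field_simp
    rw [e1, e2, e3, Real.rpow_neg_one, Real.rpow_one]
    field_simp
  have hT : Tendsto (fun t : ℝ => 2*(t^4+1)/((1+t^2)^2))
      (nhdsWithin (0:ℝ) (Set.Ioi 0)) (nhds 2) := by
    apply Tendsto.mono_left _ nhdsWithin_le_nhds
    have : ContinuousAt (fun t : ℝ => 2*(t^4+1)/((1+t^2)^2)) 0 := by
      apply ContinuousAt.div (by fun_prop) (by fun_prop)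
      norm_num
    have h0 : (2*((0:ℝ)^4+1)/((1+(0:ℝ)^2)^2)) = 2 := by norm_num
    simpa [h0] using this.tendsto
  apply le_of_tendsto hT
  filter_upwards [self_mem_nhdsWithin] with t ht
  rw [← hval t ht]
  exact hub t ht

end LorentzAux

open LorentzAux in
theorem optimal_constant_outside_circle (a b c : ℝ) (ha : 0 ≤ a) (hb : 0 ≤ b) (hc : 0 ≤ c)
    (habc : a + b + c = 1) (hab : b ≤ a) (hac : c ≤ a)
    (hdisc : 0 ≤ a ^ 2 + b ^ 2 + c ^ 2 - 2*a*b - 2*a*c - 2*b*c) :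
    IsLUB {r : ℝ | ∃ M : Matrix (Fin 3) (Fin 3) ℝ,
        IsLorentzian M ∧ (∀ i, M i i = 1) ∧ (∀ i j, 0 < M i j) ∧
        r = M 0 1 ^ (c - a - b) * M 0 2 ^ (b - a - c) * M 1 2 ^ (a - b - c)}
      (2 * a ^ a * b ^ b * c ^ c * (2*a - 1) ^ (2*a - 1) *
        (1 - 2*b) ^ (2*b - 1) * (1 - 2*c) ^ (2*c - 1)) := by
  have e1 : c - a - b = 2*c - 1 := by linarith
  have e2 : b - a - c = 2*b - 1 := by linarith
  have e3 : a - b - c = 2*a - 1 := by linarith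
  constructor
  · -- upper bound
    rintro x ⟨M, hL, hdiag, hpos, rfl⟩
    obtain ⟨h1, h2, h3, h4⟩ := lorentzian_constraints hL hdiag hpos
    rw [e1, e2, e3]
    exact upper ha hb hc habc hab hac hdisc h1 h2 h3 (by linarith)
  · -- least upper bound
    intro ub hub
    rcases eq_or_lt_of_le hc with hc0 | hcpos
    · -- c = 0
      have hc0' : c = 0 := hc0.symm
      rcases eq_or_lt_of_le hb with hb0 | hbpos
      · -- b = 0, a = 1
        have hb0' : b = 0 := hb0.symm
        have ha1 : a = 1 := by linarith
        have hS : 2 * a ^ a * b ^ b * c ^ c * (2*a - 1) ^ (2*a - 1) *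
            (1 - 2*b) ^ (2*b - 1) * (1 - 2*c) ^ (2*c - 1) = 2 := by
          rw [S_c0 hb habc hab hc0', ha1, hb0', Real.one_rpow, Real.rpow_zero]
          norm_num
        rw [hS]
        apply least_00 (ub := ub)
        intro t ht
        have hgp : ∀ i, 0 < (![1, t, 1/t] : Fin 3 → ℝ) i := by
          intro i; fin_cases i
          exacts [one_pos, ht, by show (0:ℝ) < 1/t; positivity]
        have hmem := hub ⟨Mof ![1, t, 1/t], Mof_lorentzian _ hgp, Mof_diag _ hgp,
          Mof_pos _ hgp, rfl⟩
        rw [e1, e2, e3] at hmem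
        rw [show (2*c-1 : ℝ) = -1 by rw [hc0']; norm_num,
          show (2*b-1 : ℝ) = -1 by rw [hb0']; norm_num,
          show (2*a-1 : ℝ) = 1 by rw [ha1]; norm_num] at hmem
        exact hmem
      · -- c = 0, b > 0
        have hab1 : a + b = 1 := by linarith
        rw [S_c0 hb habc hab hc0']
        apply least_c0 hbpos hab hab1 (ub := ub)
        intro t ht
        have hgp : ∀ i, 0 < (![1, Real.sqrt a / Real.sqrt b, t] : Fin 3 → ℝ) i := by
          have : (0:ℝ) < Real.sqrt a / Real.sqrt b := by
            have : (0:ℝ) < a := by linarith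
            positivity
          intro i; fin_cases i
          exacts [one_pos, this, ht]
        have hmem := hub ⟨Mof ![1, Real.sqrt a / Real.sqrt b, t], Mof_lorentzian _ hgp,
          Mof_diag _ hgp, Mof_pos _ hgp, rfl⟩
        rw [e1, e2, e3, show (2*c-1 : ℝ) = -1 by rw [hc0']; norm_num] at hmem
        exact hmem
    rcases eq_or_lt_of_le hb with hb0 | hbpos
    · -- b = 0, c > 0
      have hb0' : b = 0 := hb0.symm
      have hac1 : a + c = 1 := by linarith
      rw [S_b0 hc habc hac hb0']
      apply least_b0 hcpos hac hac1 (ub := ub)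
      intro t ht
      have hgp : ∀ i, 0 < (![1, 1/t, Real.sqrt c / Real.sqrt a] : Fin 3 → ℝ) i := by
        have h2 : (0:ℝ) < Real.sqrt c / Real.sqrt a := by
          have : (0:ℝ) < a := by linarith
          positivity
        intro i; fin_cases i
        exacts [one_pos, by show (0:ℝ) < 1/t; positivity, h2]
      have hmem := hub ⟨Mof ![1, 1/t, Real.sqrt c / Real.sqrt a], Mof_lorentzian _ hgp,
        Mof_diag _ hgp, Mof_pos _ hgp, rfl⟩
      rw [e1, e2, e3, show (2*b-1 : ℝ) = -1 by rw [hb0']; norm_num] at hmem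
      exact hmem
    · -- b > 0, c > 0 : attained
      obtain ⟨M, hL, hdiag, hpos, hval⟩ := exists_opt ha hbpos hcpos habc hab hac hdisc
      apply hub
      refine ⟨M, hL, hdiag, hpos, ?_⟩
      rw [e1, e2, e3, hval]
end

section
/- Let p > 0 be a real number, let n ≥ 5, and let (p_{ij}) be an n×n symmetric matrix with positive entries such that (p_{ij}·p_{kl})^{1/p} ≤ (p_{ik}·p_{jl})^{1/p} + (p_{il}·p_{jk})^{1/p} for all indices i, j, k, l in {1,…,n}. Then (p_{12}·p_{13}·p_{23}·p_{44}·p_{45}·p_{55})/(p_{14}·p_{15}·p_{24}·p_{25}·p_{34}·p_{35}) ≤ 8^p, and the constant 8^p cannot be replaced by any smaller constant. -/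
/-!
Put `q i j = p_{ij} ^ (1/p)`; the hypothesis says exactly that `q` satisfies Ptolemy's inequality
`q_{ij} q_{kl} ≤ q_{ik} q_{jl} + q_{il} q_{jk}`, and the ratio for `p` is the `p`-th power of the
ratio for `q`, so it suffices to bound the latter by `8`. Ptolemy's inequality for the quadruples
`(1,2,4,4)`, `(1,3,5,5)`, `(1,2,5,5)`, `(1,3,4,4)` bounds `q₁₂ q₁₃ q₄₄ q₅₅` by four times the
denominator divided by `q₂₅ q₃₄` and by `q₂₄ q₃₅` respectively, and the quadruple `(2,3,4,5)` gives
`q₂₃ q₄₅ ≤ q₂₄ q₃₅ + q₂₅ q₃₄`; together they bound the numerator by `4 + 4` times the denominator.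
Equality is attained by `q = 2` on `{4,…,n}²` and `q = 1` elsewhere.
-/

open Real

variable {ι : Type*}

def IsPtolemaic (q : ι → ι → ℝ) : Prop :=
  ∀ i j k l, q i j * q k l ≤ q i k * q j l + q i l * q j k

noncomputable def pentagonRatio (q : ι → ι → ℝ) (a b c d e : ι) : ℝ :=
  (q a b * q a c * q b c * q d d * q d e * q e e) /
    (q a d * q a e * q b d * q b e * q c d * q c e)

theorem isPtolemaic_rpow_iff {M : ι → ι → ℝ} (hM : ∀ i j, 0 ≤ M i j) (r : ℝ) :
    IsPtolemaic (fun i j => M i j ^ r) ↔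
      ∀ i j k l, (M i j * M k l) ^ r ≤ (M i k * M j l) ^ r + (M i l * M j k) ^ r := by
  simp only [IsPtolemaic, mul_rpow (hM _ _) (hM _ _)]

theorem pentagonRatio_rpow {M : ι → ι → ℝ} (hM : ∀ i j, 0 ≤ M i j) (r : ℝ) (a b c d e : ι) :
    pentagonRatio (fun i j => M i j ^ r) a b c d e = pentagonRatio M a b c d e ^ r := by
  have hnum : 0 ≤ M a b * M a c * M b c * M d d * M d e * M e e := by apply_rules [mul_nonneg]
  have hden : 0 ≤ M a d * M a e * M b d * M b e * M c d * M c e := by apply_rules [mul_nonneg]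
  rw [pentagonRatio, pentagonRatio, div_rpow hnum hden]
  simp (maxDischargeDepth := 6) only [mul_rpow, mul_nonneg, hM]

theorem IsPtolemaic.pentagonRatio_le_eight {q : ι → ι → ℝ} (hpt : IsPtolemaic q)
    (hq : ∀ i j, 0 ≤ q i j) (a b c d e : ι) : pentagonRatio q a b c d e ≤ 8 := by
  have hq₂ : ∀ i j k l, 0 ≤ q i j * q k l := fun i j k l => mul_nonneg (hq i j) (hq k l)
  have hab_dd : q a b * q d d ≤ 2 * (q a d * q b d) := by linarith [hpt a b d d]
  have hac_ee : q a c * q e e ≤ 2 * (q a e * q c e) := by linarith [hpt a c e e]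
  have hab_ee : q a b * q e e ≤ 2 * (q a e * q b e) := by linarith [hpt a b e e]
  have hac_dd : q a c * q d d ≤ 2 * (q a d * q c d) := by linarith [hpt a c d d]
  have hdd_ee : q a b * q d d * (q a c * q e e) ≤ 2 * (q a d * q b d) * (2 * (q a e * q c e)) :=
    mul_le_mul hab_dd hac_ee (hq₂ ..) (hab_dd.trans' (hq₂ ..))
  have hee_dd : q a b * q e e * (q a c * q d d) ≤ 2 * (q a e * q b e) * (2 * (q a d * q c d)) :=
    mul_le_mul hab_ee hac_dd (hq₂ ..) (hab_ee.trans' (hq₂ ..))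
  refine div_le_of_le_mul₀ (by apply_rules [mul_nonneg]) (by norm_num) ?_
  calc q a b * q a c * q b c * q d d * q d e * q e e
      = q a b * q d d * (q a c * q e e) * (q b c * q d e) := by ring
    _ ≤ q a b * q d d * (q a c * q e e) * (q b e * q c d + q b d * q c e) := by
        refine mul_le_mul_of_nonneg_left ?_ (mul_nonneg (hq₂ ..) (hq₂ ..))
        linarith [hpt b c d e]
    _ = q a b * q d d * (q a c * q e e) * (q b e * q c d) +
          q a b * q e e * (q a c * q d d) * (q b d * q c e) := by ring
    _ ≤ 2 * (q a d * q b d) * (2 * (q a e * q c e)) * (q b e * q c d) +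
          2 * (q a e * q b e) * (2 * (q a d * q c d)) * (q b d * q c e) :=
        add_le_add (mul_le_mul_of_nonneg_right hdd_ee (hq₂ ..))
          (mul_le_mul_of_nonneg_right hee_dd (hq₂ ..))
    _ = 8 * (q a d * q a e * q b d * q b e * q c d * q c e) := by ring

theorem pentagonRatio_le_eight_rpow {M : ι → ι → ℝ} {p : ℝ} (hp : 0 < p) (hM : ∀ i j, 0 ≤ M i j)
    (hT : ∀ i j k l, (M i j * M k l) ^ (1/p) ≤ (M i k * M j l) ^ (1/p) + (M i l * M j k) ^ (1/p))
    (a b c d e : ι) : pentagonRatio M a b c d e ≤ 8 ^ p := by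
  have hq : ∀ i j, 0 ≤ M i j ^ (1/p) := fun i j => rpow_nonneg (hM i j) _
  have hM_eq : M = fun i j => (M i j ^ (1/p)) ^ p := by
    funext i j
    rw [one_div, rpow_inv_rpow (hM i j) hp.ne']
  calc pentagonRatio M a b c d e = pentagonRatio (fun i j => (M i j ^ (1/p)) ^ p) a b c d e := by
        rw [← hM_eq]
    _ = pentagonRatio (fun i j => M i j ^ (1/p)) a b c d e ^ p := pentagonRatio_rpow hq p ..
    _ ≤ 8 ^ p := by
        have hpt := (isPtolemaic_rpow_iff hM _).2 hT
        refine rpow_le_rpow ?_ (hpt.pentagonRatio_le_eight hq ..) hp.le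
        unfold pentagonRatio
        apply_rules [div_nonneg, mul_nonneg]

def twoOnSquare (P : ι → Prop) [DecidablePred P] (i j : ι) : ℝ :=
  if P i ∧ P j then 2 else 1

section twoOnSquare

variable (P : ι → Prop) [DecidablePred P]

theorem twoOnSquare_pos (i j : ι) : 0 < twoOnSquare P i j := by
  unfold twoOnSquare
  split_ifs <;> norm_num

theorem twoOnSquare_comm (i j : ι) : twoOnSquare P i j = twoOnSquare P j i := by
  simp only [twoOnSquare, and_comm]

theorem isPtolemaic_twoOnSquare : IsPtolemaic (twoOnSquare P) := by
  intro i j k l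
  unfold twoOnSquare
  by_cases hi : P i <;> by_cases hj : P j <;> by_cases hk : P k <;> by_cases hl : P l <;>
    simp [hi, hj, hk, hl] <;> norm_num

variable {P}

theorem pentagonRatio_twoOnSquare {a b c d e : ι} (ha : ¬P a) (hb : ¬P b) (hc : ¬P c) (hd : P d)
    (he : P e) : pentagonRatio (twoOnSquare P) a b c d e = 8 := by
  simp only [pentagonRatio, twoOnSquare, ha, hb, hc, hd, he]
  norm_num

end twoOnSquare

theorem pentagonal_ratio_Tp (p : ℝ) (hp : 0 < p) (n : ℕ) (hn : 5 ≤ n) :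
    (∀ M : Matrix (Fin n) (Fin n) ℝ, M.IsSymm → (∀ i j, 0 < M i j) →
      (∀ i j k l : Fin n, (M i j * M k l) ^ (1/p) ≤
          (M i k * M j l) ^ (1/p) + (M i l * M j k) ^ (1/p)) →
      (M ⟨0, by omega⟩ ⟨1, by omega⟩ * M ⟨0, by omega⟩ ⟨2, by omega⟩ *
        M ⟨1, by omega⟩ ⟨2, by omega⟩ * M ⟨3, by omega⟩ ⟨3, by omega⟩ *
        M ⟨3, by omega⟩ ⟨4, by omega⟩ * M ⟨4, by omega⟩ ⟨4, by omega⟩) /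
      (M ⟨0, by omega⟩ ⟨3, by omega⟩ * M ⟨0, by omega⟩ ⟨4, by omega⟩ *
        M ⟨1, by omega⟩ ⟨3, by omega⟩ * M ⟨1, by omega⟩ ⟨4, by omega⟩ *
        M ⟨2, by omega⟩ ⟨3, by omega⟩ * M ⟨2, by omega⟩ ⟨4, by omega⟩) ≤ (8:ℝ) ^ p) ∧
    (∀ c : ℝ, c < (8:ℝ) ^ p → ∃ M : Matrix (Fin n) (Fin n) ℝ, M.IsSymm ∧
      (∀ i j, 0 < M i j) ∧
      (∀ i j k l : Fin n, (M i j * M k l) ^ (1/p) ≤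
          (M i k * M j l) ^ (1/p) + (M i l * M j k) ^ (1/p)) ∧
      c < (M ⟨0, by omega⟩ ⟨1, by omega⟩ * M ⟨0, by omega⟩ ⟨2, by omega⟩ *
            M ⟨1, by omega⟩ ⟨2, by omega⟩ * M ⟨3, by omega⟩ ⟨3, by omega⟩ *
            M ⟨3, by omega⟩ ⟨4, by omega⟩ * M ⟨4, by omega⟩ ⟨4, by omega⟩) /
          (M ⟨0, by omega⟩ ⟨3, by omega⟩ * M ⟨0, by omega⟩ ⟨4, by omega⟩ *
            M ⟨1, by omega⟩ ⟨3, by omega⟩ * M ⟨1, by omega⟩ ⟨4, by omega⟩ *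
            M ⟨2, by omega⟩ ⟨3, by omega⟩ * M ⟨2, by omega⟩ ⟨4, by omega⟩)) := by
  refine ⟨fun M _ hM hT => pentagonRatio_le_eight_rpow hp (fun i j => (hM i j).le) hT ..,
    fun c hc => ?_⟩
  set Q := twoOnSquare fun i : Fin n => 3 ≤ (i : ℕ)
  have hQ : ∀ i j, 0 ≤ Q i j := fun i j => (twoOnSquare_pos _ i j).le
  refine ⟨fun i j => Q i j ^ p,
    Matrix.IsSymm.ext fun i j => congrArg (· ^ p) (twoOnSquare_comm _ j i),
    fun i j => rpow_pos_of_pos (twoOnSquare_pos _ i j) p, ?_, hc.trans_eq ?_⟩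
  · refine (isPtolemaic_rpow_iff (fun i j => rpow_nonneg (hQ i j) p) _).1 ?_
    simpa only [one_div, rpow_rpow_inv (hQ _ _) hp.ne'] using isPtolemaic_twoOnSquare _
  · exact ((pentagonRatio_rpow hQ p ..).trans (by rw [pentagonRatio_twoOnSquare] <;> simp)).symm
end

section
/- Let (p_{ij}) be an n×n Lorentzian matrix. Then for all indices i, j, k, l in {1,…,n}, one has √(p_{ij}·p_{kl}) ≤ √(p_{ik}·p_{jl}) + √(p_{il}·p_{jk}). -/
set_option maxHeartbeats 1000000

open Finset Matrix

private lemma lor_aux1 (u v nx ny s : ℝ) (hnx : 0 ≤ nx) (hny : 0 ≤ ny) (huv : 0 ≤ u * v)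
    (h1 : nx^2 ≤ u^2) (h2 : ny^2 ≤ v^2) (h3 : s^2 ≤ nx^2 * ny^2) :
    (u^2 - nx^2) * (v^2 - ny^2) ≤ (u*v - s)^2 := by
  have hnn : 0 ≤ nx * ny := mul_nonneg hnx hny
  have h4 : nx * ny ≤ u * v := by nlinarith
  have h5 : s ≤ nx * ny := by nlinarith [abs_nonneg s, sq_abs s, le_abs_self s]
  have h6 : (u*v - nx*ny)^2 ≤ (u*v - s)^2 := by nlinarith
  nlinarith [sq_nonneg (u*ny - v*nx)]

private lemma lor_aux2 (u v nx ny s : ℝ) (hnx : 0 ≤ nx) (hny : 0 ≤ ny)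
    (h1 : nx^2 ≤ u^2) (h2 : ny^2 ≤ v^2) (h3 : s^2 ≤ nx^2 * ny^2) :
    (u^2 - nx^2) * (v^2 - ny^2) ≤ (u*v - s)^2 := by
  rcases le_total 0 (u*v) with h | h
  · exact lor_aux1 u v nx ny s hnx hny h h1 h2 h3
  · have := lor_aux1 u (-v) nx ny (-s) hnx hny (by nlinarith) h1 (by nlinarith) (by nlinarith)
    nlinarith [this]

private lemma lor_aux3 (L c0 d0 Nx Ny Ns : ℝ) (hL : 0 < L) (hNx : 0 ≤ Nx) (hNy : 0 ≤ Ny)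
    (hx : Nx ≤ L * c0^2) (hy : Ny ≤ L * d0^2) (hcs : Ns^2 ≤ Nx * Ny) :
    (L * c0^2 - Nx) * (L * d0^2 - Ny) ≤ (L * (c0*d0) - Ns)^2 := by
  have hL' := hL.le
  have e1 : (Real.sqrt L * c0)^2 = L * c0^2 := by rw [mul_pow, Real.sq_sqrt hL']
  have e2 : (Real.sqrt L * d0)^2 = L * d0^2 := by rw [mul_pow, Real.sq_sqrt hL']
  have e3 : (Real.sqrt L * c0) * (Real.sqrt L * d0) = L * (c0 * d0) := by
    rw [show (Real.sqrt L * c0) * (Real.sqrt L * d0)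
        = (Real.sqrt L * Real.sqrt L) * (c0 * d0) by ring, Real.mul_self_sqrt hL']
  have key := lor_aux2 (Real.sqrt L * c0) (Real.sqrt L * d0) (Real.sqrt Nx) (Real.sqrt Ny) Ns
    (Real.sqrt_nonneg _) (Real.sqrt_nonneg _)
    (by rw [e1, Real.sq_sqrt hNx]; exact hx)
    (by rw [e2, Real.sq_sqrt hNy]; exact hy)
    (by rw [Real.sq_sqrt hNx, Real.sq_sqrt hNy]; exact hcs)
  rw [e1, e2, e3, Real.sq_sqrt hNx, Real.sq_sqrt hNy] at key
  exact key

/-- Reverse Cauchy–Schwarz for a weighted sum with at most one positive weight. -/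
private lemma lor_sum_revCS {n : ℕ} (lam c d : Fin n → ℝ)
    (hcard : (Finset.univ.filter fun a => 0 < lam a).card ≤ 1)
    (hx : 0 ≤ ∑ a, lam a * c a ^ 2) :
    (∑ a, lam a * c a ^ 2) * (∑ a, lam a * d a ^ 2) ≤ (∑ a, lam a * (c a * d a)) ^ 2 := by
  rcases le_or_gt (∑ a, lam a * d a ^ 2) 0 with hy | hy
  · calc (∑ a, lam a * c a ^ 2) * (∑ a, lam a * d a ^ 2) ≤ 0 :=
          mul_nonpos_of_nonneg_of_nonpos hx hy
      _ ≤ _ := sq_nonneg _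
  by_cases hall : ∀ a, lam a ≤ 0
  · have h0 : (∑ a, lam a * c a ^ 2) ≤ 0 :=
      Finset.sum_nonpos fun a _ => mul_nonpos_of_nonpos_of_nonneg (hall a) (sq_nonneg _)
    have : (∑ a, lam a * c a ^ 2) = 0 := le_antisymm h0 hx
    rw [this, zero_mul]; exact sq_nonneg _
  push_neg at hall
  obtain ⟨a0, ha0⟩ := hall
  have hneg : ∀ a ≠ a0, lam a ≤ 0 := by
    intro a ha
    by_contra h
    push_neg at h
    have hsub : ({a0, a} : Finset (Fin n)) ⊆ Finset.univ.filter fun b => 0 < lam b := by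
      intro x hx'
      simp only [Finset.mem_insert, Finset.mem_singleton] at hx'
      rcases hx' with rfl | rfl <;> simp [ha0, h]
    have hc := Finset.card_le_card hsub
    rw [Finset.card_pair (Ne.symm ha)] at hc
    omega
  set s := Finset.univ.erase a0 with hs
  have hsplit : ∀ f : Fin n → ℝ, (∑ a, f a) = f a0 + ∑ a ∈ s, f a := fun f =>
    (Finset.add_sum_erase _ f (Finset.mem_univ a0)).symm
  have hnegs : ∀ a ∈ s, 0 ≤ -lam a := fun a ha => by
    have := hneg a (Finset.ne_of_mem_erase ha); linarith
  set Nx := ∑ a ∈ s, (-lam a) * c a ^ 2 with hNxdef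
  set Ny := ∑ a ∈ s, (-lam a) * d a ^ 2 with hNydef
  set Ns := ∑ a ∈ s, (-lam a) * (c a * d a) with hNsdef
  have hNx : 0 ≤ Nx := Finset.sum_nonneg fun a ha => mul_nonneg (hnegs a ha) (sq_nonneg _)
  have hNy : 0 ≤ Ny := Finset.sum_nonneg fun a ha => mul_nonneg (hnegs a ha) (sq_nonneg _)
  have hcs : Ns ^ 2 ≤ Nx * Ny := by
    have key := Finset.sum_mul_sq_le_sq_mul_sq s
      (fun a => Real.sqrt (-lam a) * c a) (fun a => Real.sqrt (-lam a) * d a)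
    have e1 : ∑ a ∈ s, (Real.sqrt (-lam a) * c a) * (Real.sqrt (-lam a) * d a) = Ns :=
      Finset.sum_congr rfl fun a ha => by
        rw [show (Real.sqrt (-lam a) * c a) * (Real.sqrt (-lam a) * d a)
            = (Real.sqrt (-lam a) * Real.sqrt (-lam a)) * (c a * d a) by ring,
          Real.mul_self_sqrt (hnegs a ha)]
    have e2 : ∑ a ∈ s, (Real.sqrt (-lam a) * c a) ^ 2 = Nx :=
      Finset.sum_congr rfl fun a ha => by rw [mul_pow, Real.sq_sqrt (hnegs a ha)]
    have e3 : ∑ a ∈ s, (Real.sqrt (-lam a) * d a) ^ 2 = Ny :=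
      Finset.sum_congr rfl fun a ha => by rw [mul_pow, Real.sq_sqrt (hnegs a ha)]
    rw [e1, e2, e3] at key
    exact key
  have ex : (∑ a, lam a * c a ^ 2) = lam a0 * c a0 ^ 2 - Nx := by
    rw [hsplit (fun a => lam a * c a ^ 2), hNxdef]
    simp only [neg_mul, Finset.sum_neg_distrib]
    ring
  have ey : (∑ a, lam a * d a ^ 2) = lam a0 * d a0 ^ 2 - Ny := by
    rw [hsplit (fun a => lam a * d a ^ 2), hNydef]
    simp only [neg_mul, Finset.sum_neg_distrib]
    ring
  have es : (∑ a, lam a * (c a * d a)) = lam a0 * (c a0 * d a0) - Ns := by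
    rw [hsplit (fun a => lam a * (c a * d a)), hNsdef]
    simp only [neg_mul, Finset.sum_neg_distrib]
    ring
  rw [ex, ey, es]
  rw [ex] at hx
  rw [ey] at hy
  exact lor_aux3 (lam a0) (c a0) (d a0) Nx Ny Ns ha0 hNx hNy (by linarith) (by linarith) hcs

/-- Spectral expansion of the bilinear form of a real Hermitian matrix. -/
private lemma lor_quad_eq {n : ℕ} (M : Matrix (Fin n) (Fin n) ℝ) (hH : M.IsHermitian)
    (v w : Fin n → ℝ) :
    v ⬝ᵥ M *ᵥ w = ∑ a, hH.eigenvalues a *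
      ((Matrix.vecMul v (hH.eigenvectorUnitary : Matrix (Fin n) (Fin n) ℝ)) a *
       (Matrix.vecMul w (hH.eigenvectorUnitary : Matrix (Fin n) (Fin n) ℝ)) a) := by
  conv_lhs => rw [hH.spectral_theorem, Unitary.conjStarAlgAut_apply]
  rw [← Matrix.mulVec_mulVec, ← Matrix.mulVec_mulVec, Matrix.dotProduct_mulVec]
  unfold dotProduct
  apply Finset.sum_congr rfl
  intro a _
  rw [Matrix.mulVec_diagonal]
  have hsw : (star (hH.eigenvectorUnitary : Matrix (Fin n) (Fin n) ℝ) *ᵥ w) a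
      = (Matrix.vecMul w (hH.eigenvectorUnitary : Matrix (Fin n) (Fin n) ℝ)) a := by
    simp [Matrix.mulVec, Matrix.vecMul, dotProduct, Matrix.star_apply, mul_comm]
  rw [hsw]
  simp [Function.comp]
  ring

/-- Reverse Cauchy–Schwarz for a Lorentzian quadratic form. -/
private lemma lor_revCS {n : ℕ} (M : Matrix (Fin n) (Fin n) ℝ) (hH : M.IsHermitian)
    (hcard : (Finset.univ.filter fun a => 0 < hH.eigenvalues a).card ≤ 1)
    (x y : Fin n → ℝ) (hx : 0 ≤ x ⬝ᵥ M *ᵥ x) :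
    (x ⬝ᵥ M *ᵥ x) * (y ⬝ᵥ M *ᵥ y) ≤ (x ⬝ᵥ M *ᵥ y)^2 := by
  rw [lor_quad_eq M hH x x, lor_quad_eq M hH x y, lor_quad_eq M hH y y]
  rw [lor_quad_eq M hH x x] at hx
  set c := Matrix.vecMul x (hH.eigenvectorUnitary : Matrix (Fin n) (Fin n) ℝ)
  set d := Matrix.vecMul y (hH.eigenvectorUnitary : Matrix (Fin n) (Fin n) ℝ)
  have hc : ∀ a, hH.eigenvalues a * (c a * c a) = hH.eigenvalues a * c a ^ 2 := by
    intro a; ring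
  have hd : ∀ a, hH.eigenvalues a * (d a * d a) = hH.eigenvalues a * d a ^ 2 := by
    intro a; ring
  simp only [hc, hd] at *
  exact lor_sum_revCS hH.eigenvalues c d hcard hx

private lemma lor_pair_quad {n : ℕ} (M : Matrix (Fin n) (Fin n) ℝ) (s t α β : ℝ)
    (i j k l : Fin n) :
    (fun a => s * (if a = k then (1:ℝ) else 0) + t * (if a = l then 1 else 0)) ⬝ᵥ
      M *ᵥ (fun a => α * (if a = i then (1:ℝ) else 0) + β * (if a = j then 1 else 0))
    = s*α*M k i + s*β*M k j + t*α*M l i + t*β*M l j := by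
  simp [dotProduct, Matrix.mulVec, mul_add, add_mul, Finset.sum_add_distrib,
    mul_ite, ite_mul, mul_comm, mul_left_comm]
  ring

theorem lorentzian_sqrt_triangle (n : ℕ) (M : Matrix (Fin n) (Fin n) ℝ)
    (hM : IsLorentzian M) (i j k l : Fin n) :
    Real.sqrt (M i j * M k l) ≤
      Real.sqrt (M i k * M j l) + Real.sqrt (M i l * M j k) := by
  obtain ⟨hsymm, hpos, hcard⟩ := hM
  have hsym' : ∀ a b, M a b = M b a := fun a b => by
    conv_lhs => rw [← hsymm]
    rfl
  have hH : M.IsHermitian := by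
    ext a b
    simp only [Matrix.conjTranspose_apply, star_trivial]
    exact hsym' b a
  -- master inequality
  have master : ∀ s t α β : ℝ, 0 ≤ s → 0 ≤ t → 0 ≤ α → 0 ≤ β →
      (2*(s*t)*M k l) * (2*(α*β)*M i j) ≤
        (s*α*M k i + s*β*M k j + t*α*M l i + t*β*M l j)^2 := by
    intro s t α β hs ht hα hβ
    set x : Fin n → ℝ := fun a => s * (if a = k then (1:ℝ) else 0) + t * (if a = l then 1 else 0) with hxdef
    set y : Fin n → ℝ := fun a => α * (if a = i then (1:ℝ) else 0) + β * (if a = j then 1 else 0) with hydef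
    have hxx : x ⬝ᵥ M *ᵥ x = s*s*M k k + s*t*M k l + t*s*M l k + t*t*M l l :=
      lor_pair_quad M s t s t k l k l
    have hyy : y ⬝ᵥ M *ᵥ y = α*α*M i i + α*β*M i j + β*α*M j i + β*β*M j j :=
      lor_pair_quad M α β α β i j i j
    have hxy : x ⬝ᵥ M *ᵥ y = s*α*M k i + s*β*M k j + t*α*M l i + t*β*M l j :=
      lor_pair_quad M s t α β i j k l
    have hxx0 : 0 ≤ x ⬝ᵥ M *ᵥ x := by
      rw [hxx]
      have h1 := mul_nonneg (mul_nonneg hs hs) (hpos k k)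
      have h2 := mul_nonneg (mul_nonneg hs ht) (hpos k l)
      have h3 := mul_nonneg (mul_nonneg ht hs) (hpos l k)
      have h4 := mul_nonneg (mul_nonneg ht ht) (hpos l l)
      linarith
    have h1 : 2*(s*t)*M k l ≤ x ⬝ᵥ M *ᵥ x := by
      rw [hxx, hsym' l k]
      have h1 := mul_nonneg (mul_nonneg hs hs) (hpos k k)
      have h4 := mul_nonneg (mul_nonneg ht ht) (hpos l l)
      linarith
    have h2 : 2*(α*β)*M i j ≤ y ⬝ᵥ M *ᵥ y := by
      rw [hyy, hsym' j i]
      have h1 := mul_nonneg (mul_nonneg hα hα) (hpos i i)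
      have h4 := mul_nonneg (mul_nonneg hβ hβ) (hpos j j)
      linarith
    have h20 : 0 ≤ 2*(α*β)*M i j :=
      mul_nonneg (mul_nonneg (by norm_num) (mul_nonneg hα hβ)) (hpos i j)
    calc (2*(s*t)*M k l) * (2*(α*β)*M i j)
        ≤ (x ⬝ᵥ M *ᵥ x) * (y ⬝ᵥ M *ᵥ y) := mul_le_mul h1 h2 h20 hxx0
      _ ≤ (x ⬝ᵥ M *ᵥ y)^2 := lor_revCS M hH (hcard hH) x y hxx0
      _ = _ := by rw [hxy]
  -- epsilon step
  have key : ∀ ε : ℝ, 0 < ε → Real.sqrt (M i j * M k l) ≤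
      Real.sqrt ((M i k + ε)*(M j l + ε)) + Real.sqrt ((M i l + ε)*(M j k + ε)) := by
    intro ε hε
    set p := M i k + ε with hpdef
    set q := M j l + ε with hqdef
    set r := M i l + ε with hrdef
    set u := M j k + ε with hudef
    have hp : 0 < p := by have := hpos i k; simp only [hpdef]; linarith
    have hq : 0 < q := by have := hpos j l; simp only [hqdef]; linarith
    have hr : 0 < r := by have := hpos i l; simp only [hrdef]; linarith
    have hu : 0 < u := by have := hpos j k; simp only [hudef]; linarith
    set A := Real.sqrt (p*q) with hAdef
    set B := Real.sqrt (r*u) with hBdef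
    have hA : 0 < A := Real.sqrt_pos.mpr (mul_pos hp hq)
    have hB : 0 < B := Real.sqrt_pos.mpr (mul_pos hr hu)
    have hA2 : A^2 = p*q := Real.sq_sqrt (mul_pos hp hq).le
    have hB2 : B^2 = r*u := Real.sq_sqrt (mul_pos hr hu).le
    -- parameters
    have hm := master (Real.sqrt (q*r)) (Real.sqrt (p*u)) (Real.sqrt (q*u)) (Real.sqrt (p*r))
      (Real.sqrt_nonneg _) (Real.sqrt_nonneg _) (Real.sqrt_nonneg _) (Real.sqrt_nonneg _)
    set s := Real.sqrt (q*r)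
    set t := Real.sqrt (p*u)
    set α := Real.sqrt (q*u)
    set β := Real.sqrt (p*r)
    have hsα : s*α = q*B := by
      rw [← Real.sqrt_mul (mul_pos hq hr).le,
        show q*r*(q*u) = q^2*(r*u) by ring,
        Real.sqrt_mul (sq_nonneg q), Real.sqrt_sq hq.le]
    have htβ : t*β = p*B := by
      rw [← Real.sqrt_mul (mul_pos hp hu).le,
        show p*u*(p*r) = p^2*(r*u) by ring,
        Real.sqrt_mul (sq_nonneg p), Real.sqrt_sq hp.le]
    have hsβ : s*β = r*A := by
      rw [← Real.sqrt_mul (mul_pos hq hr).le,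
        show q*r*(p*r) = r^2*(p*q) by ring,
        Real.sqrt_mul (sq_nonneg r), Real.sqrt_sq hr.le]
    have htα : t*α = u*A := by
      rw [← Real.sqrt_mul (mul_pos hp hu).le,
        show p*u*(q*u) = u^2*(p*q) by ring,
        Real.sqrt_mul (sq_nonneg u), Real.sqrt_sq hu.le]
    have hst : s*t = A*B := by
      rw [← Real.sqrt_mul (mul_pos hq hr).le,
        show q*r*(p*u) = (p*q)*(r*u) by ring,
        Real.sqrt_mul (mul_pos hp hq).le]
    have hαβ : α*β = A*B := by
      rw [← Real.sqrt_mul (mul_pos hq hu).le,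
        show q*u*(p*r) = (p*q)*(r*u) by ring,
        Real.sqrt_mul (mul_pos hp hq).le]
    rw [hst, hαβ] at hm
    -- bound the RHS of hm
    have hterm1 : s*α*M k i ≤ q*B*p := by
      rw [hsα, hsym' k i]
      have : M i k ≤ p := by simp only [hpdef]; linarith
      have hqB : 0 ≤ q*B := mul_nonneg hq.le hB.le
      exact mul_le_mul_of_nonneg_left this hqB
    have hterm2 : s*β*M k j ≤ r*A*u := by
      rw [hsβ, hsym' k j]
      have : M j k ≤ u := by simp only [hudef]; linarith
      have hrA : 0 ≤ r*A := mul_nonneg hr.le hA.le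
      exact mul_le_mul_of_nonneg_left this hrA
    have hterm3 : t*α*M l i ≤ u*A*r := by
      rw [htα, hsym' l i]
      have : M i l ≤ r := by simp only [hrdef]; linarith
      have huA : 0 ≤ u*A := mul_nonneg hu.le hA.le
      exact mul_le_mul_of_nonneg_left this huA
    have hterm4 : t*β*M l j ≤ p*B*q := by
      rw [htβ, hsym' l j]
      have : M j l ≤ q := by simp only [hqdef]; linarith
      have hpB : 0 ≤ p*B := mul_nonneg hp.le hB.le
      exact mul_le_mul_of_nonneg_left this hpB
    have hsum_nonneg : 0 ≤ s*α*M k i + s*β*M k j + t*α*M l i + t*β*M l j := by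
      have e1 := mul_nonneg (mul_nonneg (Real.sqrt_nonneg (q*r)) (Real.sqrt_nonneg (q*u))) (hpos k i)
      have e2 := mul_nonneg (mul_nonneg (Real.sqrt_nonneg (q*r)) (Real.sqrt_nonneg (p*r))) (hpos k j)
      have e3 := mul_nonneg (mul_nonneg (Real.sqrt_nonneg (p*u)) (Real.sqrt_nonneg (q*u))) (hpos l i)
      have e4 := mul_nonneg (mul_nonneg (Real.sqrt_nonneg (p*u)) (Real.sqrt_nonneg (p*r))) (hpos l j)
      linarith
    have hRHS : (s*α*M k i + s*β*M k j + t*α*M l i + t*β*M l j)^2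
        ≤ (2*(A*B)*(A+B))^2 := by
      apply pow_le_pow_left₀ hsum_nonneg
      calc s*α*M k i + s*β*M k j + t*α*M l i + t*β*M l j
          ≤ q*B*p + r*A*u + u*A*r + p*B*q := by linarith
        _ = 2*(p*q)*B + 2*(r*u)*A := by ring
        _ = 2*(A*B)*(A+B) := by rw [← hA2, ← hB2]; ring
    have hfinal : M i j * M k l ≤ (A+B)^2 := by
      have hm2 : 4*(A*B)^2 * (M i j * M k l) ≤ 4*(A*B)^2*(A+B)^2 := by
        calc 4*(A*B)^2 * (M i j * M k l)
            = (2*(A*B)*M k l) * (2*(A*B)*M i j) := by ring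
          _ ≤ (s*α*M k i + s*β*M k j + t*α*M l i + t*β*M l j)^2 := hm
          _ ≤ (2*(A*B)*(A+B))^2 := hRHS
          _ = 4*(A*B)^2*(A+B)^2 := by ring
      have hABpos : 0 < 4*(A*B)^2 := by positivity
      exact le_of_mul_le_mul_left hm2 hABpos
    calc Real.sqrt (M i j * M k l) ≤ Real.sqrt ((A+B)^2) := Real.sqrt_le_sqrt hfinal
      _ = A + B := Real.sqrt_sq (by positivity)
  -- limit ε → 0⁺
  have hcont : Filter.Tendsto
      (fun ε : ℝ => Real.sqrt ((M i k + ε)*(M j l + ε)) + Real.sqrt ((M i l + ε)*(M j k + ε)))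
      (nhdsWithin 0 (Set.Ioi 0))
      (nhds (Real.sqrt (M i k * M j l) + Real.sqrt (M i l * M j k))) := by
    have hc : Continuous (fun ε : ℝ =>
        Real.sqrt ((M i k + ε)*(M j l + ε)) + Real.sqrt ((M i l + ε)*(M j k + ε))) := by
      fun_prop
    have h0 := hc.tendsto 0
    simp only [add_zero] at h0
    exact tendsto_nhdsWithin_of_tendsto_nhds h0
  exact ge_of_tendsto hcont
    (Filter.eventually_of_mem self_mem_nhdsWithin (fun ε hε => key ε hε))
end

section
/- Let μ, ν, ξ be nonnegative real numbers with μ·ξ ≤ ν², and let α, β, γ be real numbers such that the 2×2 symmetric matrix with rows (α, β) and (β, γ) is negative semidefinite. If μ+α ≥ 0, ν+β ≥ 0, and ξ+γ ≥ 0, then (μ+α)·(ν+β)·(ξ+γ) ≤ μ·ν·ξ. -/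
/-!
Negative semidefiniteness gives `α, γ ≤ 0` and `β² ≤ αγ`. With `a = μ + α ≤ μ`, `c = ξ + γ ≤ ξ`
it remains to show `a c β ≤ ν (μξ - ac)`. Writing `p = μ - a`, `q = ξ - c`, we have
`μξ - ac ≥ aq + cp ≥ 2√(ac p q)` by AM-GM, while `ν ≥ √(μξ) ≥ √(ac)` by the Lorentzian
condition and `β ≤ √(pq)`; so the right side is at least `2 a c √(pq) ≥ a c β`.
-/

theorem sq_le_mul_of_forall_quadratic_nonpos {α β γ : ℝ}
    (h : ∀ u v : ℝ, α * u ^ 2 + 2 * β * u * v + γ * v ^ 2 ≤ 0) : β ^ 2 ≤ α * γ := by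
  have hdisc : discrim (-α) (-2 * β) (-γ) ≤ 0 :=
    discrim_le_zero fun u => by linarith [h u 1]
  rw [discrim] at hdisc
  linarith

theorem mul_add_mul_le_of_sq_le_sub_mul_sub {μ ν ξ a c β : ℝ}
    (ha : 0 ≤ a) (haμ : a ≤ μ) (hc : 0 ≤ c) (hcξ : c ≤ ξ) (hν : 0 ≤ ν)
    (hlor : μ * ξ ≤ ν ^ 2) (hβ : β ^ 2 ≤ (μ - a) * (ξ - c)) :
    a * (ν + β) * c ≤ μ * ν * ξ := by
  have hp : 0 ≤ μ - a := sub_nonneg.2 haμ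
  have hq : 0 ≤ ξ - c := sub_nonneg.2 hcξ
  have hacμξ : a * c ≤ μ * ξ := mul_le_mul haμ hcξ hc (ha.trans haμ)
  have hac : 0 ≤ a * c := mul_nonneg ha hc
  have amgm : 4 * (a * c) * ((μ - a) * (ξ - c)) ≤ (a * (ξ - c) + c * (μ - a)) ^ 2 := by
    nlinarith [sq_nonneg (a * (ξ - c) - c * (μ - a))]
  have hsq : (a * c * β) ^ 2 ≤ (ν * (μ * ξ - a * c)) ^ 2 :=
    calc (a * c * β) ^ 2 = (a * c) ^ 2 * β ^ 2 := by ring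
      _ ≤ (a * c) ^ 2 * ((μ - a) * (ξ - c)) := by gcongr
      _ ≤ a * c * (a * (ξ - c) + c * (μ - a)) ^ 2 := by
        nlinarith [mul_le_mul_of_nonneg_left amgm hac,
          mul_nonneg (sq_nonneg (a * c)) (mul_nonneg hp hq)]
      _ ≤ ν ^ 2 * (a * (ξ - c) + c * (μ - a)) ^ 2 := by gcongr; exact hacμξ.trans hlor
      _ ≤ ν ^ 2 * (a * (ξ - c) + c * (μ - a) + (μ - a) * (ξ - c)) ^ 2 := by
        have hs : 0 ≤ a * (ξ - c) + c * (μ - a) := by positivity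
        exact mul_le_mul_of_nonneg_left
          (pow_le_pow_left₀ hs (le_add_of_nonneg_right (mul_nonneg hp hq)) 2) (sq_nonneg ν)
      _ = (ν * (μ * ξ - a * c)) ^ 2 := by ring
  have key : a * c * β ≤ ν * (μ * ξ - a * c) :=
    (le_abs_self _).trans (abs_le_of_sq_le_sq hsq (mul_nonneg hν (sub_nonneg.2 hacμξ)))
  linear_combination key

theorem lorentzian_plus_negSemidef_general (μ ν ξ α β γ : ℝ)
    (hν : 0 ≤ ν) (hlor : μ * ξ ≤ ν ^ 2)
    (hnsd : ∀ u v : ℝ, α * u ^ 2 + 2 * β * u * v + γ * v ^ 2 ≤ 0)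
    (h1 : 0 ≤ μ + α) (h3 : 0 ≤ ξ + γ) :
    (μ + α) * (ν + β) * (ξ + γ) ≤ μ * ν * ξ := by
  have hα : α ≤ 0 := by simpa using hnsd 1 0
  have hγ : γ ≤ 0 := by simpa using hnsd 0 1
  have hβ : β ^ 2 ≤ (μ - (μ + α)) * (ξ - (ξ + γ)) := by
    convert sq_le_mul_of_forall_quadratic_nonpos hnsd using 1
    ring
  exact mul_add_mul_le_of_sq_le_sub_mul_sub h1 (by linarith) h3 (by linarith) hν hlor hβ

theorem lorentzian_plus_negSemidef (μ ν ξ α β γ : ℝ)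
    (hμ : 0 ≤ μ) (hν : 0 ≤ ν) (hξ : 0 ≤ ξ) (hlor : μ * ξ ≤ ν ^ 2)
    (hnsd : ∀ u v : ℝ, α * u ^ 2 + 2 * β * u * v + γ * v ^ 2 ≤ 0)
    (h1 : 0 ≤ μ + α) (h2 : 0 ≤ ν + β) (h3 : 0 ≤ ξ + γ) :
    (μ + α) * (ν + β) * (ξ + γ) ≤ μ * ν * ξ :=
  lorentzian_plus_negSemidef_general μ ν ξ α β γ hν hlor hnsd h1 h3
end

section
/- Let x₁, x₂, x₃, y₁, y₂, y₃ be positive real numbers, and set X = 2x₁x₂ + 2x₁x₃ + 2x₂x₃ − x₁² − x₂² − x₃², Y = 2y₁y₂ + 2y₁y₃ + 2y₂y₃ − y₁² − y₂² − y₃², and Z = x₁(y₂+y₃−y₁) + x₂(y₁+y₃−y₂) + x₃(y₁+y₂−y₃). If X ≥ 0, Y ≥ 0, and Z ≥ 0, then X·Y·Z < 32·x₁x₂x₃·y₁y₂y₃. -/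
/-!
Put `uᵢ = yⱼ + yₖ - yᵢ` and `vᵢ = xⱼ + xₖ - xᵢ`. Then
`32 x₁x₂x₃ y₁y₂y₃ - XYZ = 2 ∑ xᵢyᵢ (uᵢvᵢ)² - ∏ uᵢvᵢ` identically. Since
`8 x₁x₂x₃ + ∏ vᵢ = (x₁ + x₂ + x₃) X`, the hypothesis `X ≥ 0` gives `|∏ vᵢ| ≤ 8 x₁x₂x₃`, and likewise
`|∏ uᵢ| ≤ 8 y₁y₂y₃`. AM-GM on the three terms `xᵢyᵢ(uᵢvᵢ)²` then shows that their sum is at least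
`(3/4) |∏ uᵢvᵢ|`, and it is positive because two of the `uᵢ` (or of the `vᵢ`) never vanish together.
-/

theorem twenty_seven_mul_mul_le_add_add_pow_three {a b c : ℝ} (ha : 0 ≤ a) (hb : 0 ≤ b)
    (hc : 0 ≤ c) : 27 * (a * b * c) ≤ (a + b + c) ^ 3 := by
  have hs : 0 ≤ a + b + c := by positivity
  nlinarith [mul_nonneg hs (sq_nonneg (a - b)), mul_nonneg hs (sq_nonneg (b - c)),
    mul_nonneg hs (sq_nonneg (c - a)), mul_nonneg ha (sq_nonneg (b - c)),
    mul_nonneg hb (sq_nonneg (c - a)), mul_nonneg hc (sq_nonneg (a - b))]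

theorem abs_mul_mul_add_sub_le {x₁ x₂ x₃ : ℝ} (hx₁ : 0 < x₁) (hx₂ : 0 < x₂) (hx₃ : 0 < x₃)
    (hX : 0 ≤ 2*x₁*x₂ + 2*x₁*x₃ + 2*x₂*x₃ - x₁^2 - x₂^2 - x₃^2) :
    |(x₂ + x₃ - x₁) * (x₁ + x₃ - x₂) * (x₁ + x₂ - x₃)| ≤ 8 * (x₁ * x₂ * x₃) := by
  rw [abs_le]
  constructor
  · have hsum : 8 * (x₁ * x₂ * x₃) + (x₂ + x₃ - x₁) * (x₁ + x₃ - x₂) * (x₁ + x₂ - x₃) =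
        (x₁ + x₂ + x₃) * (2*x₁*x₂ + 2*x₁*x₃ + 2*x₂*x₃ - x₁^2 - x₂^2 - x₃^2) := by ring
    nlinarith [mul_nonneg (by positivity : 0 ≤ x₁ + x₂ + x₃) hX]
  · -- a weak form of Schur's inequality
    nlinarith [mul_pos hx₁ hx₂, mul_pos hx₂ hx₃, mul_pos hx₁ hx₃, mul_pos (mul_pos hx₁ hx₂) hx₃,
      mul_nonneg hx₁.le hX, mul_nonneg hx₂.le hX, mul_nonneg hx₃.le hX,
      mul_nonneg hx₁.le (sq_nonneg (x₂ - x₃)), mul_nonneg hx₂.le (sq_nonneg (x₁ - x₃)),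
      mul_nonneg hx₃.le (sq_nonneg (x₁ - x₂))]

theorem add_sub_mul_add_sub_ne_zero_or {x₁ x₂ x₃ y₁ y₂ y₃ : ℝ}
    (hx₁ : 0 < x₁) (hx₂ : 0 < x₂) (hx₃ : 0 < x₃) (hy₁ : 0 < y₁) (hy₂ : 0 < y₂) (hy₃ : 0 < y₃) :
    (x₂ + x₃ - x₁) * (y₂ + y₃ - y₁) ≠ 0 ∨ (x₁ + x₃ - x₂) * (y₁ + y₃ - y₂) ≠ 0 ∨
      (x₁ + x₂ - x₃) * (y₁ + y₂ - y₃) ≠ 0 := by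
  by_contra! h
  obtain ⟨h₁, h₂, h₃⟩ := h
  rcases mul_eq_zero.1 h₁ with h₁ | h₁ <;> rcases mul_eq_zero.1 h₂ with h₂ | h₂ <;>
    rcases mul_eq_zero.1 h₃ with h₃ | h₃ <;> linarith

theorem mul_mul_lt_two_mul_add_add {a₁ a₂ a₃ p₁ p₂ p₃ : ℝ}
    (ha₁ : 0 < a₁) (ha₂ : 0 < a₂) (ha₃ : 0 < a₃) (hp : p₁ ≠ 0 ∨ p₂ ≠ 0 ∨ p₃ ≠ 0)
    (hbound : |p₁ * p₂ * p₃| ≤ 64 * (a₁ * a₂ * a₃)) :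
    p₁ * p₂ * p₃ < 2 * (a₁ * p₁ ^ 2 + a₂ * p₂ ^ 2 + a₃ * p₃ ^ 2) := by
  set T := a₁ * p₁ ^ 2 + a₂ * p₂ ^ 2 + a₃ * p₃ ^ 2
  rcases le_or_gt (p₁ * p₂ * p₃) 0 with hnonpos | hpos
  · have hT : 0 < T := by rcases hp with hp | hp | hp <;> positivity
    linarith
  have hamgm : 27 * ((a₁ * a₂ * a₃) * (p₁ * p₂ * p₃) ^ 2) ≤ T ^ 3 := by
    convert twenty_seven_mul_mul_le_add_add_pow_three (by positivity : 0 ≤ a₁ * p₁ ^ 2)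
      (by positivity : 0 ≤ a₂ * p₂ ^ 2) (by positivity : 0 ≤ a₃ * p₃ ^ 2) using 2
    ring
  have hcube : (p₁ * p₂ * p₃) ^ 3 ≤ 64 * (a₁ * a₂ * a₃) * (p₁ * p₂ * p₃) ^ 2 := by
    rw [pow_succ' _ 2]
    exact mul_le_mul_of_nonneg_right ((abs_of_pos hpos) ▸ hbound) (by positivity)
  refine lt_of_pow_lt_pow_left₀ 3 (by positivity) ?_
  nlinarith [pow_pos hpos 3]

theorem mul_mul_sub_heron_mul_heron_mul_mixed (x₁ x₂ x₃ y₁ y₂ y₃ : ℝ) :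
    32 * (x₁*x₂*x₃) * (y₁*y₂*y₃) -
      (2*x₁*x₂ + 2*x₁*x₃ + 2*x₂*x₃ - x₁^2 - x₂^2 - x₃^2) *
        (2*y₁*y₂ + 2*y₁*y₃ + 2*y₂*y₃ - y₁^2 - y₂^2 - y₃^2) *
        (x₁*(y₂ + y₃ - y₁) + x₂*(y₁ + y₃ - y₂) + x₃*(y₁ + y₂ - y₃)) =
      2 * (x₁ * y₁ * ((x₂ + x₃ - x₁) * (y₂ + y₃ - y₁)) ^ 2 +
        x₂ * y₂ * ((x₁ + x₃ - x₂) * (y₁ + y₃ - y₂)) ^ 2 +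
        x₃ * y₃ * ((x₁ + x₂ - x₃) * (y₁ + y₂ - y₃)) ^ 2) -
      (x₂ + x₃ - x₁) * (y₂ + y₃ - y₁) * ((x₁ + x₃ - x₂) * (y₁ + y₃ - y₂)) *
        ((x₁ + x₂ - x₃) * (y₁ + y₂ - y₃)) := by
  ring

theorem hard_lemma_general (x₁ x₂ x₃ y₁ y₂ y₃ : ℝ)
    (hx₁ : 0 < x₁) (hx₂ : 0 < x₂) (hx₃ : 0 < x₃)
    (hy₁ : 0 < y₁) (hy₂ : 0 < y₂) (hy₃ : 0 < y₃)
    (hX : 0 ≤ 2*x₁*x₂ + 2*x₁*x₃ + 2*x₂*x₃ - x₁^2 - x₂^2 - x₃^2)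
    (hY : 0 ≤ 2*y₁*y₂ + 2*y₁*y₃ + 2*y₂*y₃ - y₁^2 - y₂^2 - y₃^2) :
    (2*x₁*x₂ + 2*x₁*x₃ + 2*x₂*x₃ - x₁^2 - x₂^2 - x₃^2) *
      (2*y₁*y₂ + 2*y₁*y₃ + 2*y₂*y₃ - y₁^2 - y₂^2 - y₃^2) *
      (x₁*(y₂ + y₃ - y₁) + x₂*(y₁ + y₃ - y₂) + x₃*(y₁ + y₂ - y₃)) <
      32 * (x₁*x₂*x₃) * (y₁*y₂*y₃) := by
  have hbound : |(x₂ + x₃ - x₁) * (y₂ + y₃ - y₁) * ((x₁ + x₃ - x₂) * (y₁ + y₃ - y₂)) *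
      ((x₁ + x₂ - x₃) * (y₁ + y₂ - y₃))| ≤ 64 * (x₁ * y₁ * (x₂ * y₂) * (x₃ * y₃)) :=
    calc _ = |(x₂ + x₃ - x₁) * (x₁ + x₃ - x₂) * (x₁ + x₂ - x₃)| *
          |(y₂ + y₃ - y₁) * (y₁ + y₃ - y₂) * (y₁ + y₂ - y₃)| := by
          rw [← abs_mul]; congr 1; ring
      _ ≤ 8 * (x₁ * x₂ * x₃) * (8 * (y₁ * y₂ * y₃)) :=
          mul_le_mul (abs_mul_mul_add_sub_le hx₁ hx₂ hx₃ hX)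
            (abs_mul_mul_add_sub_le hy₁ hy₂ hy₃ hY) (abs_nonneg _) (by positivity)
      _ = _ := by ring
  have key := mul_mul_lt_two_mul_add_add (mul_pos hx₁ hy₁) (mul_pos hx₂ hy₂) (mul_pos hx₃ hy₃)
    (add_sub_mul_add_sub_ne_zero_or hx₁ hx₂ hx₃ hy₁ hy₂ hy₃) hbound
  linarith [mul_mul_sub_heron_mul_heron_mul_mixed x₁ x₂ x₃ y₁ y₂ y₃]

theorem hard_lemma (x₁ x₂ x₃ y₁ y₂ y₃ : ℝ)
    (hx₁ : 0 < x₁) (hx₂ : 0 < x₂) (hx₃ : 0 < x₃)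
    (hy₁ : 0 < y₁) (hy₂ : 0 < y₂) (hy₃ : 0 < y₃)
    (hX : 0 ≤ 2*x₁*x₂ + 2*x₁*x₃ + 2*x₂*x₃ - x₁^2 - x₂^2 - x₃^2)
    (hY : 0 ≤ 2*y₁*y₂ + 2*y₁*y₃ + 2*y₂*y₃ - y₁^2 - y₂^2 - y₃^2)
    (hZ : 0 ≤ x₁*(y₂ + y₃ - y₁) + x₂*(y₁ + y₃ - y₂) + x₃*(y₁ + y₂ - y₃)) :
    (2*x₁*x₂ + 2*x₁*x₃ + 2*x₂*x₃ - x₁^2 - x₂^2 - x₃^2) *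
      (2*y₁*y₂ + 2*y₁*y₃ + 2*y₂*y₃ - y₁^2 - y₂^2 - y₃^2) *
      (x₁*(y₂ + y₃ - y₁) + x₂*(y₁ + y₃ - y₂) + x₃*(y₁ + y₂ - y₃)) <
      32 * (x₁*x₂*x₃) * (y₁*y₂*y₃) :=
  hard_lemma_general x₁ x₂ x₃ y₁ y₂ y₃ hx₁ hx₂ hx₃ hy₁ hy₂ hy₃ hX hY
end
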